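/- arXiv:math/0505291 — 3 statements merged into one kernel-verified Lean document; each statement's English description precedes it below -/
import Mathlib

section
/- Let X be a real Banach space that is a K-space and let D ⊆ X be a bounded convex set with nonempty interior. Then there exists a constant A > 0, depending only on D, such that for every ε > 0 and every ε-affine function f : D → ℝ there is an affine function a : D → ℝ with sup_{x ∈ D} |f(x) − a(x)| ≤ A·ε. -/
open Set Filter Topology

/-- linear-as-a-plain-function predicate -/
def IsLinFun {X : Type*} [NormedAddCommGroup X] [NormedSpace ℝ X] (l : X → ℝ) : Prop :=
  (∀ x y, l (x + y) = l x + l y) ∧ ∀ (t : ℝ) (x : X), l (t • x) = t * l x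

section PartB
variable {X : Type*} [NormedAddCommGroup X] [NormedSpace ℝ X]

/-- members of 𝒦 vanish at 0 -/
lemma hom_zero {G : X → ℝ} (h : ∀ (t : ℝ) (x : X), G (t • x) = t * G x) : G 0 = 0 := by
  have := h 0 0
  simpa using this

/-- Uniform K-space constant from the (pointwise) K-space property. -/
theorem uniformK
    (hK : ∀ f : X → ℝ,
      (∀ (t : ℝ) (x : X), f (t • x) = t * f x) →
      (∃ Q : ℝ, 0 ≤ Q ∧ ∀ x y : X, |f (x + y) - f x - f y| ≤ Q * (‖x‖ + ‖y‖)) →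
      ∃ (ℓ : X →ₗ[ℝ] ℝ) (M : ℝ), 0 ≤ M ∧ ∀ x : X, |f x - ℓ x| ≤ M * ‖x‖) :
    ∃ K₀ : ℝ, 0 ≤ K₀ ∧ ∀ (Q : ℝ), 0 < Q → ∀ G : X → ℝ,
      (∀ (t : ℝ) (x : X), G (t • x) = t * G x) →
      (∀ x y, |G (x + y) - G x - G y| ≤ Q * (‖x‖ + ‖y‖)) →
      ∃ l : X → ℝ, IsLinFun l ∧ ∀ x, |G x - l x| ≤ K₀ * Q * ‖x‖ := by
  classical
  set b := Module.Basis.ofVectorSpace ℝ X with hb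
  set 𝒦 : Set (X → ℝ) := {G | (∀ (t : ℝ) (x : X), G (t • x) = t * G x) ∧
      (∀ x y, |G (x + y) - G x - G y| ≤ ‖x‖ + ‖y‖) ∧ ∀ i, G (b i) = 0} with h𝒦
  -- pointwise bound over 𝒦
  have hbound : ∀ x : X, ∃ C : ℝ, 0 ≤ C ∧ ∀ G ∈ 𝒦, |G x| ≤ C := by
    intro x
    have key : ∀ (s : Finset (Module.Basis.ofVectorSpaceIndex ℝ X)) (u : _ → ℝ),
        ∃ C : ℝ, 0 ≤ C ∧ ∀ G ∈ 𝒦, |G (∑ i ∈ s, u i • b i)| ≤ C := by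
      intro s
      induction s using Finset.induction_on with
      | empty =>
        intro u
        refine ⟨0, le_refl 0, fun G hG => ?_⟩
        simp [hom_zero hG.1]
      | insert a s hni ih =>
        intro u
        obtain ⟨C, hC0, hC⟩ := ih u
        refine ⟨C + (‖u a • b a‖ + ‖∑ i ∈ s, u i • b i‖), by positivity, fun G hG => ?_⟩
        rw [Finset.sum_insert hni]
        have h1 : G (u a • b a) = 0 := by
          rw [hG.1 (u a) (b a), hG.2.2 a, mul_zero]
        have h2 := hG.2.1 (u a • b a) (∑ i ∈ s, u i • b i)
        have h3 := hC G hG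
        set p := u a • b a
        set q := ∑ i ∈ s, u i • b i
        calc |G (p + q)| = |(G (p + q) - G p - G q) + G q| := by rw [h1]; ring_nf
          _ ≤ |G (p + q) - G p - G q| + |G q| := abs_add_le _ _
          _ ≤ (‖p‖ + ‖q‖) + C := add_le_add h2 h3
          _ = C + (‖p‖ + ‖q‖) := by ring
    obtain ⟨C, hC0, hC⟩ := key (b.repr x).support (fun i => (b.repr x) i)
    refine ⟨C, hC0, fun G hG => ?_⟩
    have hx : ∑ i ∈ (b.repr x).support, (b.repr x) i • (b i) = x := by
      conv_rhs => rw [← b.linearCombination_repr x]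
      rw [Finsupp.linearCombination_apply, Finsupp.sum]
    rw [← hx]
    exact hC G hG
  choose c hc0 hc using hbound
  -- compactness of 𝒦
  have h𝒦closed : IsClosed 𝒦 := by
    have h1 : IsClosed {G : X → ℝ | ∀ (t : ℝ) (x : X), G (t • x) = t * G x} := by
      simp only [setOf_forall]
      exact isClosed_iInter fun t => isClosed_iInter fun x =>
        isClosed_eq (continuous_apply _) (continuous_const.mul (continuous_apply _))
    have h2 : IsClosed {G : X → ℝ | ∀ x y : X, |G (x + y) - G x - G y| ≤ ‖x‖ + ‖y‖} := by
      simp only [setOf_forall]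
      refine isClosed_iInter fun x => isClosed_iInter fun y => isClosed_le ?_ continuous_const
      exact (((continuous_apply (x + y)).sub (continuous_apply x)).sub (continuous_apply y)).abs
    have h3 : IsClosed {G : X → ℝ | ∀ i, G (b i) = 0} := by
      simp only [setOf_forall]
      exact isClosed_iInter fun i => isClosed_eq (continuous_apply _) continuous_const
    have : 𝒦 = {G : X → ℝ | ∀ (t : ℝ) (x : X), G (t • x) = t * G x} ∩
        ({G : X → ℝ | ∀ x y : X, |G (x + y) - G x - G y| ≤ ‖x‖ + ‖y‖} ∩
         {G : X → ℝ | ∀ i, G (b i) = 0}) := by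
      ext G; simp [h𝒦, and_assoc]
    rw [this]
    exact h1.inter (h2.inter h3)
  have h𝒦cpt : IsCompact 𝒦 := by
    refine IsCompact.of_isClosed_subset (isCompact_univ_pi (fun x => isCompact_Icc
      (a := -(c x)) (b := c x))) h𝒦closed ?_
    intro G hG x _
    have := hc x G hG
    rw [mem_Icc]
    constructor <;> [linarith [neg_abs_le (G x)]; linarith [le_abs_self (G x)]]
  have h0mem : (0 : X → ℝ) ∈ 𝒦 := by
    refine ⟨fun t x => by simp, fun x y => by simp [abs_of_nonpos]; positivity, fun i => rfl⟩
  -- the sets 𝒦ₙ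
  set 𝒦n : ℕ → Set (X → ℝ) := fun n =>
    {G | G ∈ 𝒦 ∧ ∃ l : X → ℝ, IsLinFun l ∧ ∀ x, |G x - l x| ≤ n * ‖x‖} with h𝒦n
  have hcover : ∀ G ∈ 𝒦, ∃ n : ℕ, G ∈ 𝒦n n := by
    intro G hG
    obtain ⟨ℓ, M, hM0, hM⟩ := hK G hG.1 ⟨1, zero_le_one, fun x y => by
      simpa using hG.2.1 x y⟩
    refine ⟨⌈M⌉₊, hG, fun x => ℓ x, ⟨fun x y => map_add ℓ x y, fun t x => by
      show ℓ (t • x) = t * ℓ x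
      rw [map_smul, smul_eq_mul]⟩, fun x => ?_⟩
    exact le_trans (hM x) (by
      have : M ≤ (⌈M⌉₊ : ℝ) := Nat.le_ceil M
      exact mul_le_mul_of_nonneg_right this (norm_nonneg x))
  have hclosed : ∀ n, IsClosed (𝒦n n) := by
    intro n
    set L : Set ((X → ℝ) × (X → ℝ)) := {p | p.1 ∈ 𝒦 ∧ IsLinFun p.2 ∧
      ∀ x, |p.1 x - p.2 x| ≤ n * ‖x‖} with hL
    have hLclosed : IsClosed L := by
      have c1 : IsClosed {p : (X → ℝ) × (X → ℝ) | p.1 ∈ 𝒦} :=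
        h𝒦closed.preimage continuous_fst
      have c2 : IsClosed {p : (X → ℝ) × (X → ℝ) | IsLinFun p.2} := by
        unfold IsLinFun
        simp only [setOf_and, setOf_forall]
        refine IsClosed.inter (isClosed_iInter fun x => isClosed_iInter fun y => ?_)
          (isClosed_iInter fun t => isClosed_iInter fun x => ?_)
        · exact isClosed_eq (by fun_prop) (by fun_prop)
        · exact isClosed_eq (by fun_prop) (by fun_prop)
      have c3 : IsClosed {p : (X → ℝ) × (X → ℝ) | ∀ x, |p.1 x - p.2 x| ≤ n * ‖x‖} := by
        simp only [setOf_forall]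
        refine isClosed_iInter fun x => isClosed_le ?_ continuous_const
        exact Continuous.abs (by fun_prop)
      have : L = {p : (X → ℝ) × (X → ℝ) | p.1 ∈ 𝒦} ∩
          ({p | IsLinFun p.2} ∩ {p | ∀ x, |p.1 x - p.2 x| ≤ n * ‖x‖}) := by
        ext p; simp [hL, and_assoc]
      rw [this]; exact c1.inter (c2.inter c3)
    have hLcpt : IsCompact L := by
      refine IsCompact.of_isClosed_subset
        ((h𝒦cpt.prod (isCompact_univ_pi (fun x => isCompact_Icc
          (a := -(c x + n * ‖x‖)) (b := c x + n * ‖x‖))))) hLclosed ?_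
      rintro ⟨G, l⟩ ⟨hG, hl, hb⟩
      refine ⟨hG, fun x _ => ?_⟩
      have h1 := hc x G hG
      have h2 := hb x
      have : |l x| ≤ c x + n * ‖x‖ := by
        calc |l x| = |G x - (G x - l x)| := by ring_nf
          _ ≤ |G x| + |G x - l x| := abs_sub _ _
          _ ≤ c x + n * ‖x‖ := add_le_add h1 h2
      rw [mem_Icc]
      constructor <;> [linarith [neg_abs_le (l x)]; linarith [le_abs_self (l x)]]
    have himg : 𝒦n n = Prod.fst '' L := by
      ext G
      constructor
      · rintro ⟨hG, l, hl, hbd⟩; exact ⟨(G, l), ⟨hG, hl, hbd⟩, rfl⟩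
      · rintro ⟨⟨G', l⟩, ⟨hG, hl, hbd⟩, rfl⟩; exact ⟨hG, l, hl, hbd⟩
    rw [himg]
    exact (hLcpt.image continuous_fst).isClosed
  -- Baire category on the compact space 𝒦
  have : CompactSpace 𝒦 := isCompact_iff_compactSpace.mp h𝒦cpt
  have hne : Nonempty 𝒦 := ⟨⟨0, h0mem⟩⟩
  obtain ⟨n, hnint⟩ := nonempty_interior_of_iUnion_of_closed
    (f := fun n => (Subtype.val : 𝒦 → X → ℝ) ⁻¹' (𝒦n n))
    (fun n => (hclosed n).preimage continuous_subtype_val)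
    (by
      ext G
      simp only [mem_iUnion, mem_univ, iff_true, mem_preimage]
      exact hcover G.1 G.2)
  obtain ⟨⟨G₀, hG₀K⟩, hG₀int⟩ := hnint
  have hG₀n : G₀ ∈ 𝒦n n := interior_subset (s := Subtype.val ⁻¹' 𝒦n n) hG₀int
  -- extract a basic neighborhood
  rw [mem_interior_iff_mem_nhds, mem_nhds_subtype] at hG₀int
  obtain ⟨U, hU, hUsub⟩ := hG₀int
  rw [nhds_pi, Filter.mem_pi] at hU
  obtain ⟨I, hIfin, t, ht, hIsub⟩ := hU
  -- for each x ∈ I choose a radius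
  have hrad : ∀ x : X, ∃ δ : ℝ, 0 < δ ∧ Metric.ball (G₀ x) δ ⊆ t x := by
    intro x
    obtain ⟨δ, hδ, hsub⟩ := Metric.mem_nhds_iff.mp (ht x)
    exact ⟨δ, hδ, hsub⟩
  choose rad hrad0 hradsub using hrad
  set F : Finset X := hIfin.toFinset with hF
  -- uniform δ
  obtain ⟨δ, hδ0, hδle⟩ : ∃ δ : ℝ, 0 < δ ∧ ∀ x ∈ F, δ ≤ rad x := by
    rcases F.eq_empty_or_nonempty with hFe | hFne
    · exact ⟨1, one_pos, fun x hx => by simp [hFe] at hx⟩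
    · refine ⟨F.inf' hFne rad, ?_, fun x hx => Finset.inf'_le rad hx⟩
      obtain ⟨x₀, hx₀, hval⟩ := Finset.exists_mem_eq_inf' hFne rad
      rw [hval]; exact hrad0 x₀
  -- key nbhd property
  have hnbhd : ∀ G ∈ 𝒦, (∀ x ∈ F, |G x - G₀ x| < δ) → G ∈ 𝒦n n := by
    intro G hG hclose
    have : G ∈ U := by
      apply hIsub
      intro x hx
      apply hradsub x
      rw [Metric.mem_ball, Real.dist_eq]
      exact lt_of_lt_of_le (hclose x (hIfin.mem_toFinset.mpr hx)) (hδle x (hIfin.mem_toFinset.mpr hx))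
    exact hUsub (show (⟨G, hG⟩ : 𝒦) ∈ Subtype.val ⁻¹' U from this)
  -- the dilation trick
  set B : ℝ := 1 + ∑ x ∈ F, c x with hB
  have hB1 : 1 ≤ B := by
    have : (0:ℝ) ≤ ∑ x ∈ F, c x := Finset.sum_nonneg fun x _ => hc0 x
    simp [hB]; linarith
  have hBpos : 0 < B := lt_of_lt_of_le one_pos hB1
  set s : ℝ := min 1 (δ / (2 * B)) with hs
  have hs0 : 0 < s := lt_min one_pos (by positivity)
  have hs1 : s ≤ 1 := min_le_left _ _
  have hcB : ∀ x ∈ F, c x < B := by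
    intro x hx
    have : c x ≤ ∑ y ∈ F, c y := Finset.single_le_sum (fun y _ => hc0 y) hx
    simp [hB]; linarith
  -- every G in 𝒦 admits a linear approximation with constant n*(1+2/s)
  have hmain : ∀ G ∈ 𝒦, ∃ l : X → ℝ, IsLinFun l ∧ ∀ x, |G x - l x| ≤ (n * (1 + 2 / s)) * ‖x‖ := by
    intro G hG
    set G' : X → ℝ := fun x => G₀ x + s * (G x - G₀ x) with hG'
    have hG'K : G' ∈ 𝒦 := by
      refine ⟨fun τ x => ?_, fun x y => ?_, fun i => ?_⟩
      · simp only [hG', hG.1 τ x, hG₀K.1 τ x]; ring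
      · have h1 := hG₀K.2.1 x y
        have h2 := hG.2.1 x y
        have : G' (x + y) - G' x - G' y =
            (1 - s) * (G₀ (x + y) - G₀ x - G₀ y) + s * (G (x + y) - G x - G y) := by
          simp only [hG']; ring
        rw [this]
        calc |(1 - s) * (G₀ (x + y) - G₀ x - G₀ y) + s * (G (x + y) - G x - G y)| ≤
            |(1 - s) * (G₀ (x + y) - G₀ x - G₀ y)| + |s * (G (x + y) - G x - G y)| := abs_add_le _ _
          _ = (1 - s) * |G₀ (x + y) - G₀ x - G₀ y| + s * |G (x + y) - G x - G y| := by
              rw [abs_mul, abs_mul, abs_of_nonneg (by linarith), abs_of_nonneg (le_of_lt hs0)]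
          _ ≤ (1 - s) * (‖x‖ + ‖y‖) + s * (‖x‖ + ‖y‖) := by
              refine add_le_add (mul_le_mul_of_nonneg_left h1 (by linarith))
                (mul_le_mul_of_nonneg_left h2 (le_of_lt hs0))
          _ = ‖x‖ + ‖y‖ := by ring
      · simp only [hG', hG.2.2 i, hG₀K.2.2 i]; ring
    have hG'n : G' ∈ 𝒦n n := by
      apply hnbhd G' hG'K
      intro x hx
      have h1 : |G x| ≤ c x := hc x G hG
      have h2 : |G₀ x| ≤ c x := hc x G₀ hG₀K
      have : |G' x - G₀ x| = s * |G x - G₀ x| := by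
        simp only [hG']; rw [show G₀ x + s * (G x - G₀ x) - G₀ x = s * (G x - G₀ x) by ring,
          abs_mul, abs_of_nonneg (le_of_lt hs0)]
      rw [this]
      have h3 : |G x - G₀ x| ≤ 2 * c x := by
        calc |G x - G₀ x| ≤ |G x| + |G₀ x| := abs_sub _ _
          _ ≤ 2 * c x := by linarith
      have h4 : s ≤ δ / (2 * B) := min_le_right _ _
      calc s * |G x - G₀ x| ≤ (δ / (2 * B)) * (2 * c x) := by
            apply mul_le_mul h4 h3 (abs_nonneg _) (by positivity)
        _ < δ := by
            have hx' := hcB x hx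
            rw [div_mul_eq_mul_div, div_lt_iff₀ (by positivity : (0:ℝ) < 2 * B)]
            nlinarith [hc0 x]
    obtain ⟨_, l', hl', hl'bd⟩ := hG'n
    obtain ⟨_, l₀, hl₀, hl₀bd⟩ := hG₀n
    refine ⟨fun x => l₀ x + (l' x - l₀ x) / s, ⟨fun x y => ?_, fun τ x => ?_⟩, fun x => ?_⟩
    · dsimp only; rw [hl'.1, hl₀.1]; ring
    · dsimp only; rw [hl'.2, hl₀.2]; ring
    · dsimp only
      have h0 := hl₀bd x
      have h1 := hl'bd x
      have hsne : s ≠ 0 := ne_of_gt hs0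
      have e2 : G x - (l₀ x + (l' x - l₀ x) / s) =
          (G₀ x - l₀ x) + ((G' x - l' x) - (G₀ x - l₀ x)) / s := by
        simp only [hG']
        field_simp
        ring
      rw [e2]
      have h2 : |((G' x - l' x) - (G₀ x - l₀ x)) / s| ≤ (2 * ((n : ℝ) * ‖x‖)) / s := by
        rw [abs_div, abs_of_pos hs0]
        apply div_le_div_of_nonneg_right ?_ hs0.le
        calc |(G' x - l' x) - (G₀ x - l₀ x)| ≤ |G' x - l' x| + |G₀ x - l₀ x| := abs_sub _ _
          _ ≤ 2 * ((n : ℝ) * ‖x‖) := by linarith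
      have e3 : ((n : ℝ) * (1 + 2 / s)) * ‖x‖ = (n : ℝ) * ‖x‖ + (2 * ((n : ℝ) * ‖x‖)) / s := by
        field_simp
      calc |(G₀ x - l₀ x) + ((G' x - l' x) - (G₀ x - l₀ x)) / s| ≤
          |G₀ x - l₀ x| + |((G' x - l' x) - (G₀ x - l₀ x)) / s| := abs_add_le _ _
        _ ≤ (n : ℝ) * ‖x‖ + (2 * ((n : ℝ) * ‖x‖)) / s := add_le_add h0 h2
        _ = ((n : ℝ) * (1 + 2 / s)) * ‖x‖ := e3.symm
  -- conclusion
  have hK₀0 : (0 : ℝ) ≤ (n : ℝ) * (1 + 2 / s) := by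
    have h1 : (0:ℝ) ≤ 2 / s := div_nonneg (by norm_num) hs0.le
    have h2 : (0:ℝ) ≤ (n : ℝ) := Nat.cast_nonneg n
    nlinarith
  refine ⟨(n : ℝ) * (1 + 2 / s), hK₀0, fun Q hQ G hGhom hGqa => ?_⟩
  set H : X → ℝ := fun x => G x / Q with hH
  have hHhom : ∀ (t : ℝ) (x : X), H (t • x) = t * H x := fun t x => by
    simp only [hH, hGhom t x]; ring
  set lH : X →ₗ[ℝ] ℝ := b.constr ℝ (fun i => H (b i)) with hlH
  set H' : X → ℝ := fun x => H x - lH x with hH'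
  have hH'K : H' ∈ 𝒦 := by
    refine ⟨fun t x => ?_, fun x y => ?_, fun i => ?_⟩
    · simp only [hH']
      rw [hHhom t x, map_smul, smul_eq_mul]
      ring
    · simp only [hH']
      have e : (H (x + y) - lH (x + y)) - (H x - lH x) - (H y - lH y)
          = H (x + y) - H x - H y := by
        rw [map_add]; ring
      rw [e]
      have e2 : H (x + y) - H x - H y = (G (x + y) - G x - G y) / Q := by
        simp only [hH]; ring
      rw [e2, abs_div, abs_of_pos hQ, div_le_iff₀ hQ]
      calc |G (x + y) - G x - G y| ≤ Q * (‖x‖ + ‖y‖) := hGqa x y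
        _ = (‖x‖ + ‖y‖) * Q := by ring
    · simp only [hH', hlH]
      rw [Module.Basis.constr_basis]
      exact sub_self _
  obtain ⟨l'', hl'', hbd⟩ := hmain H' hH'K
  refine ⟨fun x => Q * (l'' x + lH x), ⟨fun x y => ?_, fun t x => ?_⟩, fun x => ?_⟩
  · dsimp only; rw [hl''.1, map_add]; ring
  · dsimp only; rw [hl''.2, map_smul, smul_eq_mul]; ring
  · have e : G x - Q * (l'' x + lH x) = Q * (H' x - l'' x) := by
      simp only [hH', hH]
      field_simp
      ring
    rw [e, abs_mul, abs_of_pos hQ]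
    calc Q * |H' x - l'' x| ≤ Q * (((n : ℝ) * (1 + 2 / s)) * ‖x‖) :=
        mul_le_mul_of_nonneg_left (hbd x) hQ.le
      _ = ((n : ℝ) * (1 + 2 / s)) * Q * ‖x‖ := by ring

end PartB

set_option maxHeartbeats 2000000

/-- If `X` is a `K`-space and `D ⊆ X` is a bounded convex set with nonempty interior,
then there is a constant `A > 0` (depending only on `D`) such that every `ε`-affine
function on `D` is within uniform distance `A·ε` of a true affine function on `D`. -/
theorem stmt_9 {X : Type*} [NormedAddCommGroup X] [NormedSpace ℝ X] [CompleteSpace X]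
    (hK : ∀ f : X → ℝ,
      (∀ (t : ℝ) (x : X), f (t • x) = t * f x) →
      (∃ Q : ℝ, 0 ≤ Q ∧ ∀ x y : X, |f (x + y) - f x - f y| ≤ Q * (‖x‖ + ‖y‖)) →
      ∃ (ℓ : X →ₗ[ℝ] ℝ) (M : ℝ), 0 ≤ M ∧ ∀ x : X, |f x - ℓ x| ≤ M * ‖x‖)
    (D : Set X) (hDconv : Convex ℝ D) (hDbdd : Bornology.IsBounded D)
    (hDint : (interior D).Nonempty) :
    ∃ A : ℝ, 0 < A ∧ ∀ ε : ℝ, 0 < ε → ∀ f : X → ℝ,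
      (∀ x ∈ D, ∀ y ∈ D, ∀ t : ℝ, 0 ≤ t → t ≤ 1 →
        |f (t • x + (1 - t) • y) - t * f x - (1 - t) * f y| ≤ ε) →
      ∃ a : X → ℝ,
        (∀ x ∈ D, ∀ y ∈ D, ∀ t : ℝ, 0 ≤ t → t ≤ 1 →
          a (t • x + (1 - t) • y) = t * a x + (1 - t) * a y) ∧
        ∀ x ∈ D, |f x - a x| ≤ A * ε := by
  classical
  obtain ⟨K₀, hK₀0, hKuniv⟩ := uniformK hK
  obtain ⟨x₀, hx₀⟩ := hDint
  have hx₀D : x₀ ∈ D := interior_subset hx₀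
  obtain ⟨r, hr0, hball⟩ := Metric.isOpen_iff.mp isOpen_interior x₀ hx₀
  obtain ⟨R', hR'⟩ := hDbdd.subset_closedBall x₀
  set ρ : ℝ := r / 2 with hρ
  have hρ0 : 0 < ρ := by positivity
  set R : ℝ := max R' ρ with hR
  have hρR : ρ ≤ R := le_max_right _ _
  have hR0 : 0 < R := lt_of_lt_of_le hρ0 hρR
  have hDR : ∀ x ∈ D, ‖x - x₀‖ ≤ R := by
    intro x hx
    have := hR' hx
    rw [Metric.mem_closedBall, dist_eq_norm] at this
    exact le_trans this (le_max_left _ _)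
  have hDball : ∀ v : X, ‖v‖ ≤ ρ → x₀ + v ∈ D := by
    intro v hv
    apply interior_subset
    apply hball
    rw [Metric.mem_ball, dist_eq_norm, add_sub_cancel_left]
    calc ‖v‖ ≤ ρ := hv
      _ < r := by rw [hρ]; linarith
  refine ⟨(3 + 20 * K₀) * (R / ρ), by positivity, fun ε hε f hf => ?_⟩
  set h : X → ℝ := fun v => f (x₀ + v) - f x₀ with hh
  have h0 : h 0 = 0 := by simp [hh]
  -- transported ε-affinity
  have haff : ∀ u : X, x₀ + u ∈ D → ∀ v : X, x₀ + v ∈ D → ∀ t : ℝ, 0 ≤ t → t ≤ 1 →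
      |h (t • u + (1 - t) • v) - t * h u - (1 - t) * h v| ≤ ε := by
    intro u hu v hv t ht0 ht1
    have hpt : t • (x₀ + u) + (1 - t) • (x₀ + v) = x₀ + (t • u + (1 - t) • v) := by
      module
    have := hf (x₀ + u) hu (x₀ + v) hv t ht0 ht1
    rw [hpt] at this
    have e : f (x₀ + (t • u + (1 - t) • v)) - t * f (x₀ + u) - (1 - t) * f (x₀ + v) =
        h (t • u + (1 - t) • v) - t * h u - (1 - t) * h v := by
      simp only [hh]; ring
    rwa [e] at this
  -- (1) near-homogeneity along segments to 0
  have lemH : ∀ v : X, x₀ + v ∈ D → ∀ t : ℝ, 0 ≤ t → t ≤ 1 → |h (t • v) - t * h v| ≤ ε := by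
    intro v hv t ht0 ht1
    have := haff v hv 0 (by simpa using hx₀D) t ht0 ht1
    rw [h0] at this
    simpa using this
  -- (2) near-oddness
  have lemOdd : ∀ v : X, x₀ + v ∈ D → x₀ + (-v) ∈ D → |h v + h (-v)| ≤ 2 * ε := by
    intro v hv hv'
    have := haff v hv (-v) hv' (1/2) (by norm_num) (by norm_num)
    have e : ((1:ℝ)/2) • v + ((1:ℝ) - 1/2) • (-v) = 0 := by module
    rw [e, h0] at this
    have e2 : |0 - 1/2 * h v - (1 - 1/2) * h (-v)| = |h v + h (-v)| / 2 := by
      rw [show (0:ℝ) - 1/2 * h v - (1 - 1/2) * h (-v) = -((h v + h (-v)) / 2) by ring,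
        abs_neg, abs_div]
      norm_num
    rw [e2] at this
    linarith
  -- (3) near-additivity
  have lemAdd : ∀ u : X, x₀ + u ∈ D → ∀ v : X, x₀ + v ∈ D → x₀ + (u + v) ∈ D →
      |h (u + v) - h u - h v| ≤ 4 * ε := by
    intro u hu v hv huv
    have a1 := haff u hu v hv (1/2) (by norm_num) (by norm_num)
    have a2 := lemH (u + v) huv (1/2) (by norm_num) (by norm_num)
    have e : ((1:ℝ)/2) • u + ((1:ℝ) - 1/2) • v = ((1:ℝ)/2) • (u + v) := by module
    rw [e] at a1
    set w := h (((1:ℝ)/2) • (u + v))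
    have key : h (u + v) - h u - h v =
        2 * ((w - 1/2 * h u - (1 - 1/2) * h v) - (w - 1/2 * h (u + v))) := by ring
    rw [key]
    rw [abs_mul, abs_of_nonneg (by norm_num : (0:ℝ) ≤ 2)]
    have := abs_sub (w - 1/2 * h u - (1 - 1/2) * h v) (w - 1/2 * h (u + v))
    linarith
  -- homogeneous extension
  set g₀ : X → ℝ := fun v => (‖v‖ / ρ) * h ((ρ / ‖v‖) • v) with hg₀
  set g : X → ℝ := fun v => (g₀ v - g₀ (-v)) / 2 with hg
  have g₀zero : g₀ 0 = 0 := by simp [hg₀]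
  have gzero : g 0 = 0 := by simp [hg, g₀zero]
  have g₀homP : ∀ (t : ℝ), 0 < t → ∀ v : X, g₀ (t • v) = t * g₀ v := by
    intro t ht v
    rcases eq_or_ne v 0 with rfl | hv
    · simp [g₀zero]
    · have hnv : (0:ℝ) < ‖v‖ := norm_pos_iff.mpr hv
      have hnorm : ‖t • v‖ = t * ‖v‖ := by
        rw [norm_smul, Real.norm_eq_abs, abs_of_pos ht]
      have hsm : (ρ / ‖t • v‖) • (t • v) = (ρ / ‖v‖) • v := by
        have ht' : t ≠ 0 := ne_of_gt ht
        have hnv' : ‖v‖ ≠ 0 := ne_of_gt hnv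
        rw [hnorm, smul_smul]
        congr 1
        field_simp
      simp only [hg₀]
      rw [hsm, hnorm]
      ring
  have gneg : ∀ v : X, g (-v) = - g v := by
    intro v
    simp only [hg, neg_neg]
    ring
  have ghom : ∀ (t : ℝ) (v : X), g (t • v) = t * g v := by
    intro t v
    rcases lt_trichotomy t 0 with ht | ht | ht
    · have : t • v = -((-t) • v) := by module
      rw [this, gneg]
      have := g₀homP (-t) (by linarith)
      simp only [hg]
      rw [this v, show -(((-t) • v)) = (-t) • (-v) by module, this (-v)]
      ring
    · subst ht; rw [zero_smul, gzero, zero_mul]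
    · simp only [hg]
      rw [show -(t • v) = t • (-v) by module, g₀homP t ht v, g₀homP t ht (-v)]
      ring
  -- comparison on the small ball
  have gcomp : ∀ v : X, ‖v‖ ≤ ρ → |h v - g₀ v| ≤ ε := by
    intro v hv
    rcases eq_or_ne v 0 with rfl | hv0
    · rw [h0, g₀zero]; simpa using hε.le
    · have hnv : (0:ℝ) < ‖v‖ := norm_pos_iff.mpr hv0
      set w : X := (ρ / ‖v‖) • v with hw
      have hwnorm : ‖w‖ = ρ := by
        rw [hw, norm_smul, Real.norm_eq_abs, abs_of_pos (by positivity : (0:ℝ) < ρ / ‖v‖)]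
        field_simp
      have hwD : x₀ + w ∈ D := hDball w (le_of_eq hwnorm)
      have ht0 : (0:ℝ) ≤ ‖v‖ / ρ := by positivity
      have ht1 : ‖v‖ / ρ ≤ 1 := by rw [div_le_one hρ0]; exact hv
      have := lemH w hwD (‖v‖ / ρ) ht0 ht1
      have hsv : (‖v‖ / ρ) • w = v := by
        rw [hw, smul_smul]
        have : ‖v‖ / ρ * (ρ / ‖v‖) = 1 := by field_simp
        rw [this, one_smul]
      rw [hsv] at this
      simpa only [hg₀] using this
  have gcomp2 : ∀ v : X, ‖v‖ ≤ ρ → |h v - g v| ≤ 2 * ε := by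
    intro v hv
    have hvD : x₀ + v ∈ D := hDball v hv
    have hvD' : x₀ + (-v) ∈ D := hDball (-v) (by simpa using hv)
    have c1 := gcomp v hv
    have c2 := gcomp (-v) (by simpa using hv)
    have c3 := lemOdd v hvD hvD'
    have key : h v - g v = (h v - g₀ v) / 2 - (h (-v) - g₀ (-v)) / 2 + (h v + h (-v)) / 2 := by
      simp only [hg]; ring
    rw [key]
    calc |(h v - g₀ v) / 2 - (h (-v) - g₀ (-v)) / 2 + (h v + h (-v)) / 2|
        ≤ |(h v - g₀ v) / 2 - (h (-v) - g₀ (-v)) / 2| + |(h v + h (-v)) / 2| := abs_add_le _ _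
      _ ≤ (|(h v - g₀ v) / 2| + |(h (-v) - g₀ (-v)) / 2|) + |(h v + h (-v)) / 2| := by
          have := abs_sub ((h v - g₀ v) / 2) ((h (-v) - g₀ (-v)) / 2)
          linarith
      _ ≤ (ε / 2 + ε / 2) + (2 * ε) / 2 := by
          rw [abs_div, abs_div, abs_div]
          rw [abs_of_nonneg (by norm_num : (0:ℝ) ≤ 2)]
          refine add_le_add (add_le_add ?_ ?_) ?_ <;>
            apply div_le_div_of_nonneg_right ?_ (by norm_num : (0:ℝ) ≤ 2)
          exacts [c1, c2, c3]
      _ = 2 * ε := by ring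
  -- quasi-additivity of g
  have gqa : ∀ u v : X, |g (u + v) - g u - g v| ≤ (20 * ε / ρ) * (‖u‖ + ‖v‖) := by
    intro u v
    rcases eq_or_lt_of_le (by positivity : (0:ℝ) ≤ ‖u‖ + ‖v‖) with hs | hs
    · have hu : u = 0 := norm_eq_zero.mp (by nlinarith [norm_nonneg u, norm_nonneg v])
      have hv : v = 0 := norm_eq_zero.mp (by nlinarith [norm_nonneg u, norm_nonneg v])
      subst hu; subst hv
      simp [gzero]
    · set s : ℝ := ‖u‖ + ‖v‖ with hsdef
      set τ : ℝ := ρ / (2 * s) with hτ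
      have hτ0 : 0 < τ := by positivity
      have hnu : ‖τ • u‖ ≤ ρ := by
        rw [norm_smul, Real.norm_eq_abs, abs_of_pos hτ0, hτ]
        rw [div_mul_eq_mul_div, div_le_iff₀ (by positivity)]
        nlinarith [norm_nonneg u, norm_nonneg v]
      have hnv : ‖τ • v‖ ≤ ρ := by
        rw [norm_smul, Real.norm_eq_abs, abs_of_pos hτ0, hτ]
        rw [div_mul_eq_mul_div, div_le_iff₀ (by positivity)]
        nlinarith [norm_nonneg u, norm_nonneg v]
      have hnuv : ‖τ • u + τ • v‖ ≤ ρ := by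
        calc ‖τ • u + τ • v‖ ≤ ‖τ • u‖ + ‖τ • v‖ := norm_add_le _ _
          _ ≤ τ * ‖u‖ + τ * ‖v‖ := by
              rw [norm_smul, norm_smul, Real.norm_eq_abs, abs_of_pos hτ0]
          _ = τ * s := by rw [hsdef]; ring
          _ = ρ / 2 := by rw [hτ]; field_simp
          _ ≤ ρ := by linarith
      have hadd := lemAdd (τ • u) (hDball _ hnu) (τ • v) (hDball _ hnv)
        (by rw [← smul_add] at hnuv ⊢; exact hDball _ hnuv)
      have c1 := gcomp2 (τ • u) hnu
      have c2 := gcomp2 (τ • v) hnv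
      have c3 := gcomp2 (τ • u + τ • v) hnuv
      have hgsum : g (τ • u + τ • v) = τ * g (u + v) := by
        rw [← smul_add, ghom]
      have hgu : g (τ • u) = τ * g u := ghom τ u
      have hgv : g (τ • v) = τ * g v := ghom τ v
      have step : |τ * g (u + v) - τ * g u - τ * g v| ≤ 10 * ε := by
        rw [← hgsum, ← hgu, ← hgv]
        have key : g (τ • u + τ • v) - g (τ • u) - g (τ • v) =
            (h (τ • u + τ • v) - h (τ • u) - h (τ • v))
            - (h (τ • u + τ • v) - g (τ • u + τ • v))
            + (h (τ • u) - g (τ • u)) + (h (τ • v) - g (τ • v)) := by ring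
        rw [key]
        have t1 := abs_add_le ((h (τ • u + τ • v) - h (τ • u) - h (τ • v))
            - (h (τ • u + τ • v) - g (τ • u + τ • v))
            + (h (τ • u) - g (τ • u))) (h (τ • v) - g (τ • v))
        have t2 := abs_add_le ((h (τ • u + τ • v) - h (τ • u) - h (τ • v))
            - (h (τ • u + τ • v) - g (τ • u + τ • v))) (h (τ • u) - g (τ • u))
        have t3 := abs_sub (h (τ • u + τ • v) - h (τ • u) - h (τ • v))
            (h (τ • u + τ • v) - g (τ • u + τ • v))
        linarith
      have e : |τ * g (u + v) - τ * g u - τ * g v| = τ * |g (u + v) - g u - g v| := by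
        rw [show τ * g (u + v) - τ * g u - τ * g v = τ * (g (u + v) - g u - g v) by ring,
          abs_mul, abs_of_pos hτ0]
      rw [e] at step
      have : |g (u + v) - g u - g v| ≤ 10 * ε / τ := by
        rw [le_div_iff₀ hτ0]
        linarith [step]
      calc |g (u + v) - g u - g v| ≤ 10 * ε / τ := this
        _ = (20 * ε / ρ) * s := by
            rw [hτ]
            field_simp
            ring
  -- apply the uniform K-space property
  obtain ⟨l, hl, hlbd⟩ := hKuniv (20 * ε / ρ) (by positivity) g ghom gqa
  -- far comparison on all of D
  have hfar : ∀ v : X, x₀ + v ∈ D → |h v - g v| ≤ 3 * ε * (R / ρ) := by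
    intro v hv
    have hvR : ‖v‖ ≤ R := by
      have := hDR (x₀ + v) hv
      rwa [add_sub_cancel_left] at this
    set t : ℝ := ρ / R with htdef
    have ht0 : 0 < t := by positivity
    have ht1 : t ≤ 1 := by rw [htdef, div_le_one hR0]; exact hρR
    have htv : ‖t • v‖ ≤ ρ := by
      rw [norm_smul, Real.norm_eq_abs, abs_of_pos ht0, htdef]
      rw [div_mul_eq_mul_div, div_le_iff₀ hR0]
      nlinarith
    have a1 := lemH v hv t ht0.le ht1
    have a2 := gcomp2 (t • v) htv
    have a3 : g (t • v) = t * g v := ghom t v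
    have : |t * h v - t * g v| ≤ 3 * ε := by
      have key : t * h v - t * g v = (t * h v - h (t • v)) + (h (t • v) - g (t • v)) := by
        rw [a3]; ring
      rw [key]
      have t1 := abs_add_le (t * h v - h (t • v)) (h (t • v) - g (t • v))
      have t2 : |t * h v - h (t • v)| = |h (t • v) - t * h v| := abs_sub_comm _ _
      linarith
    have e : |t * h v - t * g v| = t * |h v - g v| := by
      rw [show t * h v - t * g v = t * (h v - g v) by ring, abs_mul, abs_of_pos ht0]
    rw [e] at this
    have : |h v - g v| ≤ 3 * ε / t := by
      rw [le_div_iff₀ ht0]; linarith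
    calc |h v - g v| ≤ 3 * ε / t := this
      _ = 3 * ε * (R / ρ) := by rw [htdef, div_div_eq_mul_div, mul_div_assoc]
  -- the affine approximation
  refine ⟨fun x => l (x - x₀) + f x₀, fun x hx y hy t ht0 ht1 => ?_, fun x hx => ?_⟩
  · have e : t • x + (1 - t) • y - x₀ = t • (x - x₀) + (1 - t) • (y - x₀) := by module
    dsimp only
    rw [e, hl.1, hl.2, hl.2]
    ring
  · have hxx : x₀ + (x - x₀) = x := by abel
    have hv : x₀ + (x - x₀) ∈ D := by rwa [hxx]
    have f1 := hfar (x - x₀) hv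
    have f2 := hlbd (x - x₀)
    have hvR : ‖x - x₀‖ ≤ R := hDR x hx
    have e : f x - (l (x - x₀) + f x₀) = (h (x - x₀) - g (x - x₀)) + (g (x - x₀) - l (x - x₀)) := by
      simp only [hh, hxx]
      ring
    rw [e]
    have t1 := abs_add_le (h (x - x₀) - g (x - x₀)) (g (x - x₀) - l (x - x₀))
    have f2' : |g (x - x₀) - l (x - x₀)| ≤ K₀ * (20 * ε / ρ) * R := by
      refine le_trans f2 ?_
      have : (0:ℝ) ≤ K₀ * (20 * ε / ρ) := by positivity
      exact mul_le_mul_of_nonneg_left hvR this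
    have efinal : (3 + 20 * K₀) * (R / ρ) * ε = 3 * ε * (R / ρ) + K₀ * (20 * ε / ρ) * R := by
      field_simp
    rw [efinal]
    linarith
end

section
/- A real Banach space X is a K-space if and only if for every ε ≥ 0 and every ε-Jensen function f : B_X → ℝ on the closed unit ball B_X there exists a Jensen function a : B_X → ℝ with sup_{x ∈ B_X} |f(x) − a(x)| < ∞. -/
namespace Stmt10

def Additive' (a : ℝ → ℝ) : Prop := ∀ s t : ℝ, a (s + t) = a s + a t

lemma Additive'.zero {a : ℝ → ℝ} (ha : Additive' a) : a 0 = 0 := by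
  have := ha 0 0; simp at this; linarith

lemma Additive'.neg {a : ℝ → ℝ} (ha : Additive' a) (t : ℝ) : a (-t) = - a t := by
  have h := ha t (-t); rw [add_neg_cancel, ha.zero] at h; linarith

lemma Additive'.nat_mul {a : ℝ → ℝ} (ha : Additive' a) : ∀ (n : ℕ) (t : ℝ), a (n * t) = n * a t := by
  intro n
  induction n with
  | zero => intro t; simpa using ha.zero
  | succ k ih =>
    intro t
    have : ((k:ℝ) + 1) * t = k * t + t := by ring
    push_cast
    rw [this, ha, ih]; ring

lemma Additive'.int_mul {a : ℝ → ℝ} (ha : Additive' a) : ∀ (k : ℤ) (t : ℝ), a (k * t) = k * a t := by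
  intro k t
  rcases le_or_gt 0 k with hk | hk
  · lift k to ℕ using hk
    exact_mod_cast ha.nat_mul k t
  · have hk' : 0 ≤ -k := by omega
    set m : ℕ := (-k).toNat with hmdef
    have hm : (m:ℤ) = -k := Int.toNat_of_nonneg hk'
    have hmr : (m:ℝ) = -(k:ℝ) := by exact_mod_cast hm
    have h1 : (k:ℝ) * t = -((m:ℝ) * t) := by rw [hmr]; ring
    rw [h1, ha.neg, ha.nat_mul, hmr]; ring

lemma Additive'.dyadic {a : ℝ → ℝ} (ha : Additive' a) (k : ℤ) (n : ℕ) :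
    a ((k : ℝ) / 2 ^ n) = ((k:ℝ) / 2 ^ n) * a 1 := by
  have h2 : ((2:ℝ) ^ n) ≠ 0 := by positivity
  have hinv : a (1 / 2 ^ n) = a 1 / 2 ^ n := by
    have h := ha.nat_mul (2 ^ n) (1 / 2 ^ n)
    push_cast at h
    rw [mul_one_div, div_self h2] at h
    field_simp at h ⊢
    linarith
  have := ha.int_mul k (1 / 2 ^ n)
  rw [mul_one_div] at this
  rw [this, hinv]; ring

lemma geom_zero {A C : ℝ} (h : ∀ n : ℕ, |A| ≤ C / 2 ^ n) : A = 0 := by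
  by_contra hA
  have habs : 0 < |A| := abs_pos.2 hA
  obtain ⟨n, hn⟩ := pow_unbounded_of_one_lt (C / |A|) (by norm_num : (1:ℝ) < 2)
  have h2 : (0:ℝ) < 2 ^ n := by positivity
  have hlt : C / 2 ^ n < |A| := by
    rw [div_lt_iff₀ h2]
    calc C = (C / |A|) * |A| := by field_simp
    _ < 2 ^ n * |A| := mul_lt_mul_of_pos_right hn habs
    _ = |A| * 2 ^ n := mul_comm _ _
  linarith [h n]

/-- an additive function with a linear ratio bound is linear -/
lemma additive_ratio {a : ℝ → ℝ} (ha : Additive' a) {G : ℝ} (hG : ∀ t, |a t| ≤ G * |t|) :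
    ∀ t, a t = t * a 1 := by
  intro t
  have key : ∀ n : ℕ, |a t - t * a 1| ≤ (G + |a 1|) / 2 ^ n := by
    intro n
    have h2 : (0:ℝ) < 2 ^ n := by positivity
    set k : ℤ := ⌊t * 2 ^ n⌋ with hk
    set q : ℝ := (k : ℝ) / 2 ^ n with hq
    have hk1 : (k:ℝ) ≤ t * 2 ^ n := Int.floor_le _
    have hk2 : t * 2 ^ n < (k:ℝ) + 1 := Int.lt_floor_add_one _
    have hge : 0 ≤ t - q := by
      have : q ≤ t := by rw [hq, div_le_iff₀ h2]; linarith
      linarith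
    have hlt' : t - q ≤ 1 / 2 ^ n := by
      have : t ≤ ((k:ℝ) + 1) / 2 ^ n := by rw [le_div_iff₀ h2]; linarith
      have hq' : q = (k:ℝ) / 2 ^ n := hq
      rw [hq']
      calc t - (k:ℝ)/2^n ≤ ((k:ℝ)+1)/2^n - (k:ℝ)/2^n := by linarith
      _ = 1 / 2^n := by ring
    have hqt : |t - q| ≤ 1 / 2 ^ n := by rw [abs_le]; constructor <;> [linarith [one_div_pos.2 h2]; linarith]
    have haq : a q = q * a 1 := ha.dyadic k n
    have hsplit : a t = a (t - q) + a q := by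
      have := ha (t - q) q; rw [sub_add_cancel] at this; linarith
    have hbd : |a (t - q)| ≤ G * |t - q| := hG _
    have hG0 : 0 ≤ G := by
      have := hG 1; simp at this; exact le_trans (abs_nonneg _) this
    calc |a t - t * a 1| = |a (t - q) + (q - t) * a 1| := by rw [hsplit, haq]; ring_nf
    _ ≤ |a (t - q)| + |(q - t) * a 1| := abs_add_le _ _
    _ ≤ G * |t - q| + |q - t| * |a 1| := by rw [abs_mul]; gcongr <;> simp
    _ = (G + |a 1|) * |t - q| := by rw [abs_sub_comm q t]; ring
    _ ≤ (G + |a 1|) * (1 / 2 ^ n) := by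
        have : (0:ℝ) ≤ G + |a 1| := by positivity
        gcongr
    _ = (G + |a 1|) / 2 ^ n := by ring
  have := geom_zero key
  linarith [abs_nonneg (a t - t * a 1)]

/-- additive, zero at 1, bounded on a window around 0 ⇒ identically zero -/
lemma additive_window {a : ℝ → ℝ} (ha : Additive' a) (h1 : a 1 = 0) {β Bd : ℝ} (hβ : 0 < β)
    (hw : ∀ s, |s| ≤ β → |a s| ≤ Bd) : ∀ t, a t = 0 := by
  have hbd : ∀ t, |a t| ≤ Bd := by
    intro t
    obtain ⟨n, hn⟩ := exists_pow_lt_of_lt_one hβ (by norm_num : (1:ℝ)/2 < 1)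
    have h2 : (0:ℝ) < 2 ^ n := by positivity
    set k : ℤ := ⌊t * 2 ^ n⌋ with hk
    set q : ℝ := (k : ℝ) / 2 ^ n with hq
    have hk1 : (k:ℝ) ≤ t * 2 ^ n := Int.floor_le _
    have hk2 : t * 2 ^ n < (k:ℝ) + 1 := Int.lt_floor_add_one _
    have h12 : ((1:ℝ)/2) ^ n = 1 / 2 ^ n := by rw [div_pow]; norm_num
    have hge : 0 ≤ t - q := by
      have : q ≤ t := by rw [hq, div_le_iff₀ h2]; linarith
      linarith
    have hlt' : t - q ≤ 1 / 2 ^ n := by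
      have h3 : t ≤ ((k:ℝ) + 1) / 2 ^ n := by rw [le_div_iff₀ h2]; linarith
      have hq' : q = (k:ℝ) / 2 ^ n := hq
      rw [hq']
      calc t - (k:ℝ)/2^n ≤ ((k:ℝ)+1)/2^n - (k:ℝ)/2^n := by linarith
      _ = 1 / 2^n := by ring
    have hqt : |t - q| ≤ β := by
      rw [abs_le]
      constructor
      · linarith [one_div_pos.2 h2]
      · linarith [hn, h12.symm.le, h12.le]
    have haq : a q = 0 := by rw [ha.dyadic k n, h1]; ring
    have hsplit : a t = a (t - q) + a q := by
      have := ha (t - q) q; rw [sub_add_cancel] at this; linarith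
    rw [hsplit, haq, add_zero]
    exact hw _ hqt
  intro t
  have key : ∀ n : ℕ, |a t| ≤ Bd / 2 ^ n := by
    intro n
    have h2 : (0:ℝ) < 2 ^ n := by positivity
    have := ha.nat_mul (2 ^ n) t
    push_cast at this
    have h3 : |a t| = |a (2 ^ n * t)| / 2 ^ n := by
      rw [this, abs_mul]
      rw [abs_of_pos h2]
      field_simp
    rw [h3]
    gcongr
    exact hbd _
  exact geom_zero key

/-- 1-D lemma: an odd, 2-homogeneous quasi-additive function on ℝ is near an additive one. -/
lemma oneD {h : ℝ → ℝ} {q : ℝ} (hq : 0 ≤ q)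
    (hodd : ∀ t, h (-t) = - h t)
    (hhom : ∀ t, h (2 * t) = 2 * h t)
    (hdef : ∀ s t, |h (s + t) - h s - h t| ≤ q * (|s| + |t|)) :
    ∃ a : ℝ → ℝ, Additive' a ∧ ∀ t, |h t - a t| ≤ 10 * q * |t| := by
  have h0 : h 0 = 0 := by have := hhom 0; rw [mul_zero] at this; linarith
  have hint : ∀ m : ℤ, |m| ≤ 1 → h m = m * h 1 := by
    intro m hm
    obtain ⟨hm1, hm2⟩ := abs_le.1 hm
    interval_cases m
    · push_cast; rw [hodd 1]; ring
    · push_cast; rw [h0]; ring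
    · push_cast; ring
  set k : ℝ → ℤ := fun t => ⌊t + 1/2⌋ with hkdef
  set r : ℝ → ℝ := fun t => t - k t with hrdef
  have hrb : ∀ t, -(1/2) ≤ r t ∧ r t < 1/2 := by
    intro t
    have h1 : (k t : ℝ) ≤ t + 1/2 := Int.floor_le _
    have h2 : t + 1/2 < k t + 1 := Int.lt_floor_add_one _
    constructor <;> simp only [hrdef] <;> [linarith; linarith]
  have hrabs : ∀ t, |r t| ≤ 1/2 := by
    intro t; rw [abs_le]; exact ⟨(hrb t).1, (hrb t).2.le⟩
  set HH : ℝ → ℝ := fun t => h (r t) + (k t : ℝ) * h 1 with hHHdef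
  have Hdef : ∀ s t, |HH (s + t) - HH s - HH t| ≤ 5/2 * q := by
    intro s t
    set κ : ℤ := k (s + t) - k s - k t with hκdef
    have hcast : ((κ:ℤ):ℝ) = ((k (s+t) : ℝ)) - ((k s : ℝ)) - ((k t : ℝ)) := by
      rw [hκdef]; push_cast; ring
    have hκr : r s + r t = r (s + t) + (κ : ℝ) := by
      rw [hcast]; simp only [hrdef]; ring
    have hκb : |κ| ≤ 1 := by
      have habs : |(κ:ℝ)| < 2 := by
        obtain ⟨c1, c1'⟩ := abs_le.1 (hrabs s)
        obtain ⟨c2, c2'⟩ := abs_le.1 (hrabs t)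
        obtain ⟨c3, c3'⟩ := abs_le.1 (hrabs (s+t))
        rw [abs_lt]
        constructor <;> linarith [hκr]
      have hc : ((|κ| : ℤ) : ℝ) < 2 := by rw [Int.cast_abs]; exact habs
      have : |κ| < (2:ℤ) := by exact_mod_cast hc
      omega
    have e1 : |h (r s + r t) - h (r s) - h (r t)| ≤ q := by
      have hd := hdef (r s) (r t)
      have b1 := hrabs s; have b2 := hrabs t
      have hb : q * (|r s| + |r t|) ≤ q * 1 := by
        apply mul_le_mul_of_nonneg_left _ hq
        linarith
      linarith
    have e2 : |h (r (s+t) + (κ:ℝ)) - h (r (s+t)) - h (κ:ℝ)| ≤ 3/2 * q := by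
      have hd := hdef (r (s+t)) (κ:ℝ)
      have b3 := hrabs (s+t)
      have bκ : |(κ:ℝ)| ≤ 1 := by rw [← Int.cast_abs]; exact_mod_cast hκb
      have hb : q * (|r (s+t)| + |(κ:ℝ)|) ≤ q * (3/2) := by
        apply mul_le_mul_of_nonneg_left _ hq
        linarith
      linarith
    have e3 : h (κ:ℝ) = (κ:ℝ) * h 1 := hint κ hκb
    have key : HH (s + t) - HH s - HH t =
        (h (r s + r t) - h (r s) - h (r t)) - (h (r (s+t) + (κ:ℝ)) - h (r (s+t)) - h (κ:ℝ)) := by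
      simp only [hHHdef]
      rw [hκr, e3, hcast]
      ring
    rw [key]
    calc |_ - _| ≤ |h (r s + r t) - h (r s) - h (r t)| + |h (r (s+t) + (κ:ℝ)) - h (r (s+t)) - h (κ:ℝ)| := abs_sub _ _
    _ ≤ q + 3/2 * q := add_le_add e1 e2
    _ = 5/2 * q := by ring
  -- Hyers sequence
  set u : ℝ → ℕ → ℝ := fun t n => HH (2 ^ n * t) / 2 ^ n with hudef
  have hdist : ∀ t n, dist (u t n) (u t (n+1)) ≤ (5/4 * q) * (1/2) ^ n := by
    intro t n
    have h2 : (0:ℝ) < 2 ^ n := by positivity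
    have hHH2 : |HH (2 * (2^n * t)) - 2 * HH (2^n * t)| ≤ 5/2 * q := by
      have := Hdef (2^n * t) (2^n * t)
      have e : (2:ℝ)^n * t + 2^n * t = 2 * (2^n * t) := by ring
      rw [e] at this
      calc |HH (2 * (2^n*t)) - 2 * HH (2^n*t)| = |HH (2*(2^n*t)) - HH (2^n*t) - HH (2^n*t)| := by ring_nf
      _ ≤ 5/2 * q := this
    rw [Real.dist_eq]
    have e : u t n - u t (n+1) = -(HH (2 * (2^n * t)) - 2 * HH (2^n * t)) / 2^(n+1) := by
      simp only [hudef]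
      have : (2:ℝ)^(n+1) * t = 2 * (2^n * t) := by ring
      rw [this]
      field_simp
      ring
    rw [e, abs_div, abs_neg]
    rw [abs_of_pos (by positivity : (0:ℝ) < 2^(n+1))]
    rw [div_le_iff₀ (by positivity : (0:ℝ) < 2^(n+1))]
    calc |HH (2 * (2^n * t)) - 2 * HH (2^n * t)| ≤ 5/2 * q := hHH2
    _ = (5/4 * q) * (1/2)^n * 2^(n+1) := by
        field_simp
        have h12 : ((1:ℝ)/2)^n * 2^n = 1 := by rw [← mul_pow]; norm_num
        linear_combination (-4*q) * h12
    _ ≤ _ := le_refl _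
  have hcau : ∀ t, CauchySeq (u t) := fun t =>
    cauchySeq_of_le_geometric (1/2) (5/4 * q) (by norm_num) (hdist t)
  choose a haL using fun t => cauchySeq_tendsto_of_complete (hcau t)
  have hHa : ∀ t, |HH t - a t| ≤ 5 * q / 2 := by
    intro t
    have h0' : u t 0 = HH t := by simp [hudef]
    have := dist_le_of_le_geometric_of_tendsto₀ (1/2) (5/4 * q) (by norm_num) (hdist t) (haL t)
    rw [h0', Real.dist_eq] at this
    calc |HH t - a t| ≤ (5/4 * q) / (1 - 1/2) := this
    _ = 5 * q / 2 := by norm_num; ring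
  have haadd : Additive' a := by
    intro s t
    have hb : ∀ n, ‖u (s+t) n - u s n - u t n‖ ≤ (5/2 * q) * (1/2)^n := by
      intro n
      have h2 : (0:ℝ) < 2 ^ n := by positivity
      have e : (2:ℝ)^n * (s + t) = 2^n * s + 2^n * t := by ring
      have := Hdef (2^n * s) (2^n * t)
      rw [Real.norm_eq_abs]
      have e2 : u (s+t) n - u s n - u t n
          = (HH (2^n * s + 2^n * t) - HH (2^n * s) - HH (2^n * t)) / 2^n := by
        simp only [hudef, e]; field_simp
      rw [e2, abs_div, abs_of_pos h2, div_le_iff₀ h2]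
      calc |HH (2^n*s + 2^n*t) - HH (2^n*s) - HH (2^n*t)| ≤ 5/2 * q := this
      _ = (5/2 * q) * ((1/2)^n * 2^n) := by
          rw [← mul_pow]; norm_num
      _ = (5/2*q) * (1/2)^n * 2^n := by ring
    have hz : Filter.Tendsto (fun n => u (s+t) n - u s n - u t n) Filter.atTop (nhds 0) := by
      apply squeeze_zero_norm hb
      have : Filter.Tendsto (fun n:ℕ => ((1:ℝ)/2)^n) Filter.atTop (nhds 0) :=
        tendsto_pow_atTop_nhds_zero_of_lt_one (by norm_num) (by norm_num)
      simpa using this.const_mul (5/2 * q)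
    have hl : Filter.Tendsto (fun n => u (s+t) n - u s n - u t n) Filter.atTop
        (nhds (a (s+t) - a s - a t)) := ((haL (s+t)).sub (haL s)).sub (haL t)
    have := tendsto_nhds_unique hl hz
    linarith
  -- region identity
  have hreg : ∀ s, -(1/2) ≤ s → s < 1/2 → HH s = h s := by
    intro s h1 h2
    have hk0 : k s = 0 := by
      simp only [hkdef]
      rw [Int.floor_eq_zero_iff]
      constructor <;> simp <;> linarith
    simp only [hHHdef, hrdef, hk0]
    push_cast; ring_nf
  -- integer powers
  have h2ne : (2:ℝ) ≠ 0 := by norm_num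
  have hpow : ∀ (n : ℤ) (t : ℝ), h ((2:ℝ)^n * t) = (2:ℝ)^n * h t := by
    intro n
    induction n using Int.induction_on with
    | zero => intro t; simp
    | succ m ih =>
      intro t
      have e : (2:ℝ)^((m:ℤ)+1) * t = 2 * ((2:ℝ)^(m:ℤ) * t) := by
        rw [zpow_add_one₀ h2ne]; ring
      rw [e, hhom, ih, zpow_add_one₀ h2ne]; ring
    | pred m ih =>
      intro t
      have key := hhom ((2:ℝ)^(-(m:ℤ)-1) * t)
      have e : 2 * ((2:ℝ)^(-(m:ℤ)-1) * t) = (2:ℝ)^(-(m:ℤ)) * t := by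
        rw [show (-(m:ℤ)) = (-(m:ℤ)-1)+1 by ring, zpow_add_one₀ h2ne]; ring
      rw [e, ih] at key
      have e2 : (2:ℝ)^(-(m:ℤ)) = 2 * (2:ℝ)^(-(m:ℤ)-1) := by
        rw [show (-(m:ℤ)) = (-(m:ℤ)-1)+1 by ring, zpow_add_one₀ h2ne]; ring
      rw [e2, mul_assoc] at key
      exact (mul_left_cancel₀ (two_ne_zero) key).symm
  have haddhom : ∀ t, a (2 * t) = 2 * a t := by
    intro t
    have := haadd t t
    rw [show t + t = 2 * t by ring] at this
    linarith
  have hapow : ∀ (n : ℤ) (t : ℝ), a ((2:ℝ)^n * t) = (2:ℝ)^n * a t := by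
    intro n
    induction n using Int.induction_on with
    | zero => intro t; simp
    | succ m ih =>
      intro t
      have e : (2:ℝ)^((m:ℤ)+1) * t = 2 * ((2:ℝ)^(m:ℤ) * t) := by
        rw [zpow_add_one₀ h2ne]; ring
      rw [e, haddhom, ih, zpow_add_one₀ h2ne]; ring
    | pred m ih =>
      intro t
      have key := haddhom ((2:ℝ)^(-(m:ℤ)-1) * t)
      have e : 2 * ((2:ℝ)^(-(m:ℤ)-1) * t) = (2:ℝ)^(-(m:ℤ)) * t := by
        rw [show (-(m:ℤ)) = (-(m:ℤ)-1)+1 by ring, zpow_add_one₀ h2ne]; ring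
      rw [e, ih] at key
      have e2 : (2:ℝ)^(-(m:ℤ)) = 2 * (2:ℝ)^(-(m:ℤ)-1) := by
        rw [show (-(m:ℤ)) = (-(m:ℤ)-1)+1 by ring, zpow_add_one₀ h2ne]; ring
      rw [e2, mul_assoc] at key
      exact (mul_left_cancel₀ (two_ne_zero) key).symm
  refine ⟨a, haadd, ?_⟩
  intro t
  rcases eq_or_ne t 0 with rfl | ht
  · rw [h0, haadd.zero]; simp
  · obtain ⟨n, hn1, hn2⟩ := exists_mem_Ico_zpow (abs_pos.2 ht) (by norm_num : (1:ℝ) < 2)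
    set s : ℝ := (2:ℝ)^(-(n+2)) * t with hsdef
    have h2p : (0:ℝ) < (2:ℝ)^(-(n+2)) := by positivity
    have hts : t = (2:ℝ)^(n+2) * s := by
      rw [hsdef, ← mul_assoc, ← zpow_add₀ h2ne]
      rw [show (n+2) + (-(n+2)) = (0:ℤ) by ring]
      simp
    have hsabs : |s| < 1/2 := by
      rw [hsdef, abs_mul, abs_of_pos h2p]
      have e : (2:ℝ)^(-(n+2)) = ((2:ℝ)^(n+1))⁻¹ * (1/2) := by
        rw [show -(n+2) = -(n+1) + (-1) by ring, zpow_add₀ h2ne, zpow_neg]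
        norm_num
      rw [e]
      have hp : (0:ℝ) < (2:ℝ)^(n+1) := by positivity
      calc ((2:ℝ)^(n+1))⁻¹ * (1/2) * |t| < ((2:ℝ)^(n+1))⁻¹ * (1/2) * (2:ℝ)^(n+1) := by
            apply mul_lt_mul_of_pos_left hn2
            positivity
      _ = 1/2 := by field_simp
    have hsge : (2:ℝ)^n * (2:ℝ)^(-(n+2)) ≤ |s| := by
      rw [hsdef, abs_mul, abs_of_pos h2p, mul_comm ((2:ℝ)^(-(n+2))) |t|]
      exact mul_le_mul_of_nonneg_right hn1 h2p.le
    have hs4 : (1:ℝ)/4 ≤ |s| := by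
      have : (2:ℝ)^n * (2:ℝ)^(-(n+2)) = 1/4 := by
        rw [← zpow_add₀ h2ne]
        norm_num
      linarith [hsge, this]
    have hHs : HH s = h s := hreg s (by cases abs_lt.1 hsabs; linarith) (abs_lt.1 hsabs).2
    have hbs : |h s - a s| ≤ 5 * q / 2 := by rw [← hHs]; exact hHa s
    have e1 : h t = (2:ℝ)^(n+2) * h s := by rw [hts, hpow]
    have e2 : a t = (2:ℝ)^(n+2) * a s := by rw [hts, hapow]
    have h2n : (0:ℝ) < (2:ℝ)^(n+2) := by positivity
    have hfin : |h t - a t| = (2:ℝ)^(n+2) * |h s - a s| := by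
      rw [e1, e2, ← mul_sub, abs_mul, abs_of_pos h2n]
    rw [hfin]
    have h2nt : (2:ℝ)^(n+2) ≤ 4 * |t| := by
      have : (2:ℝ)^(n+2) = 4 * (2:ℝ)^n := by
        rw [show n+2 = n + (2:ℤ) by ring, zpow_add₀ h2ne]
        norm_num; ring
      rw [this]
      have := hn1
      linarith
    calc (2:ℝ)^(n+2) * |h s - a s| ≤ (2:ℝ)^(n+2) * (5 * q / 2) := by
          apply mul_le_mul_of_nonneg_left hbs h2n.le
    _ ≤ 4 * |t| * (5 * q / 2) := by
          apply mul_le_mul_of_nonneg_right h2nt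
          positivity
    _ = 10 * q * |t| := by ring

set_option maxHeartbeats 1600000 in
/-- From a quasi-additive, odd, dyadically homogeneous `F`, and the K-space property,
produce an additive map at linear distance from `F`. -/
lemma buildA {X : Type*} [NormedAddCommGroup X] [NormedSpace ℝ X]
    (hK : ∀ g : X → ℝ,
        (∀ (t : ℝ) (x : X), g (t • x) = t * g x) →
        (∃ Q : ℝ, 0 ≤ Q ∧ ∀ x y : X, |g (x + y) - g x - g y| ≤ Q * (‖x‖ + ‖y‖)) →
        ∃ (ℓ : X →ₗ[ℝ] ℝ) (M : ℝ), 0 ≤ M ∧ ∀ x : X, |g x - ℓ x| ≤ M * ‖x‖)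
    {F : X → ℝ} {Q : ℝ} (hQ0 : 0 ≤ Q)
    (hFodd : ∀ x : X, F (-x) = - F x)
    (hF2 : ∀ x : X, F ((2:ℝ) • x) = 2 * F x)
    (hFq : ∀ x y : X, |F (x + y) - F x - F y| ≤ Q * (‖x‖ + ‖y‖)) :
    ∃ A : X → ℝ, (∀ x y : X, A (x + y) = A x + A y) ∧
      ∃ M : ℝ, 0 ≤ M ∧ ∀ x : X, |F x - A x| ≤ M * ‖x‖ := by
  classical
  have hF0 : F 0 = 0 := by
    have := hF2 0
    rw [smul_zero] at this
    linarith
  -- line representatives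
  let lineRel : X → X → Prop := fun u v => ∃ t : ℝ, t ≠ 0 ∧ v = t • u
  have hsymm : ∀ {u v}, lineRel u v → lineRel v u := by
    rintro u v ⟨t, ht, rfl⟩
    exact ⟨t⁻¹, inv_ne_zero ht, by rw [smul_smul, inv_mul_cancel₀ ht, one_smul]⟩
  have htrans : ∀ {u v w}, lineRel u v → lineRel v w → lineRel u w := by
    rintro u v w ⟨t, ht, rfl⟩ ⟨s, hs, rfl⟩
    exact ⟨s * t, mul_ne_zero hs ht, smul_smul s t u⟩
  let rel : Setoid X := ⟨lineRel,
    ⟨fun u => ⟨1, one_ne_zero, (one_smul ℝ u).symm⟩, hsymm, htrans⟩⟩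
  let σ : X → X := fun x => Quotient.out (Quotient.mk rel x)
  have hσrel : ∀ x : X, ∃ t : ℝ, t ≠ 0 ∧ x = t • σ x := fun x => @Quotient.mk_out X rel x
  have hσeq : ∀ (x : X) (t : ℝ), t ≠ 0 → σ (t • x) = σ x := by
    intro x t ht
    show (Quotient.mk rel (t • x)).out = (Quotient.mk rel x).out
    congr 1
    exact Quotient.sound ⟨t⁻¹, inv_ne_zero ht, by rw [smul_smul, inv_mul_cancel₀ ht, one_smul]⟩
  let θ : X → ℝ := fun x => (hσrel x).choose
  have hθ : ∀ x : X, θ x ≠ 0 ∧ x = θ x • σ x :=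
    fun x => ⟨(hσrel x).choose_spec.1, (hσrel x).choose_spec.2⟩
  have hσ0 : σ 0 = 0 := by
    have h := (hθ 0).2
    rcases smul_eq_zero.1 h.symm with h1 | h2
    · exact absurd h1 (hθ 0).1
    · exact h2
  have hσne : ∀ x : X, x ≠ 0 → σ x ≠ 0 := by
    intro x hx h0
    apply hx
    rw [(hθ x).2, h0, smul_zero]
  have hθmul : ∀ (x : X), x ≠ 0 → ∀ t : ℝ, t ≠ 0 → θ (t • x) = t * θ x := by
    intro x hx t ht
    have h1 := (hθ (t • x)).2
    rw [hσeq x t ht] at h1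
    have h2' : t • x = (t * θ x) • σ x := by rw [mul_smul, ← (hθ x).2]
    have hdiff : (θ (t • x) - t * θ x) • σ x = 0 := by
      rw [sub_smul, ← h1, ← h2', sub_self]
    rcases smul_eq_zero.1 hdiff with h3 | h3
    · linarith [sub_eq_zero.1 h3]
    · exact absurd h3 (hσne x hx)
  -- per-line additive approximants
  have hline : ∀ v : X, ∃ a : ℝ → ℝ, Additive' a ∧
      ∀ t : ℝ, |F (t • v) - a t| ≤ 10 * (Q * ‖v‖) * |t| := by
    intro v
    apply oneD (by positivity)
    · intro t
      rw [neg_smul]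
      exact hFodd (t • v)
    · intro t
      rw [show (2*t) • v = (2:ℝ) • (t • v) from by rw [smul_smul]]
      exact hF2 (t • v)
    · intro s t
      have := hFq (s • v) (t • v)
      rw [← add_smul] at this
      rw [norm_smul, norm_smul, Real.norm_eq_abs, Real.norm_eq_abs] at this
      calc |F ((s+t) • v) - F (s • v) - F (t • v)| ≤ Q * (|s| * ‖v‖ + |t| * ‖v‖) := this
      _ = Q * ‖v‖ * (|s| + |t|) := by ring
  choose aL haLadd haLnear using hline
  set AL : X → ℝ := fun x => aL (σ x) (θ x) with hALdef
  have haL0fun : ∀ t : ℝ, aL 0 t = 0 := by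
    intro t
    have h := haLnear 0 t
    rw [smul_zero, hF0] at h
    rw [norm_zero] at h
    have : |aL 0 t| ≤ 0 := by
      have e : |(0:ℝ) - aL 0 t| = |aL 0 t| := by rw [zero_sub, abs_neg]
      rw [e] at h
      calc |aL 0 t| ≤ 10 * (Q * 0) * |t| := h
      _ = 0 := by ring
    have := abs_nonneg (aL 0 t)
    have heq : |aL 0 t| = 0 := le_antisymm ‹|aL 0 t| ≤ 0› this
    exact abs_eq_zero.1 heq
  have hALnear : ∀ x : X, |F x - AL x| ≤ 10 * Q * ‖x‖ := by
    intro x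
    have h := haLnear (σ x) (θ x)
    rw [← (hθ x).2] at h
    have e : ‖x‖ = |θ x| * ‖σ x‖ := by
      conv_lhs => rw [(hθ x).2]
      rw [norm_smul, Real.norm_eq_abs]
    calc |F x - AL x| ≤ 10 * (Q * ‖σ x‖) * |θ x| := h
    _ = 10 * Q * (|θ x| * ‖σ x‖) := by ring
    _ = 10 * Q * ‖x‖ := by rw [← e]
  have hALline : ∀ (x : X) (t : ℝ), AL (t • x) = aL (σ x) (t * θ x) := by
    intro x t
    rcases eq_or_ne x 0 with rfl | hx0
    · rw [smul_zero]
      show aL (σ 0) (θ 0) = aL (σ 0) (t * θ 0)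
      rw [hσ0, haL0fun, haL0fun]
    rcases eq_or_ne t 0 with rfl | ht0
    · rw [zero_smul, zero_mul]
      show aL (σ 0) (θ 0) = aL (σ x) 0
      rw [hσ0, haL0fun, (haLadd (σ x)).zero]
    · show aL (σ (t • x)) (θ (t • x)) = _
      rw [hσeq x t ht0, hθmul x hx0 t ht0]
  have hALsmul_add : ∀ (v : X), Additive' (fun t => AL (t • v)) := by
    intro v s t
    simp only
    rw [hALline v (s+t), hALline v s, hALline v t, add_mul]
    exact haLadd (σ v) _ _
  have hAL0' : ∀ v : X, AL ((0:ℝ) • v) = 0 := by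
    intro v
    rw [hALline, zero_mul, (haLadd (σ v)).zero]
  -- Hamel basis and true additive part
  let bb := Module.Basis.ofVectorSpace ℝ X
  set A' : X → ℝ := fun x => (bb.repr x).sum (fun i t => AL (t • bb i)) with hA'def
  have hA'add : ∀ x y : X, A' (x + y) = A' x + A' y := by
    intro x y
    simp only [hA'def, map_add]
    exact Finsupp.sum_add_index' (fun i => hAL0' (bb i)) (fun i t₁ t₂ => hALsmul_add (bb i) t₁ t₂)
  have hA'0 : A' 0 = 0 := by simp [hA'def]
  -- F on finite sums
  have hFsum : ∀ (s : Finset (Module.Basis.ofVectorSpaceIndex ℝ X)) (w : (Module.Basis.ofVectorSpaceIndex ℝ X) → X),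
      |F (∑ i ∈ s, w i) - ∑ i ∈ s, F (w i)| ≤ Q * s.card * ∑ i ∈ s, ‖w i‖ := by
    intro s
    induction s using Finset.induction_on with
    | empty => intro w; simp [hF0]
    | @insert a s ha ih =>
      intro w
      rw [Finset.sum_insert ha, Finset.sum_insert ha, Finset.sum_insert ha,
        Finset.card_insert_of_notMem ha]
      have h1 := hFq (w a) (∑ i ∈ s, w i)
      have h2 := ih w
      have h3 : ‖∑ i ∈ s, w i‖ ≤ ∑ i ∈ s, ‖w i‖ := norm_sum_le s w
      have hw0 : (0:ℝ) ≤ ∑ i ∈ s, ‖w i‖ := Finset.sum_nonneg fun i _ => norm_nonneg _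
      have hwa : (0:ℝ) ≤ ‖w a‖ := norm_nonneg _
      have hn0 : (0:ℝ) ≤ (s.card : ℝ) := Nat.cast_nonneg _
      have e : F (w a + ∑ i ∈ s, w i) - (F (w a) + ∑ i ∈ s, F (w i))
          = (F (w a + ∑ i ∈ s, w i) - F (w a) - F (∑ i ∈ s, w i))
            + (F (∑ i ∈ s, w i) - ∑ i ∈ s, F (w i)) := by ring
      rw [e]
      refine le_trans (abs_add_le _ _) ?_
      have b1 : |F (w a + ∑ i ∈ s, w i) - F (w a) - F (∑ i ∈ s, w i)|
          ≤ Q * (‖w a‖ + ∑ i ∈ s, ‖w i‖) := by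
        refine le_trans h1 ?_
        have : ‖w a‖ + ‖∑ i ∈ s, w i‖ ≤ ‖w a‖ + ∑ i ∈ s, ‖w i‖ := by linarith
        exact mul_le_mul_of_nonneg_left this hQ0
      have b2 : |F (∑ i ∈ s, w i) - ∑ i ∈ s, F (w i)|
          ≤ Q * s.card * (‖w a‖ + ∑ i ∈ s, ‖w i‖) := by
        refine le_trans h2 ?_
        have hqn : (0:ℝ) ≤ Q * s.card := mul_nonneg hQ0 (Nat.cast_nonneg _)
        nlinarith
      push_cast
      nlinarith
  -- expansion of x over the basis
  have hxsum : ∀ z : X, z = ∑ i ∈ (bb.repr z).support, (bb.repr z) i • bb i := by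
    intro z
    conv_lhs => rw [← bb.linearCombination_repr z]
    rw [Finsupp.linearCombination_apply]
    rfl
  -- the homogeneous part H = AL - A'
  have hHhom : ∀ (x : X) (t : ℝ), AL (t • x) - A' (t • x) = t * (AL x - A' x) := by
    intro x t
    rcases eq_or_ne x 0 with rfl | hx0
    · rw [smul_zero]
      have : AL 0 = 0 := by
        show aL (σ 0) (θ 0) = 0
        rw [hσ0, haL0fun]
      rw [this, hA'0]; ring
    · set S : Finset _ := (bb.repr x).support with hSdef
      set Rx : ℝ := ∑ i ∈ S, |(bb.repr x) i| * ‖bb i‖ with hRxdef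
      have hRx0 : 0 ≤ Rx := Finset.sum_nonneg fun i _ => by positivity
      -- A' on multiples of x
      have hA'mul : ∀ t : ℝ, A' (t • x) = ∑ i ∈ S, AL ((t * (bb.repr x) i) • bb i) := by
        intro t
        have hrepr : bb.repr (t • x) = t • bb.repr x := map_smul _ t x
        simp only [hA'def, hrepr]
        rw [Finsupp.sum_of_support_subset _ Finsupp.support_smul _ (fun i _ => hAL0' (bb i))]
        apply Finset.sum_congr rfl
        intro i _
        have e2 : (t • bb.repr x) i = t * (bb.repr x) i := by
          rw [Finsupp.smul_apply, smul_eq_mul]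
        rw [e2]
      have htx : ∀ t : ℝ, t • x = ∑ i ∈ S, (t * (bb.repr x) i) • bb i := by
        intro t
        conv_lhs => rw [hxsum x]
        rw [Finset.smul_sum]
        apply Finset.sum_congr rfl
        intro i _
        rw [smul_smul]
      have hnorm : ∀ t : ℝ, (∑ i ∈ S, ‖(t * (bb.repr x) i) • bb i‖) = |t| * Rx := by
        intro t
        rw [hRxdef, Finset.mul_sum]
        apply Finset.sum_congr rfl
        intro i _
        rw [norm_smul, Real.norm_eq_abs, abs_mul]
        ring
      have hFA' : ∀ t : ℝ, |F (t • x) - A' (t • x)| ≤ (Q * S.card * Rx + 10 * Q * Rx) * |t| := by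
        intro t
        have h1 : |F (t • x) - ∑ i ∈ S, F ((t * (bb.repr x) i) • bb i)| ≤ Q * S.card * (|t| * Rx) := by
          have := hFsum S (fun i => (t * (bb.repr x) i) • bb i)
          rw [← htx t, hnorm t] at this
          exact this
        have h2 : |∑ i ∈ S, F ((t * (bb.repr x) i) • bb i) - ∑ i ∈ S, AL ((t * (bb.repr x) i) • bb i)|
            ≤ 10 * Q * (|t| * Rx) := by
          rw [← Finset.sum_sub_distrib]
          refine le_trans (Finset.abs_sum_le_sum_abs _ _) ?_
          have : ∀ i ∈ S, |F ((t * (bb.repr x) i) • bb i) - AL ((t * (bb.repr x) i) • bb i)|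
              ≤ 10 * Q * ‖(t * (bb.repr x) i) • bb i‖ := fun i _ => hALnear _
          refine le_trans (Finset.sum_le_sum this) ?_
          rw [← Finset.mul_sum, hnorm t]
        have e : F (t • x) - A' (t • x)
            = (F (t • x) - ∑ i ∈ S, F ((t * (bb.repr x) i) • bb i))
              + (∑ i ∈ S, F ((t * (bb.repr x) i) • bb i) - ∑ i ∈ S, AL ((t * (bb.repr x) i) • bb i)) := by
          rw [hA'mul t]; ring
        rw [e]
        refine le_trans (abs_add_le _ _) ?_
        calc |F (t • x) - ∑ i ∈ S, F ((t * (bb.repr x) i) • bb i)|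
              + |∑ i ∈ S, F ((t * (bb.repr x) i) • bb i) - ∑ i ∈ S, AL ((t * (bb.repr x) i) • bb i)|
            ≤ Q * S.card * (|t| * Rx) + 10 * Q * (|t| * Rx) := add_le_add h1 h2
        _ = (Q * S.card * Rx + 10 * Q * Rx) * |t| := by ring
      -- δ is additive with linear ratio bound, hence linear, hence 0
      set δ : ℝ → ℝ := fun t => AL (t • x) - A' (t • x) - t * (AL x - A' x) with hδdef
      have hδadd : Additive' δ := by
        intro s t
        simp only [hδdef]
        have e1 : AL ((s + t) • x) = AL (s • x) + AL (t • x) := hALsmul_add x s t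
        have e2 : A' ((s + t) • x) = A' (s • x) + A' (t • x) := by
          rw [add_smul]; exact hA'add _ _
        rw [e1, e2]; ring
      have hδ1 : δ 1 = 0 := by simp only [hδdef, one_smul, one_mul]; ring
      have hδbd : ∀ t : ℝ, |δ t| ≤ (10 * Q * ‖x‖ + (Q * S.card * Rx + 10 * Q * Rx) + |AL x - A' x|) * |t| := by
        intro t
        have b1 : |AL (t • x) - F (t • x)| ≤ 10 * Q * ‖x‖ * |t| := by
          have := hALnear (t • x)
          rw [abs_sub_comm] at this
          rw [norm_smul, Real.norm_eq_abs] at this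
          calc |AL (t • x) - F (t • x)| ≤ 10 * Q * (|t| * ‖x‖) := this
          _ = 10 * Q * ‖x‖ * |t| := by ring
        have b2 := hFA' t
        have e : δ t = (AL (t • x) - F (t • x)) + (F (t • x) - A' (t • x)) - t * (AL x - A' x) := by
          simp only [hδdef]; ring
        rw [e]
        have h4 : |(AL (t • x) - F (t • x)) + (F (t • x) - A' (t • x)) - t * (AL x - A' x)|
            ≤ |AL (t • x) - F (t • x)| + |F (t • x) - A' (t • x)| + |t * (AL x - A' x)| := by
          have i1 := abs_add_le (AL (t • x) - F (t • x)) (F (t • x) - A' (t • x))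
          have i2 := abs_sub ((AL (t • x) - F (t • x)) + (F (t • x) - A' (t • x))) (t * (AL x - A' x))
          linarith
        refine le_trans h4 ?_
        rw [abs_mul]
        calc |AL (t • x) - F (t • x)| + |F (t • x) - A' (t • x)| + |t| * |AL x - A' x|
            ≤ 10 * Q * ‖x‖ * |t| + (Q * S.card * Rx + 10 * Q * Rx) * |t| + |t| * |AL x - A' x| := by
              have := abs_nonneg t
              gcongr
        _ = (10 * Q * ‖x‖ + (Q * S.card * Rx + 10 * Q * Rx) + |AL x - A' x|) * |t| := by ring
      have hδlin := additive_ratio hδadd hδbd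
      have := hδlin t
      rw [hδ1, mul_zero] at this
      simp only [hδdef] at this
      linarith
  -- apply the K-space hypothesis to H
  obtain ⟨ℓ, M, hM0, hMb⟩ := hK (fun x => AL x - A' x)
    (fun t x => hHhom x t)
    ⟨21 * Q, by positivity, by
      intro x y
      have e : (AL (x+y) - A' (x+y)) - (AL x - A' x) - (AL y - A' y)
          = (AL (x+y) - F (x+y)) + (F (x+y) - F x - F y) + (F x - AL x) + (F y - AL y) := by
        rw [hA'add]; ring
      rw [e]
      have b0 := hFq x y
      have b1 := hALnear (x+y)
      have b2 := hALnear x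
      have b3 := hALnear y
      have hn : ‖x + y‖ ≤ ‖x‖ + ‖y‖ := norm_add_le x y
      have i1 := abs_add_le ((AL (x+y) - F (x+y)) + (F (x+y) - F x - F y)) (F x - AL x)
      have i2 := abs_add_le (AL (x+y) - F (x+y)) (F (x+y) - F x - F y)
      have i3 := abs_add_le ((AL (x+y) - F (x+y)) + (F (x+y) - F x - F y) + (F x - AL x)) (F y - AL y)
      have j1 : |AL (x+y) - F (x+y)| ≤ 10 * Q * (‖x‖ + ‖y‖) := by
        rw [abs_sub_comm]
        refine le_trans b1 ?_
        nlinarith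
      have j2 : |F x - AL x| ≤ 10 * Q * (‖x‖ + ‖y‖) := by
        refine le_trans b2 ?_
        nlinarith [norm_nonneg x, norm_nonneg y]
      have j3 : |F y - AL y| ≤ 10 * Q * (‖x‖ + ‖y‖) := by
        refine le_trans b3 ?_
        nlinarith [norm_nonneg x, norm_nonneg y]
      nlinarith⟩
  refine ⟨fun x => A' x + ℓ x, fun x y => by
    show A' (x+y) + ℓ (x+y) = (A' x + ℓ x) + (A' y + ℓ y)
    rw [hA'add, map_add]; ring, 10 * Q + M, by positivity, ?_⟩
  intro x
  have d1 := hALnear x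
  have d2 := hMb x
  have e : F x - (A' x + ℓ x) = (F x - AL x) + ((AL x - A' x) - ℓ x) := by ring
  rw [e]
  refine le_trans (abs_add_le _ _) ?_
  have : |(AL x - A' x) - ℓ x| ≤ M * ‖x‖ := d2
  calc |F x - AL x| + |(AL x - A' x) - ℓ x| ≤ 10 * Q * ‖x‖ + M * ‖x‖ := add_le_add d1 this
  _ = (10 * Q + M) * ‖x‖ := by ring

set_option maxHeartbeats 1600000 in
/-- Extend an approximately-Jensen odd function on the ball to a dyadically homogeneous
quasi-additive map on the whole space. -/
lemma buildF {X : Type*} [NormedAddCommGroup X] [NormedSpace ℝ X]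
    {f₁ : X → ℝ} {ε : ℝ} (hε : 0 ≤ ε)
    (hf₁0 : f₁ 0 = 0)
    (hf₁odd : ∀ x : X, f₁ (-x) = - f₁ x)
    (hdouble : ∀ z : X, ‖(2:ℝ) • z‖ ≤ 1 → |f₁ ((2:ℝ) • z) - 2 * f₁ z| ≤ 2*ε)
    (haddf₁ : ∀ x y : X, ‖x‖ + ‖y‖ ≤ 1 → |f₁ (x+y) - f₁ x - f₁ y| ≤ 4*ε) :
    ∃ F : X → ℝ, (∀ x : X, F (-x) = - F x) ∧ (∀ x : X, F ((2:ℝ) • x) = 2 * F x) ∧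
      (∀ x : X, ‖x‖ ≤ 1 → |F x - f₁ x| ≤ 2*ε) ∧
      (∀ x y : X, |F (x+y) - F x - F y| ≤ (40*ε) * (‖x‖ + ‖y‖)) := by
  classical
  have h2ne : (2:ℝ) ≠ 0 := two_ne_zero
  set c : X → ℤ := fun x => ⌈Real.logb 2 ‖x‖⌉ with hcdef
  have hc0 : c 0 = 0 := by simp [hcdef]
  have hcle : ∀ x : X, x ≠ 0 → ‖x‖ ≤ (2:ℝ)^(c x) := by
    intro x hx
    have hnx : 0 < ‖x‖ := norm_pos_iff.2 hx
    have h1 : Real.logb 2 ‖x‖ ≤ ((c x : ℤ) : ℝ) := Int.le_ceil _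
    calc ‖x‖ = (2:ℝ) ^ (Real.logb 2 ‖x‖) := (Real.rpow_logb (by norm_num) (by norm_num) hnx).symm
    _ ≤ (2:ℝ) ^ (((c x : ℤ):ℝ)) := Real.rpow_le_rpow_of_exponent_le (by norm_num) h1
    _ = (2:ℝ) ^ (c x) := Real.rpow_intCast 2 (c x)
  have hcge : ∀ x : X, x ≠ 0 → (2:ℝ)^(c x) ≤ 2 * ‖x‖ := by
    intro x hx
    have hnx : 0 < ‖x‖ := norm_pos_iff.2 hx
    have h1 : ((c x : ℤ):ℝ) ≤ Real.logb 2 ‖x‖ + 1 := le_of_lt (Int.ceil_lt_add_one _)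
    calc (2:ℝ)^(c x) = (2:ℝ) ^ (((c x:ℤ)):ℝ) := (Real.rpow_intCast 2 (c x)).symm
    _ ≤ (2:ℝ) ^ (Real.logb 2 ‖x‖ + 1) := Real.rpow_le_rpow_of_exponent_le (by norm_num) h1
    _ = 2 * ‖x‖ := by
        rw [Real.rpow_add (by norm_num), Real.rpow_one,
          Real.rpow_logb (by norm_num) (by norm_num) hnx]
        ring
  have hc2 : ∀ x : X, x ≠ 0 → c ((2:ℝ) • x) = c x + 1 := by
    intro x hx
    have hnx : 0 < ‖x‖ := norm_pos_iff.2 hx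
    simp only [hcdef]
    rw [norm_smul, Real.norm_eq_abs, abs_of_pos (by norm_num : (0:ℝ) < 2)]
    rw [Real.logb_mul (by norm_num) (ne_of_gt hnx)]
    have hlb : Real.logb 2 2 = 1 := by
      simp [Real.logb_self_eq_one]
    rw [hlb, add_comm (1:ℝ)]
    exact_mod_cast Int.ceil_add_one (Real.logb 2 ‖x‖)
  have hcneg : ∀ x : X, c (-x) = c x := by intro x; simp [hcdef]
  set F : X → ℝ := fun x => (2:ℝ)^(c x) * f₁ ((2:ℝ)^(-(c x)) • x) with hFdef
  have hF0 : F 0 = 0 := by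
    simp only [hFdef, hc0]
    rw [smul_zero, hf₁0]
    ring
  have hFodd : ∀ x : X, F (-x) = - F x := by
    intro x
    simp only [hFdef, hcneg]
    rw [smul_neg, hf₁odd]
    ring
  have hF2 : ∀ x : X, F ((2:ℝ) • x) = 2 * F x := by
    intro x
    rcases eq_or_ne x 0 with rfl | hx0
    · rw [smul_zero, hF0]; ring
    · simp only [hFdef]
      rw [hc2 x hx0]
      have e1 : (2:ℝ)^(c x + 1) = 2 * (2:ℝ)^(c x) := by
        rw [zpow_add_one₀ h2ne]; exact mul_comm _ _
      have e2 : ((2:ℝ)^(-(c x + 1))) • ((2:ℝ) • x) = ((2:ℝ)^(-(c x))) • x := by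
        rw [smul_smul]
        congr 1
        rw [← zpow_add_one₀ h2ne, show -(c x + 1) + 1 = -(c x) by ring]
      rw [e1, e2]
      ring
  have hFzpow : ∀ (n : ℤ) (x : X), F ((2:ℝ)^n • x) = (2:ℝ)^n * F x := by
    intro n
    induction n using Int.induction_on with
    | zero => intro x; rw [zpow_zero, one_smul, one_mul]
    | succ m ih =>
      intro x
      rw [show ((2:ℝ)^((m:ℤ)+1)) • x = (2:ℝ) • ((2:ℝ)^(m:ℤ) • x) from by
        rw [smul_smul]; congr 1; rw [zpow_add_one₀ h2ne]; exact mul_comm _ _]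
      rw [hF2, ih, zpow_add_one₀ h2ne]; ring
    | pred m ih =>
      intro x
      have hstep : (2:ℝ) * (2:ℝ)^(-(m:ℤ)-1) = (2:ℝ)^(-(m:ℤ)) := by
        rw [mul_comm, ← zpow_add_one₀ h2ne, show (-(m:ℤ)-1)+1 = -(m:ℤ) by ring]
      have key := hF2 ((2:ℝ)^(-(m:ℤ)-1) • x)
      rw [show (2:ℝ) • ((2:ℝ)^(-(m:ℤ)-1) • x) = (2:ℝ)^(-(m:ℤ)) • x from by
        rw [smul_smul, hstep]] at key
      rw [ih] at key
      rw [← hstep, mul_assoc] at key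
      exact (mul_left_cancel₀ two_ne_zero key).symm
  -- scaling estimate inside the ball
  have hscale : ∀ k : ℕ, ∀ y : X, ‖y‖ ≤ ((2:ℝ)⁻¹)^k →
      |((2:ℝ)⁻¹)^k * f₁ (((2:ℝ)^k : ℝ) • y) - f₁ y| ≤ 2*ε - 2*ε*((2:ℝ)⁻¹)^k := by
    intro k
    induction k with
    | zero => intro y hy; simp
    | succ k ih =>
      intro y hy
      have hhalfpow : ((2:ℝ)⁻¹)^(k+1) ≤ ((2:ℝ)⁻¹)^k := by
        apply pow_le_pow_of_le_one (by norm_num) (by norm_num) (Nat.le_succ k)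
      have hy' : ‖y‖ ≤ ((2:ℝ)⁻¹)^k := le_trans hy hhalfpow
      have h1 := ih y hy'
      have hz : ‖(2:ℝ) • (((2:ℝ)^k : ℝ) • y)‖ ≤ 1 := by
        rw [smul_smul, norm_smul, Real.norm_eq_abs,
          abs_of_pos (by positivity : (0:ℝ) < 2 * 2^k)]
        have hq : (2 * (2:ℝ)^k) * ((2:ℝ)⁻¹)^(k+1) = 1 := by
          rw [inv_pow, pow_succ]
          have hpk : ((2:ℝ)^k) ≠ 0 := by positivity
          field_simp
        calc (2 * (2:ℝ)^k) * ‖y‖ ≤ (2 * (2:ℝ)^k) * ((2:ℝ)⁻¹)^(k+1) := by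
              apply mul_le_mul_of_nonneg_left hy (by positivity)
        _ = 1 := hq
      have h2 := hdouble (((2:ℝ)^k : ℝ) • y) hz
      have e : ((2:ℝ)⁻¹)^(k+1) * f₁ (((2:ℝ)^(k+1) : ℝ) • y) - f₁ y
          = ((2:ℝ)⁻¹)^(k+1) * (f₁ ((2:ℝ) • (((2:ℝ)^k:ℝ) • y)) - 2 * f₁ (((2:ℝ)^k:ℝ) • y))
            + (((2:ℝ)⁻¹)^k * f₁ (((2:ℝ)^k:ℝ) • y) - f₁ y) := by
        rw [show ((2:ℝ)^(k+1):ℝ) • y = (2:ℝ) • (((2:ℝ)^k:ℝ) • y) from by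
          rw [smul_smul]; congr 1; rw [pow_succ]; exact mul_comm _ _]
        ring
      rw [e]
      refine le_trans (abs_add_le _ _) ?_
      rw [abs_mul, abs_of_pos (by positivity : (0:ℝ) < ((2:ℝ)⁻¹)^(k+1))]
      have hb : ((2:ℝ)⁻¹)^(k+1) * |f₁ ((2:ℝ) • (((2:ℝ)^k:ℝ) • y)) - 2 * f₁ (((2:ℝ)^k:ℝ) • y)|
          ≤ ((2:ℝ)⁻¹)^(k+1) * (2*ε) := mul_le_mul_of_nonneg_left h2 (by positivity)
      have erw : ((2:ℝ)⁻¹)^(k+1) * (2*ε) + (2*ε - 2*ε*((2:ℝ)⁻¹)^k)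
          = 2*ε - 2*ε*((2:ℝ)⁻¹)^(k+1) := by
        rw [pow_succ]
        ring
      linarith
  have hFnear : ∀ x : X, ‖x‖ ≤ 1 → |F x - f₁ x| ≤ 2*ε := by
    intro x hx
    rcases eq_or_ne x 0 with rfl | hx0
    · rw [hF0, hf₁0]
      simpa using hε
    · have hcle0 : c x ≤ 0 := by
        simp only [hcdef]
        rw [Int.ceil_le]
        push_cast
        exact Real.logb_nonpos (by norm_num) (norm_nonneg x) hx
      set k : ℕ := (-(c x)).toNat with hkdef
      have hkc : (k:ℤ) = -(c x) := Int.toNat_of_nonneg (by omega)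
      have hck : c x = -(k:ℤ) := by omega
      have e1 : (2:ℝ)^(c x) = ((2:ℝ)⁻¹)^k := by
        rw [hck, zpow_neg, zpow_natCast, ← inv_pow]
      have e2 : ((2:ℝ)^(-(c x)) : ℝ) = ((2:ℝ)^k : ℝ) := by
        rw [hck, neg_neg, zpow_natCast]
      have hxk : ‖x‖ ≤ ((2:ℝ)⁻¹)^k := by rw [← e1]; exact hcle x hx0
      have hs := hscale k x hxk
      have eF : F x = ((2:ℝ)⁻¹)^k * f₁ (((2:ℝ)^k:ℝ) • x) := by
        simp only [hFdef]
        rw [e1, e2]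
      rw [eF]
      have hp : 0 ≤ 2*ε*((2:ℝ)⁻¹)^k := by positivity
      linarith
  have hFq : ∀ x y : X, |F (x+y) - F x - F y| ≤ (40*ε) * (‖x‖ + ‖y‖) := by
    intro x y
    rcases eq_or_ne x 0 with rfl | hx0
    · rw [zero_add, hF0]
      rw [show F y - 0 - F y = (0:ℝ) by ring, abs_zero]
      positivity
    rcases eq_or_ne y 0 with rfl | hy0
    · rw [add_zero, hF0]
      rw [show F x - F x - 0 = (0:ℝ) by ring, abs_zero]
      positivity
    rcases eq_or_ne (x+y) 0 with hxy0 | hxy0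
    · rw [hxy0, hF0]
      have hyx : y = -x := eq_neg_of_add_eq_zero_right hxy0
      rw [hyx, hFodd]
      rw [show (0:ℝ) - F x - (- F x) = 0 by ring, abs_zero]
      positivity
    · set N : ℤ := max (c (x+y)) (max (c x) (c y)) + 1 with hNdef
      have hNx : c x ≤ N - 1 := by
        have h1 : c x ≤ max (c (x+y)) (max (c x) (c y)) :=
          le_max_of_le_right (le_max_left _ _)
        omega
      have hNy : c y ≤ N - 1 := by
        have h1 : c y ≤ max (c (x+y)) (max (c x) (c y)) :=
          le_max_of_le_right (le_max_right _ _)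
        omega
      have hNxy : c (x+y) ≤ N - 1 := by
        have h1 : c (x+y) ≤ max (c (x+y)) (max (c x) (c y)) := le_max_left _ _
        omega
      have hpN : (0:ℝ) < (2:ℝ)^(-N) := by positivity
      have hpN' : (0:ℝ) < (2:ℝ)^N := by positivity
      set x' : X := (2:ℝ)^(-N) • x with hx'def
      set y' : X := (2:ℝ)^(-N) • y with hy'def
      have hnx' : ‖x'‖ = (2:ℝ)^(-N) * ‖x‖ := by
        rw [hx'def, norm_smul, Real.norm_eq_abs, abs_of_pos hpN]
      have hny' : ‖y'‖ = (2:ℝ)^(-N) * ‖y‖ := by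
        rw [hy'def, norm_smul, Real.norm_eq_abs, abs_of_pos hpN]
      have hx2 : ‖x‖ ≤ (2:ℝ)^(N-1) :=
        le_trans (hcle x hx0) (zpow_le_zpow_right₀ (by norm_num) hNx)
      have hy2 : ‖y‖ ≤ (2:ℝ)^(N-1) :=
        le_trans (hcle y hy0) (zpow_le_zpow_right₀ (by norm_num) hNy)
      have h2N1 : (2:ℝ)^(N-1) + (2:ℝ)^(N-1) = (2:ℝ)^N := by
        rw [zpow_sub_one₀ h2ne]
        have hp : ((2:ℝ)^N) ≠ 0 := by positivity
        field_simp
        norm_num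
      have hNN : (2:ℝ)^(-N) * (2:ℝ)^N = 1 := by
        rw [← zpow_add₀ h2ne]
        simp
      have hsum : ‖x'‖ + ‖y'‖ ≤ 1 := by
        rw [hnx', hny']
        calc (2:ℝ)^(-N) * ‖x‖ + (2:ℝ)^(-N) * ‖y‖
            ≤ (2:ℝ)^(-N) * ((2:ℝ)^(N-1) + (2:ℝ)^(N-1)) := by nlinarith
        _ = (2:ℝ)^(-N) * (2:ℝ)^N := by rw [h2N1]
        _ = 1 := hNN
      have hadd4 := haddf₁ x' y' hsum
      have hx'1 : ‖x'‖ ≤ 1 := le_trans (le_add_of_nonneg_right (norm_nonneg y')) hsum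
      have hy'1 : ‖y'‖ ≤ 1 := le_trans (le_add_of_nonneg_left (norm_nonneg x')) hsum
      have hz'1 : ‖x' + y'‖ ≤ 1 := le_trans (norm_add_le _ _) hsum
      have n1 := hFnear x' hx'1
      have n2 := hFnear y' hy'1
      have n3 := hFnear (x'+y') hz'1
      have hxx : F x = (2:ℝ)^N * F x' := by
        have h := hFzpow (-N) x
        rw [← hx'def] at h
        calc F x = ((2:ℝ)^(-N) * (2:ℝ)^N) * F x := by rw [hNN, one_mul]
        _ = (2:ℝ)^N * ((2:ℝ)^(-N) * F x) := by ring
        _ = (2:ℝ)^N * F x' := by rw [← h]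
      have hyy : F y = (2:ℝ)^N * F y' := by
        have h := hFzpow (-N) y
        rw [← hy'def] at h
        calc F y = ((2:ℝ)^(-N) * (2:ℝ)^N) * F y := by rw [hNN, one_mul]
        _ = (2:ℝ)^N * ((2:ℝ)^(-N) * F y) := by ring
        _ = (2:ℝ)^N * F y' := by rw [← h]
      have hzz : F (x+y) = (2:ℝ)^N * F (x'+y') := by
        have h := hFzpow (-N) (x+y)
        have e : (2:ℝ)^(-N) • (x+y) = x' + y' := by
          rw [hx'def, hy'def, smul_add]
        rw [e] at h
        calc F (x+y) = ((2:ℝ)^(-N) * (2:ℝ)^N) * F (x+y) := by rw [hNN, one_mul]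
        _ = (2:ℝ)^N * ((2:ℝ)^(-N) * F (x+y)) := by ring
        _ = (2:ℝ)^N * F (x'+y') := by rw [← h]
      have hcomb : F (x+y) - F x - F y
          = (2:ℝ)^N * ((F (x'+y') - f₁ (x'+y')) + (f₁ (x'+y') - f₁ x' - f₁ y')
              - (F x' - f₁ x') - (F y' - f₁ y')) := by
        rw [hxx, hyy, hzz]; ring
      rw [hcomb, abs_mul, abs_of_pos hpN']
      have hin : |(F (x'+y') - f₁ (x'+y')) + (f₁ (x'+y') - f₁ x' - f₁ y')
          - (F x' - f₁ x') - (F y' - f₁ y')| ≤ 10 * ε := by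
        have i1 := abs_add_le (F (x'+y') - f₁ (x'+y')) (f₁ (x'+y') - f₁ x' - f₁ y')
        have i2 := abs_sub ((F (x'+y') - f₁ (x'+y')) + (f₁ (x'+y') - f₁ x' - f₁ y')) (F x' - f₁ x')
        have i3 := abs_sub ((F (x'+y') - f₁ (x'+y')) + (f₁ (x'+y') - f₁ x' - f₁ y') - (F x' - f₁ x')) (F y' - f₁ y')
        linarith
      have h2Nb : (2:ℝ)^N ≤ 4 * (‖x‖ + ‖y‖) := by
        have hmax : (2:ℝ)^(N-1) ≤ 2 * (‖x‖ + ‖y‖) := by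
          have hN1 : N - 1 = max (c (x+y)) (max (c x) (c y)) := by omega
          rcases max_cases (c (x+y)) (max (c x) (c y)) with ⟨h,_⟩|⟨h,_⟩
          · rw [hN1, h]
            refine le_trans (hcge _ hxy0) ?_
            have := norm_add_le x y
            nlinarith [norm_nonneg x, norm_nonneg y]
          · rcases max_cases (c x) (c y) with ⟨h2,_⟩|⟨h2,_⟩
            · rw [hN1, h, h2]
              refine le_trans (hcge _ hx0) ?_
              nlinarith [norm_nonneg y]
            · rw [hN1, h, h2]
              refine le_trans (hcge _ hy0) ?_
              nlinarith [norm_nonneg x]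
        have e : (2:ℝ)^N = 2 * (2:ℝ)^(N-1) := by
          rw [zpow_sub_one₀ h2ne]
          field_simp
        rw [e]; linarith
      calc (2:ℝ)^N * |(F (x'+y') - f₁ (x'+y')) + (f₁ (x'+y') - f₁ x' - f₁ y')
              - (F x' - f₁ x') - (F y' - f₁ y')|
          ≤ (2:ℝ)^N * (10*ε) := mul_le_mul_of_nonneg_left hin hpN'.le
      _ ≤ (4 * (‖x‖ + ‖y‖)) * (10*ε) := mul_le_mul_of_nonneg_right h2Nb (by positivity)
      _ = (40*ε) * (‖x‖ + ‖y‖) := by ring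
  exact ⟨F, hFodd, hF2, hFnear, hFq⟩

set_option maxHeartbeats 800000 in
lemma forward {X : Type*} [NormedAddCommGroup X] [NormedSpace ℝ X]
    (hK : ∀ g : X → ℝ,
        (∀ (t : ℝ) (x : X), g (t • x) = t * g x) →
        (∃ Q : ℝ, 0 ≤ Q ∧ ∀ x y : X, |g (x + y) - g x - g y| ≤ Q * (‖x‖ + ‖y‖)) →
        ∃ (ℓ : X →ₗ[ℝ] ℝ) (M : ℝ), 0 ≤ M ∧ ∀ x : X, |g x - ℓ x| ≤ M * ‖x‖)
    (ε : ℝ) (hε : 0 ≤ ε) (f : X → ℝ)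
    (hJ : ∀ x : X, ‖x‖ ≤ 1 → ∀ y : X, ‖y‖ ≤ 1 →
          |f ((2 : ℝ)⁻¹ • (x + y)) - (f x + f y) / 2| ≤ ε) :
    ∃ a : X → ℝ,
      (∀ x : X, ‖x‖ ≤ 1 → ∀ y : X, ‖y‖ ≤ 1 →
        a ((2 : ℝ)⁻¹ • (x + y)) = (a x + a y) / 2) ∧
      ∃ C : ℝ, ∀ x : X, ‖x‖ ≤ 1 → |f x - a x| ≤ C := by
  classical
  set f₁ : X → ℝ := fun x => (f x - f (-x)) / 2 with hf₁def
  have hf₁0 : f₁ 0 = 0 := by simp [hf₁def]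
  have hf₁odd : ∀ x : X, f₁ (-x) = - f₁ x := by
    intro x; simp only [hf₁def, neg_neg]; ring
  have hJ₁ : ∀ x : X, ‖x‖ ≤ 1 → ∀ y : X, ‖y‖ ≤ 1 →
      |f₁ ((2:ℝ)⁻¹ • (x+y)) - (f₁ x + f₁ y)/2| ≤ ε := by
    intro x hx y hy
    have h1 := hJ x hx y hy
    have h2 := hJ (-x) (by simpa using hx) (-y) (by simpa using hy)
    have e : (2:ℝ)⁻¹ • (-x + -y) = -((2:ℝ)⁻¹ • (x+y)) := by
      rw [← smul_neg]; congr 1; abel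
    rw [e] at h2
    simp only [hf₁def]
    have e2 : (f ((2:ℝ)⁻¹ • (x+y)) - f (-((2:ℝ)⁻¹ • (x+y))))/2
          - ((f x - f (-x))/2 + (f y - f (-y))/2)/2
        = (1/2) * (f ((2:ℝ)⁻¹ • (x+y)) - (f x + f y)/2)
          - (1/2) * (f (-((2:ℝ)⁻¹ • (x+y))) - (f (-x) + f (-y))/2) := by ring
    rw [e2]
    have h3 := abs_sub ((1/2) * (f ((2:ℝ)⁻¹ • (x+y)) - (f x + f y)/2))
      ((1/2) * (f (-((2:ℝ)⁻¹ • (x+y))) - (f (-x) + f (-y))/2))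
    rw [abs_mul, abs_mul] at h3
    have h12 : |(1:ℝ)/2| = 1/2 := by norm_num
    rw [h12] at h3
    linarith
  have hconst : ∀ x : X, ‖x‖ ≤ 1 → |f₁ x - (f x - f 0)| ≤ ε := by
    intro x hx
    have h := hJ x hx (-x) (by simpa using hx)
    have e : (2:ℝ)⁻¹ • (x + -x) = 0 := by simp
    rw [e] at h
    have e2 : f₁ x - (f x - f 0) = f 0 - (f x + f (-x))/2 := by
      simp only [hf₁def]; ring
    rw [e2]; exact h
  have hhalf : ∀ x : X, ‖x‖ ≤ 1 → |f₁ ((2:ℝ)⁻¹ • x) - f₁ x / 2| ≤ ε := by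
    intro x hx
    have h := hJ₁ x hx 0 (by simp)
    rw [add_zero, hf₁0, add_zero] at h
    exact h
  have hdouble : ∀ z : X, ‖(2:ℝ) • z‖ ≤ 1 → |f₁ ((2:ℝ) • z) - 2 * f₁ z| ≤ 2*ε := by
    intro z hz
    have h := hhalf _ hz
    have e : (2:ℝ)⁻¹ • (2:ℝ) • z = z := by rw [smul_smul]; norm_num
    rw [e] at h
    have e3 : f₁ ((2:ℝ)•z) - 2*f₁ z = (-2) * (f₁ z - f₁ ((2:ℝ)•z)/2) := by ring
    rw [e3, abs_mul]
    have h2 : |(-2:ℝ)| = 2 := by norm_num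
    rw [h2]
    linarith
  have haddf₁ : ∀ x y : X, ‖x‖ + ‖y‖ ≤ 1 → |f₁ (x+y) - f₁ x - f₁ y| ≤ 4*ε := by
    intro x y hxy
    have hx : ‖x‖ ≤ 1 := le_trans (le_add_of_nonneg_right (norm_nonneg y)) hxy
    have hy : ‖y‖ ≤ 1 := le_trans (le_add_of_nonneg_left (norm_nonneg x)) hxy
    have hxy' : ‖x+y‖ ≤ 1 := le_trans (norm_add_le x y) hxy
    have h1 := hhalf (x+y) hxy'
    have h2 := hJ₁ x hx y hy
    have e : f₁ (x+y) - f₁ x - f₁ y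
        = (-2)*(f₁ ((2:ℝ)⁻¹ • (x+y)) - f₁ (x+y)/2)
          + 2*(f₁ ((2:ℝ)⁻¹ • (x+y)) - (f₁ x + f₁ y)/2) := by ring
    rw [e]
    have h3 := abs_add_le ((-2)*(f₁ ((2:ℝ)⁻¹ • (x+y)) - f₁ (x+y)/2))
      (2*(f₁ ((2:ℝ)⁻¹ • (x+y)) - (f₁ x + f₁ y)/2))
    rw [abs_mul, abs_mul] at h3
    have h4 : |(-2:ℝ)| = 2 := by norm_num
    have h5 : |(2:ℝ)| = 2 := by norm_num
    rw [h4, h5] at h3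
    linarith
  obtain ⟨F, hFodd, hF2, hFnear, hFq⟩ := buildF hε hf₁0 hf₁odd hdouble haddf₁
  obtain ⟨A, hAadd, M, hM0, hAb⟩ := buildA hK (by positivity : (0:ℝ) ≤ 40*ε) hFodd hF2 hFq
  refine ⟨fun x => A x + f 0, ?_, 3*ε + M, ?_⟩
  · intro x hx y hy
    have h2 : A ((2:ℝ)⁻¹ • (x+y)) = A (x+y) / 2 := by
      have h := hAadd ((2:ℝ)⁻¹ • (x+y)) ((2:ℝ)⁻¹ • (x+y))
      rw [show (2:ℝ)⁻¹ • (x+y) + (2:ℝ)⁻¹ • (x+y) = x+y from by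
        rw [← add_smul]; norm_num] at h
      linarith
    show A ((2:ℝ)⁻¹ • (x+y)) + f 0 = ((A x + f 0) + (A y + f 0)) / 2
    rw [h2, hAadd]; ring
  · intro x hx
    have d1 := hconst x hx
    have d2 := hFnear x hx
    have d3 : |F x - A x| ≤ M := by
      refine le_trans (hAb x) ?_
      nlinarith
    show |f x - (A x + f 0)| ≤ 3*ε + M
    have e : f x - (A x + f 0) = -(f₁ x - (f x - f 0)) + -(F x - f₁ x) + (F x - A x) := by
      ring
    rw [e]
    have i1 := abs_add_le (-(f₁ x - (f x - f 0))) (-(F x - f₁ x))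
    have i2 := abs_add_le ((-(f₁ x - (f x - f 0))) + (-(F x - f₁ x))) (F x - A x)
    rw [abs_neg, abs_neg] at i1
    linarith

end Stmt10

open Stmt10 in
/-- A real Banach space `X` is a `K`-space if and only if every `ε`-Jensen function on
its closed unit ball is at finite uniform distance from a true Jensen function. -/
theorem stmt_10 {X : Type*} [NormedAddCommGroup X] [NormedSpace ℝ X] [CompleteSpace X] :
    (∀ f : X → ℝ,
        (∀ (t : ℝ) (x : X), f (t • x) = t * f x) →
        (∃ Q : ℝ, 0 ≤ Q ∧ ∀ x y : X, |f (x + y) - f x - f y| ≤ Q * (‖x‖ + ‖y‖)) →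
        ∃ (ℓ : X →ₗ[ℝ] ℝ) (M : ℝ), 0 ≤ M ∧ ∀ x : X, |f x - ℓ x| ≤ M * ‖x‖) ↔
    (∀ ε : ℝ, 0 ≤ ε → ∀ f : X → ℝ,
        (∀ x : X, ‖x‖ ≤ 1 → ∀ y : X, ‖y‖ ≤ 1 →
          |f ((2 : ℝ)⁻¹ • (x + y)) - (f x + f y) / 2| ≤ ε) →
        ∃ a : X → ℝ,
          (∀ x : X, ‖x‖ ≤ 1 → ∀ y : X, ‖y‖ ≤ 1 →
            a ((2 : ℝ)⁻¹ • (x + y)) = (a x + a y) / 2) ∧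
          ∃ C : ℝ, ∀ x : X, ‖x‖ ≤ 1 → |f x - a x| ≤ C) := by
  constructor
  · -- forward direction (K-space ⇒ ε-Jensen near Jensen)
    intro hK
    exact fun ε hε f hJ => Stmt10.forward hK ε hε f hJ
  · -- backward direction
    intro hRHS f hfhom hfq
    classical
    obtain ⟨Q, hQ0, hQ⟩ := hfq
    have hf0 : f 0 = 0 := by
      have := hfhom 0 0; simpa using this
    have hJ : ∀ x : X, ‖x‖ ≤ 1 → ∀ y : X, ‖y‖ ≤ 1 →
        |f ((2:ℝ)⁻¹ • (x+y)) - (f x + f y)/2| ≤ Q := by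
      intro x hx y hy
      rw [hfhom]
      have h2 := hQ x y
      have e : (2:ℝ)⁻¹ * f (x+y) - (f x + f y)/2 = (f (x+y) - f x - f y)/2 := by ring
      rw [e, abs_div, abs_of_pos (by norm_num : (0:ℝ) < 2)]
      have hb : |f (x+y) - f x - f y| ≤ Q * 2 := by
        refine le_trans h2 ?_
        nlinarith
      linarith
    obtain ⟨a, hJa, C, hC⟩ := hRHS Q hQ0 f hJ
    set b : X → ℝ := fun x => a x - a 0 with hbdef
    have hhalf : ∀ x : X, ‖x‖ ≤ 1 → b ((2:ℝ)⁻¹ • x) = b x / 2 := by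
      intro x hx
      have h := hJa x hx 0 (by simp)
      rw [add_zero] at h
      simp only [hbdef]
      rw [h]; ring
    have haddb : ∀ x y : X, ‖x‖ + ‖y‖ ≤ 1 → b (x + y) = b x + b y := by
      intro x y hxy
      have hx : ‖x‖ ≤ 1 := le_trans (le_add_of_nonneg_right (norm_nonneg y)) hxy
      have hy : ‖y‖ ≤ 1 := le_trans (le_add_of_nonneg_left (norm_nonneg x)) hxy
      have hxy' : ‖x + y‖ ≤ 1 := le_trans (norm_add_le x y) hxy
      have h1 := hhalf (x+y) hxy'
      have h2 := hJa x hx y hy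
      simp only [hbdef] at h1 ⊢
      rw [h2] at h1
      linarith
    have hex : ∀ x : X, ∃ n : ℕ, ‖x‖ ≤ (2:ℝ) ^ n := by
      intro x
      obtain ⟨n, hn⟩ := exists_nat_ge ‖x‖
      refine ⟨n, le_trans hn ?_⟩
      exact_mod_cast (Nat.lt_two_pow_self).le
    set nf : X → ℕ := fun x => Nat.find (hex x) with hnfdef
    set L : X → ℝ := fun x => 2 ^ (nf x) * b (((2:ℝ) ^ (nf x))⁻¹ • x) with hLdef
    have hstep : ∀ (x : X) (m : ℕ), ‖x‖ ≤ (2:ℝ)^m →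
        (2:ℝ)^(m+1) * b (((2:ℝ)^(m+1))⁻¹ • x) = (2:ℝ)^m * b (((2:ℝ)^m)⁻¹ • x) := by
      intro x m hm
      have hp : (0:ℝ) < (2:ℝ)^m := by positivity
      have hy : ‖((2:ℝ)^m)⁻¹ • x‖ ≤ 1 := by
        rw [norm_smul, Real.norm_eq_abs, abs_inv, abs_of_pos hp ]
        rw [inv_mul_le_iff₀ hp]
        simpa using hm
      have h := hhalf _ hy
      have e : ((2:ℝ)^(m+1))⁻¹ • x = (2:ℝ)⁻¹ • (((2:ℝ)^m)⁻¹ • x) := by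
        rw [smul_smul, pow_succ, mul_inv]
        ring_nf
      rw [e, h, pow_succ]
      ring
    have stab : ∀ (x : X) (n : ℕ), ‖x‖ ≤ (2:ℝ)^n →
        L x = (2:ℝ)^n * b (((2:ℝ)^n)⁻¹ • x) := by
      intro x n hn
      have hnf : nf x ≤ n := Nat.find_min' (hex x) hn
      have hbase : ‖x‖ ≤ (2:ℝ)^(nf x) := Nat.find_spec (hex x)
      clear hn
      induction n, hnf using Nat.le_induction with
      | base => rfl
      | succ n hn ih =>
        have hxn : ‖x‖ ≤ (2:ℝ)^n := le_trans hbase (by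
          apply pow_le_pow_right₀ (by norm_num : (1:ℝ) ≤ 2) hn)
        rw [ih, ← hstep x n hxn]
    have hLB : ∀ x : X, ‖x‖ ≤ 1 → L x = b x := by
      intro x hx
      have := stab x 0 (by simpa using hx)
      simpa using this
    have hb0 : b 0 = 0 := by simp [hbdef]
    have hL0 : L 0 = 0 := by
      rw [hLB 0 (by simp), hb0]
    have hLadd : ∀ x y : X, L (x + y) = L x + L y := by
      intro x y
      set N : ℕ := max (nf x) (nf y) with hN
      have hxN : ‖x‖ ≤ (2:ℝ)^N :=
        le_trans (Nat.find_spec (hex x)) (pow_le_pow_right₀ (by norm_num) (le_max_left _ _))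
      have hyN : ‖y‖ ≤ (2:ℝ)^N :=
        le_trans (Nat.find_spec (hex y)) (pow_le_pow_right₀ (by norm_num) (le_max_right _ _))
      have hxM : ‖x‖ ≤ (2:ℝ)^(N+1) := le_trans hxN (by
        apply pow_le_pow_right₀ (by norm_num : (1:ℝ) ≤ 2); omega)
      have hyM : ‖y‖ ≤ (2:ℝ)^(N+1) := le_trans hyN (by
        apply pow_le_pow_right₀ (by norm_num : (1:ℝ) ≤ 2); omega)
      have hxyM : ‖x + y‖ ≤ (2:ℝ)^(N+1) := by
        calc ‖x + y‖ ≤ ‖x‖ + ‖y‖ := norm_add_le x y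
        _ ≤ (2:ℝ)^N + (2:ℝ)^N := add_le_add hxN hyN
        _ = (2:ℝ)^(N+1) := by rw [pow_succ]; ring
      have hp : (0:ℝ) < (2:ℝ)^(N+1) := by positivity
      have enrm : ∀ z : X, ‖((2:ℝ)^(N+1))⁻¹ • z‖ = ‖z‖ / 2^(N+1) := by
        intro z
        rw [norm_smul, Real.norm_eq_abs, abs_inv, abs_of_pos hp, inv_mul_eq_div]
      have hsum : ‖((2:ℝ)^(N+1))⁻¹ • x‖ + ‖((2:ℝ)^(N+1))⁻¹ • y‖ ≤ 1 := by
        rw [enrm x, enrm y, ← add_div, div_le_one hp]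
        calc ‖x‖ + ‖y‖ ≤ (2:ℝ)^N + (2:ℝ)^N := add_le_add hxN hyN
        _ = (2:ℝ)^(N+1) := by rw [pow_succ]; ring
      have hsplit : ((2:ℝ)^(N+1))⁻¹ • (x + y) = ((2:ℝ)^(N+1))⁻¹ • x + ((2:ℝ)^(N+1))⁻¹ • y :=
        smul_add _ x y
      rw [stab (x+y) (N+1) hxyM, stab x (N+1) hxM, stab y (N+1) hyM, hsplit,
        haddb _ _ hsum]
      ring
    have hball : ∀ z : X, ‖z‖ ≤ 1 → |f z - L z| ≤ C + |a 0| := by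
      intro z hz
      rw [hLB z hz]
      have h1 := hC z hz
      simp only [hbdef]
      have e : f z - (a z - a 0) = (f z - a z) + a 0 := by ring
      rw [e]
      calc |(f z - a z) + a 0| ≤ |f z - a z| + |a 0| := abs_add_le _ _
      _ ≤ C + |a 0| := by linarith
    have hLhom : ∀ (x : X) (t : ℝ), L (t • x) = t * L x := by
      intro x t
      rcases eq_or_ne x 0 with rfl | hx0
      · rw [smul_zero, hL0]; ring
      · have hnx : 0 < ‖x‖ := norm_pos_iff.2 hx0
        set δ : ℝ → ℝ := fun s => L (s • x) - s * L x with hδdef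
        have hδadd : Additive' δ := by
          intro s t
          simp only [hδdef]
          rw [add_smul, hLadd]; ring
        have hδ1 : δ 1 = 0 := by simp [hδdef]
        have hwin : ∀ s : ℝ, |s| ≤ ‖x‖⁻¹ →
            |δ s| ≤ (C + |a 0|) + ‖x‖⁻¹ * (|f x| + |L x|) := by
          intro s hs
          have hsx : ‖s • x‖ ≤ 1 := by
            rw [norm_smul]
            calc |s| * ‖x‖ ≤ ‖x‖⁻¹ * ‖x‖ := mul_le_mul_of_nonneg_right hs (norm_nonneg x)
            _ = 1 := inv_mul_cancel₀ hnx.ne'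
          have h1 : |f (s • x) - L (s • x)| ≤ C + |a 0| := hball _ hsx
          have h2 : f (s • x) = s * f x := hfhom s x
          have e : δ s = -(f (s • x) - L (s • x)) + s * f x - s * L x := by
            simp only [hδdef]; rw [← h2]; ring
          rw [e]
          have habs : |(-(f (s • x) - L (s • x)) + s * f x - s * L x)|
              ≤ |f (s • x) - L (s • x)| + |s| * |f x| + |s| * |L x| := by
            calc |(-(f (s • x) - L (s • x)) + s * f x - s * L x)|
                ≤ |(-(f (s • x) - L (s • x)) + s * f x)| + |s * L x| := abs_sub _ _
            _ ≤ |(-(f (s • x) - L (s • x)))| + |s * f x| + |s * L x| := by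
                have := abs_add_le (-(f (s • x) - L (s • x))) (s * f x)
                linarith
            _ = |f (s • x) - L (s • x)| + |s| * |f x| + |s| * |L x| := by
                rw [abs_neg, abs_mul, abs_mul]
          refine le_trans habs ?_
          have hs1 : |s| * |f x| ≤ ‖x‖⁻¹ * |f x| := mul_le_mul_of_nonneg_right hs (abs_nonneg _)
          have hs2 : |s| * |L x| ≤ ‖x‖⁻¹ * |L x| := mul_le_mul_of_nonneg_right hs (abs_nonneg _)
          nlinarith [h1]
        have hzero := additive_window hδadd hδ1 (inv_pos.2 hnx)
          hwin
        have := hzero t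
        simp only [hδdef] at this
        linarith
    refine ⟨{ toFun := L, map_add' := hLadd,
              map_smul' := fun t x => by simp [hLhom x t] }, |C| + |a 0|, by positivity, ?_⟩
    intro x
    rcases eq_or_ne x 0 with rfl | hx0
    · simp only [LinearMap.coe_mk, AddHom.coe_mk]
      rw [hf0, hL0]
      simp
    · have hnx : 0 < ‖x‖ := norm_pos_iff.2 hx0
      set u : X := ‖x‖⁻¹ • x with hudef
      have hu : ‖u‖ ≤ 1 := by
        rw [hudef, norm_smul, norm_inv, norm_norm, inv_mul_cancel₀ hnx.ne']
      have hxu : x = ‖x‖ • u := (smul_inv_smul₀ hnx.ne' x).symm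
      have hfx : f x = ‖x‖ * f u := by conv_lhs => rw [hxu, hfhom]
      have hLx : L x = ‖x‖ * L u := by conv_lhs => rw [hxu, hLhom]
      simp only [LinearMap.coe_mk, AddHom.coe_mk]
      calc |f x - L x| = |‖x‖ * f u - ‖x‖ * L u| := by
            rw [hfx, hLx]
      _ = ‖x‖ * |f u - L u| := by rw [← mul_sub, abs_mul, abs_of_pos hnx]
      _ ≤ ‖x‖ * (C + |a 0|) := mul_le_mul_of_nonneg_left (hball u hu) hnx.le
      _ ≤ ‖x‖ * (|C| + |a 0|) := by
            have : C ≤ |C| := le_abs_self C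
            nlinarith
      _ = (|C| + |a 0|) * ‖x‖ := mul_comm _ _
end

section
/- Let X be a real Banach space that is a K-space and let D ⊆ X be a bounded convex set with nonempty interior. Then for every ε ≥ 0 and every ε-Jensen function f : D → ℝ there exists a Jensen function a : D → ℝ with sup_{x ∈ D} |f(x) − a(x)| < ∞. -/
open Set Filter

/-- An additive function on `ℝ` bounded by `C * |s|` is linear. -/
lemma additive_linear_of_bound (φ : ℝ → ℝ) (hadd : ∀ s t, φ (s + t) = φ s + φ t)
    (C : ℝ) (hb : ∀ s, |φ s| ≤ C * |s|) : ∀ s, φ s = s * φ 1 := by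
  have h0 : φ 0 = 0 := by
    have := hadd 0 0; simp at this; linarith
  have hneg : ∀ s, φ (-s) = - φ s := by
    intro s
    have := hadd s (-s); simp [h0] at this; linarith
  have hnat : ∀ (n : ℕ) (x : ℝ), φ (n * x) = n * φ x := by
    intro n
    induction n with
    | zero => intro x; simpa using h0
    | succ n ih =>
      intro x
      have : ((n : ℝ) + 1) * x = n * x + x := by ring
      push_cast
      rw [this, hadd, ih]; ring
  have hint : ∀ (k : ℤ) (x : ℝ), φ (k * x) = k * φ x := by
    intro k x
    rcases le_or_gt 0 k with hk | hk
    · lift k to ℕ using hk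
      push_cast
      exact hnat k x
    · obtain ⟨n, hn⟩ : ∃ n : ℕ, k = -(n : ℤ) := ⟨(-k).toNat, by omega⟩
      subst hn
      push_cast
      have h1 := hnat n x
      have h2 : -(n : ℝ) * x = -((n : ℝ) * x) := by ring
      rw [h2, hneg, h1]; ring
  have hrat : ∀ q : ℚ, φ q = q * φ 1 := by
    intro q
    have hden : ((q.den : ℝ)) ≠ 0 := by
      exact_mod_cast q.den_nz
    have h1 : φ ((q.den : ℝ) * ((q : ℝ) / q.den)) = (q.den : ℝ) * φ ((q : ℝ) / q.den) := by
      have := hnat q.den ((q : ℝ) / q.den)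
      exact_mod_cast this
    have h2 : (q.den : ℝ) * ((q : ℝ) / q.den) = (q : ℝ) := by field_simp
    have h3 : ((q : ℝ) / q.den) = (q.num : ℝ) / ((q.den : ℝ) * (q.den : ℝ)) := by
      rw [Rat.cast_def]; ring
    -- simpler: φ q = φ (q.num * (1 / q.den)) and φ 1 = φ (q.den * (1/q.den))
    have hA : φ (q : ℝ) = (q.num : ℝ) * φ (1 / q.den) := by
      have : (q : ℝ) = (q.num : ℝ) * (1 / q.den) := by rw [Rat.cast_def]; ring
      rw [this, hint q.num]
    have hB : φ 1 = (q.den : ℝ) * φ (1 / q.den) := by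
      have : (1 : ℝ) = (q.den : ℝ) * (1 / q.den) := by field_simp
      nth_rewrite 1 [this]
      exact_mod_cast hnat q.den (1 / q.den)
    rw [hA]
    have : φ (1 / (q.den : ℝ)) = φ 1 / q.den := by
      rw [hB]; field_simp
    rw [this, Rat.cast_def]; ring
  intro s
  have key : ∀ q : ℚ, |φ s - s * φ 1| ≤ (C + |φ 1|) * |s - q| := by
    intro q
    have h1 : φ s = φ (s - q) + φ q := by
      rw [← hadd]; ring_nf
    have : φ s - s * φ 1 = φ (s - q) + ((q : ℝ) - s) * φ 1 := by
      rw [h1, hrat]; ring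
    rw [this]
    calc |φ (s - q) + ((q : ℝ) - s) * φ 1| ≤ |φ (s - q)| + |((q : ℝ) - s) * φ 1| := abs_add_le _ _
      _ ≤ C * |s - q| + |s - q| * |φ 1| := by
          have e1 : |φ (s - ↑q)| ≤ C * |s - ↑q| := hb _
          have e2 : |((q : ℝ) - s) * φ 1| = |s - ↑q| * |φ 1| := by
            rw [abs_mul, abs_sub_comm]
          linarith [le_of_eq e2]
      _ = (C + |φ 1|) * |s - q| := by ring
  have hC : 0 ≤ C := by
    have h1 := hb 1
    have h2 := abs_nonneg (φ 1)
    simp only [abs_one, mul_one] at h1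
    linarith
  have habs : |φ s - s * φ 1| ≤ 0 := by
    by_contra h
    push_neg at h
    set E := |φ s - s * φ 1| with hE
    have hEpos : 0 < E := h
    have hd : 0 < E / (C + |φ 1| + 1) := by positivity
    obtain ⟨q, hq⟩ := exists_rat_near s hd
    have := key q
    have hle : (C + |φ 1|) * |s - q| < (C + |φ 1| + 1) * (E / (C + |φ 1| + 1)) := by
      apply lt_of_le_of_lt (b := (C + |φ 1| + 1) * |s - q|)
      · apply mul_le_mul_of_nonneg_right _ (abs_nonneg _)
        linarith
      · apply mul_lt_mul_of_pos_left hq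
        positivity
    have h2 : (C + |φ 1| + 1) * (E / (C + |φ 1| + 1)) = E := by field_simp
    linarith
  have := abs_nonneg (φ s - s * φ 1)
  have : |φ s - s * φ 1| = 0 := le_antisymm habs this
  have := abs_eq_zero.mp this
  linarith


/-- Hyers' theorem on ℝ: a function with uniformly bounded Cauchy difference is
uniformly close to an additive function. -/
lemma hyers_real (γ : ℝ → ℝ) (δ : ℝ) (h : ∀ s t, |γ (s + t) - γ s - γ t| ≤ δ) :
    ∃ α : ℝ → ℝ, (∀ s t, α (s + t) = α s + α t) ∧ ∀ s, |γ s - α s| ≤ δ := by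
  set u : ℝ → ℕ → ℝ := fun s n => γ (2 ^ n * s) / 2 ^ n with hu
  have hdist : ∀ s n, dist (u s n) (u s (n + 1)) ≤ (δ / 2) * (1 / 2) ^ n := by
    intro s n
    have h2n : (0 : ℝ) < 2 ^ n := by positivity
    have key := h (2 ^ n * s) (2 ^ n * s)
    have harg : 2 ^ n * s + 2 ^ n * s = 2 ^ (n + 1) * s := by ring
    rw [harg] at key
    have : dist (u s n) (u s (n + 1)) = |γ (2 ^ n * s) / 2 ^ n - γ (2 ^ (n + 1) * s) / 2 ^ (n + 1)| := by
      rw [Real.dist_eq]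
    rw [this]
    have h2n1 : (2 : ℝ) ^ (n + 1) = 2 * 2 ^ n := by ring
    have : γ (2 ^ n * s) / 2 ^ n - γ (2 ^ (n + 1) * s) / 2 ^ (n + 1)
        = -((γ (2 ^ (n + 1) * s) - γ (2 ^ n * s) - γ (2 ^ n * s)) / 2 ^ (n + 1)) := by
      field_simp
      ring
    rw [this, abs_neg, abs_div]
    rw [abs_of_pos (by positivity : (0:ℝ) < 2 ^ (n+1))]
    rw [div_le_iff₀ (by positivity)]
    calc |γ (2 ^ (n + 1) * s) - γ (2 ^ n * s) - γ (2 ^ n * s)| ≤ δ := key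
      _ = δ / 2 * (1 / 2) ^ n * 2 ^ (n + 1) := by
          rw [div_pow, one_pow, pow_succ]
          field_simp
  have hcau : ∀ s, CauchySeq (u s) := fun s =>
    cauchySeq_of_le_geometric (1 / 2) (δ / 2) (by norm_num) (hdist s)
  set α : ℝ → ℝ := fun s => limUnder atTop (u s) with hα
  have htend : ∀ s, Tendsto (u s) atTop (nhds (α s)) := fun s => (hcau s).tendsto_limUnder
  refine ⟨α, ?_, ?_⟩
  · intro s t
    have h1 : Tendsto (fun n => u (s + t) n - u s n - u t n) atTop
        (nhds (α (s + t) - α s - α t)) := ((htend (s + t)).sub (htend s)).sub (htend t)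
    have h2 : Tendsto (fun n => u (s + t) n - u s n - u t n) atTop (nhds 0) := by
      refine squeeze_zero_norm (a := fun n => δ * (1 / 2) ^ n) ?_ ?_
      · intro n
        have h2n : (0 : ℝ) < 2 ^ n := by positivity
        have : u (s + t) n - u s n - u t n
            = (γ (2 ^ n * s + 2 ^ n * t) - γ (2 ^ n * s) - γ (2 ^ n * t)) / 2 ^ n := by
          simp only [hu]
          rw [show (2:ℝ) ^ n * (s + t) = 2 ^ n * s + 2 ^ n * t by ring]
          field_simp
        rw [this, Real.norm_eq_abs, abs_div, abs_of_pos h2n, div_le_iff₀ h2n]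
        calc |γ (2 ^ n * s + 2 ^ n * t) - γ (2 ^ n * s) - γ (2 ^ n * t)| ≤ δ := h _ _
          _ = δ * (1 / 2) ^ n * 2 ^ n := by rw [mul_assoc, ← mul_pow]; norm_num
      · simpa using (tendsto_pow_atTop_nhds_zero_of_lt_one (by norm_num : (0:ℝ) ≤ 1/2)
          (by norm_num : (1:ℝ)/2 < 1)).const_mul δ
    have := tendsto_nhds_unique h1 h2
    linarith [this]
  · intro s
    have hb := dist_le_of_le_geometric_of_tendsto₀ (1/2) (δ/2) (by norm_num) (hdist s) (htend s)
    have : u s 0 = γ s := by simp [hu]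
    rw [this, Real.dist_eq] at hb
    calc |γ s - α s| ≤ (δ / 2) / (1 - 1/2) := hb
      _ = δ := by
          rw [show (1:ℝ) - 1/2 = 1/2 by norm_num]
          field_simp


/-- Skof's theorem: stability of the Cauchy equation on the interval `[-2,2]`. -/
lemma skof_real (γ : ℝ → ℝ) (δ : ℝ)
    (h : ∀ s t, |s| ≤ 2 → |t| ≤ 2 → |s + t| ≤ 2 → |γ (s + t) - γ s - γ t| ≤ δ) :
    ∃ α : ℝ → ℝ, (∀ s t, α (s + t) = α s + α t) ∧ ∀ s, |s| ≤ 2 → |γ s - α s| ≤ 4 * δ := by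
  have hδ : 0 ≤ δ := le_trans (abs_nonneg _) (h 0 0 (by norm_num) (by norm_num) (by norm_num))
  set G : ℝ → ℝ := fun s => γ (Int.fract s) + (⌊s⌋ : ℝ) * γ 1 with hG
  have hfr_abs : ∀ s : ℝ, |Int.fract s| ≤ 2 := by
    intro s
    rw [abs_of_nonneg (Int.fract_nonneg s)]
    linarith [Int.fract_lt_one s]
  have hGdef : ∀ s t, |G (s + t) - G s - G t| ≤ 2 * δ := by
    intro s t
    have hfr : ∀ x : ℝ, Int.fract x = x - ⌊x⌋ := fun x => (Int.self_sub_floor x).symm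
    set e : ℤ := ⌊s + t⌋ - ⌊s⌋ - ⌊t⌋ with he
    have hfre : Int.fract (s + t) = Int.fract s + Int.fract t - e := by
      rw [hfr, hfr, hfr, he]
      push_cast
      ring
    have he01 : e = 0 ∨ e = 1 := by
      have h1 := Int.fract_nonneg (s + t)
      have h2 := Int.fract_lt_one (s + t)
      have h3 := Int.fract_nonneg s
      have h4 := Int.fract_lt_one s
      have h5 := Int.fract_nonneg t
      have h6 := Int.fract_lt_one t
      have : (-1 : ℝ) < (e : ℝ) ∧ (e : ℝ) < 2 := by constructor <;> nlinarith [hfre]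
      have h7 : (-1 : ℤ) < e := by exact_mod_cast this.1
      have h8 : (e : ℤ) < 2 := by exact_mod_cast this.2
      omega
    have hGeq : G (s + t) - G s - G t
        = γ (Int.fract s + Int.fract t - e) + (e : ℝ) * γ 1 - γ (Int.fract s) - γ (Int.fract t) := by
      simp only [hG]
      rw [hfre]
      have : ((⌊s + t⌋ : ℝ)) = (⌊s⌋ : ℝ) + (⌊t⌋ : ℝ) + e := by
        rw [he]; push_cast; ring
      rw [this]
      ring
    rcases he01 with he0 | he1
    · rw [hGeq, he0]
      push_cast
      simp only [sub_zero, zero_mul, add_zero]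
      have habs : |Int.fract s + Int.fract t| ≤ 2 := by
        rw [abs_of_nonneg (add_nonneg (Int.fract_nonneg s) (Int.fract_nonneg t))]
        linarith [Int.fract_lt_one s, Int.fract_lt_one t]
      have := h (Int.fract s) (Int.fract t) (hfr_abs s) (hfr_abs t) habs
      linarith [this]
    · rw [hGeq, he1]
      push_cast
      set σ := Int.fract s + Int.fract t with hσ
      have hσ1 : 1 ≤ σ := by
        have h1 := Int.fract_nonneg (s + t)
        have := hfre
        rw [he1] at this
        push_cast at this
        linarith
      have hσ2 : σ < 2 := by
        have h4 := Int.fract_lt_one s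
        have h6 := Int.fract_lt_one t
        simp only [hσ]; linarith
      have k1 : |γ σ - γ (σ - 1) - γ 1| ≤ δ := by
        have := h (σ - 1) 1 (by rw [abs_le]; constructor <;> linarith)
          (by norm_num) (by rw [sub_add_cancel, abs_le]; constructor <;> linarith)
        rwa [sub_add_cancel] at this
      have k2 : |γ σ - γ (Int.fract s) - γ (Int.fract t)| ≤ δ := by
        have := h (Int.fract s) (Int.fract t) (hfr_abs s) (hfr_abs t)
          (by rw [← hσ, abs_le]; constructor <;> linarith)
        rwa [← hσ] at this
      have : γ (σ - 1) + 1 * γ 1 - γ (Int.fract s) - γ (Int.fract t)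
          = (γ σ - γ (Int.fract s) - γ (Int.fract t)) - (γ σ - γ (σ - 1) - γ 1) := by ring
      rw [this]
      calc |(γ σ - γ (Int.fract s) - γ (Int.fract t)) - (γ σ - γ (σ - 1) - γ 1)|
          ≤ |γ σ - γ (Int.fract s) - γ (Int.fract t)| + |γ σ - γ (σ - 1) - γ 1| := abs_sub _ _
        _ ≤ 2 * δ := by linarith
  obtain ⟨α, hαadd, hαb⟩ := hyers_real G (2 * δ) hGdef
  refine ⟨α, hαadd, ?_⟩
  have hγG : ∀ s, |s| ≤ 2 → |γ s - G s| ≤ 2 * δ := by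
    intro s hs
    rw [abs_le] at hs
    have hfl_lb : (-2 : ℤ) ≤ ⌊s⌋ := by
      have : (⌊(-2 : ℝ)⌋ : ℤ) = -2 := by norm_num
      rw [← this]
      exact Int.floor_le_floor hs.1
    have hfl_ub : ⌊s⌋ ≤ 2 := by
      have : (⌊(2 : ℝ)⌋ : ℤ) = 2 := by norm_num
      rw [← this]
      exact Int.floor_le_floor hs.2
    have hγ0 : |γ 0| ≤ δ := by
      have := h 0 0 (by norm_num) (by norm_num) (by norm_num)
      simpa using this
    have hfr : Int.fract s = s - ⌊s⌋ := (Int.self_sub_floor s).symm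
    interval_cases hfloor : ⌊s⌋
    · -- ⌊s⌋ = -2, s ∈ [-2,-1)
      have hs1 : -2 ≤ s := hs.1
      have hs2 : s < -1 := by
        have := Int.lt_floor_add_one s
        rw [hfloor] at this
        push_cast at this
        linarith
      have hfr' : Int.fract s = s + 2 := by rw [hfr]; push_cast; ring
      have k1 : |γ (s + 2) - γ (s + 1) - γ 1| ≤ δ := by
        have := h (s + 1) 1 (by rw [abs_le]; constructor <;> linarith) (by norm_num)
          (by rw [abs_le]; constructor <;> linarith)
        rwa [show s + 1 + 1 = s + 2 by ring] at this
      have k2 : |γ (s + 1) - γ s - γ 1| ≤ δ := by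
        have := h s 1 (by rw [abs_le]; constructor <;> linarith) (by norm_num)
          (by rw [abs_le]; constructor <;> linarith)
        exact this
      simp only [hG, hfr', hfloor]
      push_cast
      have : γ s - (γ (s + 2) + (-2 : ℝ) * γ 1)
          = -((γ (s + 2) - γ (s + 1) - γ 1) + (γ (s + 1) - γ s - γ 1)) := by ring
      rw [this, abs_neg]
      calc |(γ (s + 2) - γ (s + 1) - γ 1) + (γ (s + 1) - γ s - γ 1)|
          ≤ |γ (s + 2) - γ (s + 1) - γ 1| + |γ (s + 1) - γ s - γ 1| := abs_add_le _ _
        _ ≤ 2 * δ := by linarith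
    · -- ⌊s⌋ = -1, s ∈ [-1,0)
      have hs1 : -1 ≤ s := by
        have := Int.floor_le s
        rw [hfloor] at this
        push_cast at this
        linarith
      have hs2 : s < 0 := by
        have := Int.lt_floor_add_one s
        rw [hfloor] at this
        push_cast at this
        linarith
      have hfr' : Int.fract s = s + 1 := by rw [hfr]; push_cast; ring
      have k2 : |γ (s + 1) - γ s - γ 1| ≤ δ := by
        exact h s 1 (by rw [abs_le]; constructor <;> linarith) (by norm_num)
          (by rw [abs_le]; constructor <;> linarith)
      simp only [hG, hfr', hfloor]
      push_cast
      have : γ s - (γ (s + 1) + (-1 : ℝ) * γ 1) = -(γ (s + 1) - γ s - γ 1) := by ring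
      rw [this, abs_neg]
      linarith
    · -- ⌊s⌋ = 0
      have hfr' : Int.fract s = s := by rw [hfr]; push_cast; ring
      simp only [hG, hfr', hfloor]
      push_cast
      simp only [zero_mul, add_zero, sub_self, abs_zero]
      positivity
    · -- ⌊s⌋ = 1, s ∈ [1,2)
      have hs1 : 1 ≤ s := by
        have := Int.floor_le s
        rw [hfloor] at this
        push_cast at this
        linarith
      have hfr' : Int.fract s = s - 1 := by rw [hfr]; push_cast; ring
      have k2 : |γ s - γ (s - 1) - γ 1| ≤ δ := by
        have := h (s - 1) 1 (by rw [abs_le]; constructor <;> linarith) (by norm_num)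
          (by rw [sub_add_cancel, abs_le]; constructor <;> linarith)
        rwa [sub_add_cancel] at this
      simp only [hG, hfr', hfloor]
      push_cast
      have : γ s - (γ (s - 1) + 1 * γ 1) = γ s - γ (s - 1) - γ 1 := by ring
      rw [this]
      linarith
    · -- ⌊s⌋ = 2, s = 2
      have hs1 : s = 2 := by
        have h1 := Int.floor_le s
        rw [hfloor] at h1
        push_cast at h1
        linarith [hs.2]
      have k1 : |γ 2 - γ 1 - γ 1| ≤ δ := by
        have := h 1 1 (by norm_num) (by norm_num) (by norm_num)
        norm_num at this
        exact this
      rw [hs1]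
      have hfr2 : Int.fract (2:ℝ) = 0 := by
        rw [show (2:ℝ) = ((2:ℤ):ℝ) by norm_num, Int.fract_intCast]
      have hfl2 : ((⌊(2:ℝ)⌋ : ℤ) : ℝ) = 2 := by norm_num
      simp only [hG, hfr2, hfl2]
      have : γ 2 - (γ 0 + 2 * γ 1) = (γ 2 - γ 1 - γ 1) - γ 0 := by ring
      rw [this]
      calc |(γ 2 - γ 1 - γ 1) - γ 0| ≤ |γ 2 - γ 1 - γ 1| + |γ 0| := abs_sub _ _
        _ ≤ 2 * δ := by linarith
  intro s hs
  calc |γ s - α s| ≤ |γ s - G s| + |G s - α s| := by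
        have : γ s - α s = (γ s - G s) + (G s - α s) := by ring
        rw [this]; exact abs_add_le _ _
    _ ≤ 2 * δ + 2 * δ := add_le_add (hγG s hs) (hαb s)
    _ = 4 * δ := by ring


/-- Per-line additive approximation to a dyadically homogeneous quasi-additive map. -/
lemma line_additive {X : Type*} [NormedAddCommGroup X] [NormedSpace ℝ X]
    (G : X → ℝ) (Q : ℝ) (hQ : 0 ≤ Q)
    (hG2 : ∀ x, G ((2:ℝ) • x) = 2 * G x)
    (hGq : ∀ x y, |G (x + y) - G x - G y| ≤ Q * (‖x‖ + ‖y‖)) :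
    ∀ u : X, ∃ α : ℝ → ℝ, (∀ s t, α (s + t) = α s + α t) ∧
      (‖u‖ = 1 → ∀ s : ℝ, |G (s • u) - α s| ≤ 16 * Q * |s|) := by
  have hG0 : G 0 = 0 := by
    have := hGq 0 0
    simp at this
    exact this
  intro u
  by_cases hu : ‖u‖ = 1
  swap
  · exact ⟨0, by intro s t; simp, fun h => absurd h hu⟩
  set γ : ℝ → ℝ := fun s => G (s • u) with hγ
  have hdef : ∀ s t : ℝ, |s| ≤ 2 → |t| ≤ 2 → |s + t| ≤ 2 →
      |γ (s + t) - γ s - γ t| ≤ 4 * Q := by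
    intro s t hs ht hst
    have harg : (s + t) • u = s • u + t • u := add_smul s t u
    have := hGq (s • u) (t • u)
    rw [← harg] at this
    simp only [hγ]
    refine le_trans this ?_
    rw [norm_smul, norm_smul, hu]
    simp only [mul_one, Real.norm_eq_abs]
    nlinarith [hQ, hs, ht]
  obtain ⟨α, hαadd, hαb⟩ := skof_real γ (4 * Q) hdef
  have hα0 : α 0 = 0 := by have := hαadd 0 0; simp at this; linarith
  have hα2 : ∀ s, α (2 * s) = 2 * α s := by
    intro s
    have := hαadd s s
    rw [show s + s = 2 * s by ring] at this
    linarith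
  have hγ2 : ∀ s, γ (2 * s) = 2 * γ s := by
    intro s
    simp only [hγ]
    rw [show (2 * s) • u = (2:ℝ) • (s • u) by rw [smul_smul]]
    exact hG2 _
  set η : ℝ → ℝ := fun s => γ s - α s with hη
  have hη2 : ∀ s, η (2 * s) = 2 * η s := by
    intro s; simp only [hη]; rw [hγ2, hα2]; ring
  have hηz : ∀ (j : ℤ) (s : ℝ), η ((2:ℝ) ^ j * s) = (2:ℝ) ^ j * η s := by
    intro j
    induction j using Int.induction_on with
    | zero => intro s; simp
    | succ j ih =>
      intro s
      have h1 : (2:ℝ) ^ ((j : ℤ) + 1) * s = 2 * ((2:ℝ) ^ (j : ℤ) * s) := by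
        rw [zpow_add_one₀ (by norm_num : (2:ℝ) ≠ 0)]; ring
      rw [h1, hη2, ih s, zpow_add_one₀ (by norm_num : (2:ℝ) ≠ 0)]; ring
    | pred j ih =>
      intro s
      have h1 : (2:ℝ) ^ (-(j:ℤ) - 1) * s = (2:ℝ) ^ (-(j:ℤ) - 1) * s := rfl
      have h2 := hη2 ((2:ℝ) ^ (-(j:ℤ) - 1) * s)
      have h3 : 2 * ((2:ℝ) ^ (-(j:ℤ) - 1) * s) = (2:ℝ) ^ (-(j:ℤ)) * s := by
        rw [show (-(j:ℤ)) = (-(j:ℤ) - 1) + 1 by ring, zpow_add_one₀ (by norm_num : (2:ℝ) ≠ 0)]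
        ring
      rw [h3] at h2
      rw [ih s] at h2
      have h4 : (0:ℝ) < (2:ℝ) ^ (-(j:ℤ) - 1) := by positivity
      have h5 : (2:ℝ) ^ (-(j:ℤ)) = 2 * (2:ℝ) ^ (-(j:ℤ) - 1) := by
        rw [show (-(j:ℤ)) = (-(j:ℤ) - 1) + 1 by ring, zpow_add_one₀ (by norm_num : (2:ℝ) ≠ 0)]
        ring
      rw [h5] at h2
      linarith
  refine ⟨α, hαadd, fun _ s => ?_⟩
  rcases eq_or_ne s 0 with rfl | hs
  · simp only [hγ, hη, zero_smul, hG0, hα0]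
    simp
  · obtain ⟨j, hj1, hj2⟩ : ∃ j : ℤ, (2:ℝ) ^ j ≤ |s| ∧ |s| < (2:ℝ) ^ (j + 1) := by
      obtain ⟨n, hn⟩ := exists_mem_Ioc_zpow (abs_pos.mpr hs) (by norm_num : (1:ℝ) < 2)
      rcases eq_or_lt_of_le hn.2 with heq | hlt
      · exact ⟨n + 1, le_of_eq heq.symm, by
          rw [heq]
          exact zpow_lt_zpow_right₀ (by norm_num) (by omega)⟩
      · exact ⟨n, le_of_lt hn.1, hlt⟩
    set s' := (2:ℝ) ^ (-j) * s with hs'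
    have hss' : s = (2:ℝ) ^ j * s' := by
      rw [hs', ← mul_assoc, ← zpow_add₀ (by norm_num : (2:ℝ) ≠ 0)]
      simp
    have hjpos : (0:ℝ) < (2:ℝ) ^ j := by positivity
    have hs'b : |s'| ≤ 2 := by
      rw [hs', abs_mul, abs_of_pos (by positivity : (0:ℝ) < (2:ℝ) ^ (-j))]
      rw [zpow_neg]
      rw [inv_mul_le_iff₀ hjpos]
      have h2j : (2:ℝ) ^ (j + 1) = (2:ℝ) ^ j * 2 := by
        rw [zpow_add_one₀ (by norm_num : (2:ℝ) ≠ 0)]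
      linarith [hj2]
    have heq : η s = (2:ℝ) ^ j * η s' := by
      nth_rewrite 1 [hss']
      exact hηz j s'
    have : |γ s - α s| = |η s| := rfl
    rw [this, heq, abs_mul, abs_of_pos hjpos]
    have hb' : |η s'| ≤ 16 * Q := by
      have := hαb s' hs'b
      calc |η s'| = |γ s' - α s'| := rfl
        _ ≤ 4 * (4 * Q) := this
        _ = 16 * Q := by ring
    calc (2:ℝ) ^ j * |η s'| ≤ |s| * (16 * Q) := by
          apply mul_le_mul hj1 hb' (abs_nonneg _) (abs_nonneg _)
      _ = 16 * Q * |s| := by ring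


/-- Zorn's lemma step: a globally additive map matching the per-line additive data
up to a linear term on each line. -/
lemma zorn_additive {X : Type*} [NormedAddCommGroup X] [NormedSpace ℝ X]
    (G : X → ℝ) (Q : ℝ)
    (hGq : ∀ x y, |G (x + y) - G x - G y| ≤ Q * (‖x‖ + ‖y‖))
    (alpha : X → ℝ → ℝ)
    (halphaA : ∀ u, ∀ s t : ℝ, alpha u (s + t) = alpha u s + alpha u t)
    (halphaB : ∀ u, ‖u‖ = 1 → ∀ s : ℝ, |G (s • u) - alpha u s| ≤ 16 * Q * |s|) :
    ∃ A : X → ℝ, (∀ x y, A (x + y) = A x + A y) ∧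
      ∀ u : X, ‖u‖ = 1 → ∃ c : ℝ, ∀ s : ℝ, A (s • u) = alpha u s + c * s := by
  have hα0 : ∀ u, alpha u 0 = 0 := by
    intro u; have := halphaA u 0 0; simp at this; linarith
  have hαneg : ∀ u s, alpha u (-s) = - alpha u s := by
    intro u s; have := halphaA u s (-s); simp [hα0] at this; linarith
  set S : Set (Set (X × ℝ)) := {Γ | (((0:X), (0:ℝ)) ∈ Γ)
    ∧ (∀ z ∈ Γ, ∀ w ∈ Γ, z + w ∈ Γ)
    ∧ (∀ z ∈ Γ, -z ∈ Γ)
    ∧ (∀ t : ℝ, ((0 : X), t) ∈ Γ → t = 0)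
    ∧ (∀ z ∈ Γ, ∀ c : ℝ, ∃ t' : ℝ, (c • z.1, t') ∈ Γ)
    ∧ (∀ u : X, ‖u‖ = 1 → (∃ t, (u, t) ∈ Γ) →
        ∃ cc : ℝ, ∀ s : ℝ, (s • u, alpha u s + cc * s) ∈ Γ)} with hS
  have hbase : ({((0:X), (0:ℝ))} : Set (X × ℝ)) ∈ S := by
    refine ⟨rfl, ?_, ?_, ?_, ?_, ?_⟩
    · rintro z rfl w rfl; simp
    · rintro z rfl; simp
    · rintro t ht
      have : ((0:X), t) = ((0:X), (0:ℝ)) := ht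
      exact congrArg Prod.snd this
    · rintro z rfl c; exact ⟨0, by simp⟩
    · intro u hu ⟨t, ht⟩
      have : u = 0 := congrArg Prod.fst ht
      rw [this] at hu
      simp at hu
  have hchain : ∀ c ⊆ S, IsChain (· ⊆ ·) c → c.Nonempty →
      ∃ ub ∈ S, ∀ s ∈ c, s ⊆ ub := by
    intro c hcS hch ⟨Γ₁, hΓ₁⟩
    have hpair : ∀ {Γa Γb}, Γa ∈ c → Γb ∈ c → Γa ⊆ Γb ∨ Γb ⊆ Γa := by
      intro Γa Γb ha hb
      rcases eq_or_ne Γa Γb with rfl | hne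
      · exact Or.inl subset_rfl
      · exact hch.total ha hb
    refine ⟨⋃₀ c, ⟨?_, ?_, ?_, ?_, ?_, ?_⟩, fun s hs => subset_sUnion_of_mem hs⟩
    · exact ⟨Γ₁, hΓ₁, (hcS hΓ₁).1⟩
    · rintro z ⟨Γa, ha, hza⟩ w ⟨Γb, hb, hwb⟩
      rcases hpair ha hb with hab | hba
      · exact ⟨Γb, hb, (hcS hb).2.1 z (hab hza) w hwb⟩
      · exact ⟨Γa, ha, (hcS ha).2.1 z hza w (hba hwb)⟩
    · rintro z ⟨Γa, ha, hza⟩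
      exact ⟨Γa, ha, (hcS ha).2.2.1 z hza⟩
    · rintro t ⟨Γa, ha, hta⟩
      exact (hcS ha).2.2.2.1 t hta
    · rintro z ⟨Γa, ha, hza⟩ cscal
      obtain ⟨t', ht'⟩ := (hcS ha).2.2.2.2.1 z hza cscal
      exact ⟨t', Γa, ha, ht'⟩
    · rintro u hu ⟨t, Γa, ha, hta⟩
      obtain ⟨cc, hcc⟩ := (hcS ha).2.2.2.2.2 u hu ⟨t, hta⟩
      exact ⟨cc, fun s => ⟨Γa, ha, hcc s⟩⟩
  obtain ⟨Γ, _, hmax⟩ := zorn_subset_nonempty S hchain _ hbase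
  have hΓS : Γ ∈ S := hmax.1
  obtain ⟨hz0, hadd, hneg, hgraph, hray, hlineP⟩ := hΓS
  -- Totality of the domain
  have htotal : ∀ x : X, ∃ t : ℝ, (x, t) ∈ Γ := by
    by_contra hcon
    push_neg at hcon
    obtain ⟨x₀, hx₀⟩ := hcon
    have hx₀0 : x₀ ≠ 0 := by
      rintro rfl
      exact hx₀ 0 hz0
    have hnx₀ : ‖x₀‖ ≠ 0 := norm_ne_zero_iff.mpr hx₀0
    obtain ⟨u₀, hu₀def⟩ : ∃ u₀ : X, u₀ = ‖x₀‖⁻¹ • x₀ := ⟨_, rfl⟩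
    have hu₀norm : ‖u₀‖ = 1 := by
      rw [hu₀def, norm_smul, norm_inv, norm_norm, inv_mul_cancel₀ hnx₀]
    have hu₀ : ∀ t : ℝ, (u₀, t) ∉ Γ := by
      intro t ht
      obtain ⟨t', ht'⟩ := hray (u₀, t) ht ‖x₀‖
      simp only [hu₀def] at ht'
      rw [smul_smul, mul_inv_cancel₀ hnx₀, one_smul] at ht'
      exact hx₀ t' ht'
    set Γ' : Set (X × ℝ) :=
      {z | ∃ p ∈ Γ, ∃ s : ℝ, z = p + (s • u₀, alpha u₀ s)} with hΓ'
    have hΓsub : Γ ⊆ Γ' := by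
      intro p hp
      exact ⟨p, hp, 0, by simp [hα0]⟩
    -- helper : from membership in Γ', decompose
    have hmemΓ' : ∀ (v : X) (t : ℝ), ((v, t) : X × ℝ) ∈ Γ' ↔
        ∃ p ∈ Γ, ∃ s : ℝ, v = p.1 + s • u₀ ∧ t = p.2 + alpha u₀ s := by
      intro v t
      constructor
      · rintro ⟨p, hp, s, heq⟩
        refine ⟨p, hp, s, ?_, ?_⟩
        · exact congrArg Prod.fst heq
        · exact congrArg Prod.snd heq
      · rintro ⟨p, hp, s, h1, h2⟩
        exact ⟨p, hp, s, by rw [Prod.ext_iff]; exact ⟨h1, h2⟩⟩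
    have hu₀notin : ∀ (p : X × ℝ), p ∈ Γ → ∀ s : ℝ, s ≠ 0 → p.1 + s • u₀ ≠ 0 := by
      intro p hp s hs heq
      obtain ⟨t', ht'⟩ := hray p hp (-s⁻¹)
      have : (-s⁻¹) • p.1 = u₀ := by
        have hpe : p.1 = -(s • u₀) := eq_neg_of_add_eq_zero_left heq
        rw [hpe, smul_neg, smul_smul]
        rw [show -s⁻¹ * s = -1 by field_simp]
        simp
      rw [this] at ht'
      exact hu₀ t' ht'
    have hΓ'S : Γ' ∈ S := by
      refine ⟨hΓsub hz0, ?_, ?_, ?_, ?_, ?_⟩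
      · rintro z ⟨p, hp, s, rfl⟩ w ⟨q, hq, r, rfl⟩
        refine ⟨p + q, hadd p hp q hq, s + r, ?_⟩
        rw [Prod.ext_iff]
        constructor
        · simp only [Prod.fst_add, add_smul]; abel
        · simp only [Prod.snd_add, halphaA]; ring
      · rintro z ⟨p, hp, s, rfl⟩
        refine ⟨-p, hneg p hp, -s, ?_⟩
        rw [Prod.ext_iff]
        constructor
        · simp only [Prod.fst_neg, Prod.fst_add, neg_add, neg_smul]
        · simp only [Prod.snd_neg, Prod.snd_add, neg_add, hαneg]
      · rintro t ht
        rw [hmemΓ' 0 t] at ht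
        obtain ⟨p, hp, s, h1, h2⟩ := ht
        rcases eq_or_ne s 0 with rfl | hs
        · simp only [zero_smul, add_zero] at h1
          have hp' : ((0:X), p.2) ∈ Γ := by
            have hpp : p = ((0:X), p.2) := by
              rw [Prod.ext_iff]; exact ⟨h1.symm, rfl⟩
            rwa [hpp] at hp
          have := hgraph p.2 hp'
          rw [h2, this, hα0]; ring
        · exact absurd h1.symm (hu₀notin p hp s hs)
      · rintro z ⟨p, hp, s, rfl⟩ cscal
        obtain ⟨t', ht'⟩ := hray p hp cscal
        refine ⟨t' + alpha u₀ (cscal * s), ⟨(cscal • p.1, t'), ht', cscal * s, ?_⟩⟩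
        rw [Prod.ext_iff]
        constructor
        · show cscal • (p + (s • u₀, alpha u₀ s)).1 = (cscal • p.1, t').1 + (cscal * s) • u₀
          simp only [Prod.fst_add, smul_add, smul_smul]
        · rfl
      · -- the line condition for Γ'
        rintro u hu ⟨t, ht⟩
        rw [hmemΓ' u t] at ht
        obtain ⟨p, hp, s, h1, h2⟩ := ht
        set v : X := p.1 with hv
        have hvmem : (v, p.2) ∈ Γ := by
          have : p = (v, p.2) := rfl
          rwa [this] at hp
        rcases eq_or_ne s 0 with rfl | hs
        · -- u ∈ dom Γ
          simp only [zero_smul, add_zero] at h1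
          obtain ⟨cc, hcc⟩ := hlineP u hu ⟨p.2, by rw [h1]; exact hvmem⟩
          exact ⟨cc, fun σ => hΓsub (hcc σ)⟩
        rcases eq_or_ne v 0 with hv0 | hv0
        · -- u = s • u₀ with |s| = 1
          have hu_eq : u = s • u₀ := by rw [h1, hv0]; simp
          have habs : |s| = 1 := by
            have := congrArg norm hu_eq
            rw [hu, norm_smul, hu₀norm, mul_one, Real.norm_eq_abs] at this
            exact this.symm
          set φ : ℝ → ℝ := fun lam => alpha u₀ (lam * s) - alpha u lam with hφ
          have hφadd : ∀ a b, φ (a + b) = φ a + φ b := by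
            intro a b
            simp only [hφ]
            rw [show (a + b) * s = a * s + b * s by ring, halphaA, halphaA]
            ring
          have hφb : ∀ lam, |φ lam| ≤ 32 * Q * |lam| := by
            intro lam
            have e1 := halphaB u₀ hu₀norm (lam * s)
            have e2 := halphaB u hu lam
            have harg : (lam * s) • u₀ = lam • u := by
              rw [hu_eq, smul_smul]
              
            rw [harg] at e1
            have : φ lam = (alpha u₀ (lam * s) - G (lam • u)) + (G (lam • u) - alpha u lam) := by
              simp only [hφ]; ring
            rw [this]
            have habs_ls : |lam * s| = |lam| := by rw [abs_mul, habs, mul_one]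
            calc |(alpha u₀ (lam * s) - G (lam • u)) + (G (lam • u) - alpha u lam)|
                ≤ |alpha u₀ (lam * s) - G (lam • u)| + |G (lam • u) - alpha u lam| := abs_add_le _ _
              _ ≤ 16 * Q * |lam| + 16 * Q * |lam| := by
                  rw [abs_sub_comm] at e1
                  rw [← habs_ls]
                  exact add_le_add e1 (by rwa [habs_ls])
              _ = 32 * Q * |lam| := by ring
          have hφlin := additive_linear_of_bound φ hφadd (32 * Q) hφb
          refine ⟨φ 1, fun σ => ?_⟩
          have : alpha u σ + φ 1 * σ = alpha u₀ (σ * s) := by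
            have := hφlin σ
            simp only [hφ] at this ⊢
            linarith
          rw [this]
          exact ⟨((0:X), (0:ℝ)), hz0, σ * s, by
            rw [Prod.ext_iff]
            constructor
            · simp [hu_eq, smul_smul]
            · simp⟩
        · -- general case : u = v + s • u₀ with v ≠ 0
          have hnv : ‖v‖ ≠ 0 := norm_ne_zero_iff.mpr hv0
          obtain ⟨vh, hvh⟩ : ∃ vh : X, vh = ‖v‖⁻¹ • v := ⟨_, rfl⟩
          have hvhnorm : ‖vh‖ = 1 := by
            rw [hvh, norm_smul, norm_inv, norm_norm, inv_mul_cancel₀ hnv]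
          have hvhmem : ∃ τ, (vh, τ) ∈ Γ := by
            obtain ⟨t', ht'⟩ := hray (v, p.2) hvmem ‖v‖⁻¹
            exact ⟨t', by rw [hvh]; exact ht'⟩
          obtain ⟨cv, hcv⟩ := hlineP vh hvhnorm hvhmem
          set φ : ℝ → ℝ := fun lam =>
            alpha vh (lam * ‖v‖) + cv * (lam * ‖v‖) + alpha u₀ (lam * s) - alpha u lam with hφ
          have hφadd : ∀ a b, φ (a + b) = φ a + φ b := by
            intro a b
            simp only [hφ]
            rw [show (a + b) * ‖v‖ = a * ‖v‖ + b * ‖v‖ by ring,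
              show (a + b) * s = a * s + b * s by ring, halphaA, halphaA, halphaA]
            ring
          have hφb : ∀ lam, |φ lam| ≤
              (16 * Q * ‖v‖ + |cv| * ‖v‖ + 16 * Q * |s| + Q * (‖v‖ + |s|) + 16 * Q) * |lam| := by
            intro lam
            have e1 := halphaB vh hvhnorm (lam * ‖v‖)
            have e2 := halphaB u₀ hu₀norm (lam * s)
            have e3 := halphaB u hu lam
            have harg1 : (lam * ‖v‖) • vh = lam • v := by
              rw [hvh, smul_smul, mul_assoc, mul_inv_cancel₀ hnv, mul_one]
            have harg2 : lam • v + (lam * s) • u₀ = lam • u := by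
              rw [h1, smul_add, smul_smul]
              
            have e4 := hGq (lam • v) ((lam * s) • u₀)
            rw [harg2] at e4
            rw [harg1] at e1
            have hexp : φ lam =
                (alpha vh (lam * ‖v‖) - G (lam • v))
                + cv * (lam * ‖v‖)
                + (alpha u₀ (lam * s) - G ((lam * s) • u₀))
                - (G (lam • u) - G (lam • v) - G ((lam * s) • u₀))
                + (G (lam • u) - alpha u lam) := by
              simp only [hφ]; ring
            rw [hexp]
            have habs1 : |lam * ‖v‖| = |lam| * ‖v‖ := by
              rw [abs_mul, abs_of_nonneg (norm_nonneg v)]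
            have habs2 : |lam * s| = |lam| * |s| := abs_mul lam s
            have hnorms : ‖lam • v‖ + ‖(lam * s) • u₀‖ = |lam| * ‖v‖ + |lam| * |s| := by
              rw [norm_smul, norm_smul, hu₀norm, Real.norm_eq_abs, Real.norm_eq_abs, habs2]
              ring
            rw [hnorms] at e4
            have T1 : |alpha vh (lam * ‖v‖) - G (lam • v)| ≤ 16 * Q * (|lam| * ‖v‖) := by
              rw [abs_sub_comm]; rw [habs1] at e1; exact e1
            have T2 : |alpha u₀ (lam * s) - G ((lam * s) • u₀)| ≤ 16 * Q * (|lam| * |s|) := by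
              rw [abs_sub_comm]; rw [habs2] at e2; exact e2
            have T3 : |cv * (lam * ‖v‖)| ≤ |cv| * (|lam| * ‖v‖) := by
              rw [abs_mul, habs1]
            calc |(alpha vh (lam * ‖v‖) - G (lam • v)) + cv * (lam * ‖v‖)
                  + (alpha u₀ (lam * s) - G ((lam * s) • u₀))
                  - (G (lam • u) - G (lam • v) - G ((lam * s) • u₀))
                  + (G (lam • u) - alpha u lam)|
                ≤ |alpha vh (lam * ‖v‖) - G (lam • v)| + |cv * (lam * ‖v‖)|
                  + |alpha u₀ (lam * s) - G ((lam * s) • u₀)|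
                  + |G (lam • u) - G (lam • v) - G ((lam * s) • u₀)|
                  + |G (lam • u) - alpha u lam| := by
                    have := abs_add_le ((alpha vh (lam * ‖v‖) - G (lam • v)) + cv * (lam * ‖v‖)
                      + (alpha u₀ (lam * s) - G ((lam * s) • u₀))
                      - (G (lam • u) - G (lam • v) - G ((lam * s) • u₀)))
                      (G (lam • u) - alpha u lam)
                    refine le_trans this ?_
                    gcongr
                    have h4 := abs_sub ((alpha vh (lam * ‖v‖) - G (lam • v)) + cv * (lam * ‖v‖)
                      + (alpha u₀ (lam * s) - G ((lam * s) • u₀)))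
                      (G (lam • u) - G (lam • v) - G ((lam * s) • u₀))
                    refine le_trans h4 ?_
                    gcongr
                    refine le_trans (abs_add_le _ _) ?_
                    gcongr
                    exact abs_add_le _ _
              _ ≤ (16 * Q * ‖v‖ + |cv| * ‖v‖ + 16 * Q * |s| + Q * (‖v‖ + |s|) + 16 * Q) * |lam| := by
                  nlinarith [T1, T2, T3, e3, e4, abs_nonneg lam]
          have hφlin := additive_linear_of_bound φ hφadd _ hφb
          refine ⟨φ 1, fun σ => ?_⟩
          have hval : alpha u σ + φ 1 * σ
              = alpha vh (σ * ‖v‖) + cv * (σ * ‖v‖) + alpha u₀ (σ * s) := by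
            have := hφlin σ
            simp only [hφ] at this ⊢
            linarith
          rw [hval]
          refine ⟨((σ * ‖v‖) • vh, alpha vh (σ * ‖v‖) + cv * (σ * ‖v‖)), hcv (σ * ‖v‖), σ * s, ?_⟩
          rw [Prod.ext_iff]
          constructor
          · show σ • u = (σ * ‖v‖) • vh + (σ * s) • u₀
            have e1 : (σ * ‖v‖) • vh = σ • v := by
              rw [hvh, smul_smul, mul_assoc, mul_inv_cancel₀ hnv, mul_one]
            have e2 : (σ * s) • u₀ = σ • (s • u₀) := (smul_smul σ s u₀).symm
            rw [h1, smul_add, e1, e2]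
          · rfl
    -- contradiction with maximality
    have hstrict : (u₀, alpha u₀ 1) ∈ Γ' := by
      refine ⟨((0:X),(0:ℝ)), hz0, 1, ?_⟩
      rw [Prod.ext_iff]
      constructor
      · simp
      · simp
    have := hmax.2 hΓ'S hΓsub hstrict
    exact hu₀ _ this
  -- extract the function
  set A : X → ℝ := fun x => Classical.choose (htotal x) with hA
  have hAmem : ∀ x, (x, A x) ∈ Γ := fun x => Classical.choose_spec (htotal x)
  have huniq : ∀ x t, (x, t) ∈ Γ → t = A x := by
    intro x t ht
    have h1 := hadd (x, t) ht (-(x, A x)) (hneg _ (hAmem x))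
    have : ((0:X), t - A x) ∈ Γ := by
      have : (x, t) + -(x, A x) = ((0:X), t - A x) := by
        rw [Prod.ext_iff]
        constructor
        · simp
        · simp; ring
      rwa [this] at h1
    have := hgraph _ this
    linarith
  refine ⟨A, ?_, ?_⟩
  · intro x y
    have := hadd (x, A x) (hAmem x) (y, A y) (hAmem y)
    have h2 : ((x + y : X), A x + A y) ∈ Γ := this
    exact (huniq _ _ h2).symm
  · intro u hu
    obtain ⟨cc, hcc⟩ := hlineP u hu ⟨A u, hAmem u⟩
    exact ⟨cc, fun s => (huniq _ _ (hcc s)).symm⟩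


/-- Core result: on a K-space, a dyadically homogeneous quasi-additive map is close to
an additive map, with error controlled by the norm. -/
theorem core_additive {X : Type*} [NormedAddCommGroup X] [NormedSpace ℝ X]
    (hK : ∀ f : X → ℝ,
      (∀ (t : ℝ) (x : X), f (t • x) = t * f x) →
      (∃ Q : ℝ, 0 ≤ Q ∧ ∀ x y : X, |f (x + y) - f x - f y| ≤ Q * (‖x‖ + ‖y‖)) →
      ∃ (ℓ : X →ₗ[ℝ] ℝ) (M : ℝ), 0 ≤ M ∧ ∀ x : X, |f x - ℓ x| ≤ M * ‖x‖)
    (G : X → ℝ) (Q : ℝ) (hQ : 0 ≤ Q)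
    (hG2 : ∀ x, G ((2:ℝ) • x) = 2 * G x)
    (hGq : ∀ x y, |G (x + y) - G x - G y| ≤ Q * (‖x‖ + ‖y‖)) :
    ∃ A : X → ℝ, (∀ x y, A (x + y) = A x + A y) ∧
      ∃ M : ℝ, 0 ≤ M ∧ ∀ x, |G x - A x| ≤ M * ‖x‖ := by
  classical
  have hG0 : G 0 = 0 := by
    have := hGq 0 0
    simp at this
    exact this
  choose alpha halphaA halphaB using line_additive G Q hQ hG2 hGq
  obtain ⟨A, hAadd, hAline⟩ := zorn_additive G Q hGq alpha halphaA halphaB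
  have hA0 : A 0 = 0 := by
    have := hAadd 0 0; simp at this; linarith
  -- choose a representative unit vector on each line
  set Lset : X → Set X := fun x => {u | ‖u‖ = 1 ∧ ∃ t : ℝ, x = t • u} with hLset
  have hLne : ∀ x : X, x ≠ 0 → (Lset x).Nonempty := by
    intro x hx
    refine ⟨‖x‖⁻¹ • x, ?_, ‖x‖, ?_⟩
    · rw [norm_smul, norm_inv, norm_norm, inv_mul_cancel₀ (norm_ne_zero_iff.mpr hx)]
    · rw [smul_smul, mul_inv_cancel₀ (norm_ne_zero_iff.mpr hx), one_smul]
  set pick : X → X := fun x => if h : (Lset x).Nonempty then h.some else 0 with hpick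
  have hpick_mem : ∀ x : X, x ≠ 0 → pick x ∈ Lset x := by
    intro x hx
    simp only [hpick, dif_pos (hLne x hx)]
    exact (hLne x hx).some_mem
  have hLs : ∀ (c : ℝ), c ≠ 0 → ∀ x, Lset (c • x) = Lset x := by
    intro c hc x
    ext u
    simp only [hLset, mem_setOf_eq]
    constructor
    · rintro ⟨hn, t, ht⟩
      refine ⟨hn, c⁻¹ * t, ?_⟩
      rw [← smul_smul, ← ht, inv_smul_smul₀ hc]
    · rintro ⟨hn, t, ht⟩
      exact ⟨hn, c * t, by rw [← smul_smul, ← ht]⟩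
  have hpick_sc : ∀ (c : ℝ), c ≠ 0 → ∀ x, pick (c • x) = pick x := by
    intro c hc x
    simp only [hpick]
    rw [hLs c hc x]
  -- the coefficient of x along its line
  have hcoef : ∀ x : X, x ≠ 0 → ∃ t : ℝ, x = t • pick x :=
    fun x hx => (hpick_mem x hx).2
  have hcoef_uniq : ∀ x : X, x ≠ 0 → ∀ t t' : ℝ, x = t • pick x → x = t' • pick x → t = t' := by
    intro x hx t t' h1 h2
    have hu : pick x ≠ 0 := by
      intro h
      have := (hpick_mem x hx).1
      rw [h] at this
      simp at this
    have : (t - t') • pick x = 0 := by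
      rw [sub_smul, ← h1, ← h2, sub_self]
    rcases smul_eq_zero.mp this with h | h
    · linarith [sub_eq_zero.mp (by linarith [h] : t - t' = 0)]
    · exact absurd h hu
  classical
  set coef : X → ℝ := fun x => if hx : x ≠ 0 then Classical.choose (hcoef x hx) else 0 with hcoefdef
  have hcoef_spec : ∀ x : X, x ≠ 0 → x = coef x • pick x := by
    intro x hx
    simp only [hcoefdef, dif_pos hx]
    exact Classical.choose_spec (hcoef x hx)
  have hcoef_abs : ∀ x : X, x ≠ 0 → |coef x| = ‖x‖ := by
    intro x hx
    have h1 := hcoef_spec x hx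
    have h2 := congrArg norm h1
    rw [norm_smul, (hpick_mem x hx).1, mul_one, Real.norm_eq_abs] at h2
    exact h2.symm
  -- the constants on each line
  set ccf : X → ℝ := fun u => if h : ‖u‖ = 1 then Classical.choose (hAline u h) else 0 with hccf
  have hccf_spec : ∀ u : X, (h : ‖u‖ = 1) → ∀ s : ℝ, A (s • u) = alpha u s + ccf u * s := by
    intro u h s
    simp only [hccf, dif_pos h]
    exact Classical.choose_spec (hAline u h) s
  -- the homogeneous correction
  set χ : X → ℝ := fun x => if x = 0 then 0 else ccf (pick x) * coef x with hχ
  have hχ0 : χ 0 = 0 := by simp [hχ]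
  have hχhom : ∀ (t : ℝ) (x : X), χ (t • x) = t * χ x := by
    intro t x
    rcases eq_or_ne x 0 with rfl | hx
    · rw [smul_zero, hχ0]; ring
    rcases eq_or_ne t 0 with rfl | ht
    · rw [zero_smul, hχ0]; ring
    have htx : t • x ≠ 0 := smul_ne_zero ht hx
    have hcoef_tx : coef (t • x) = t * coef x := by
      apply hcoef_uniq (t • x) htx _ _ (hcoef_spec _ htx)
      rw [hpick_sc t ht x, ← smul_smul, ← hcoef_spec x hx]
    simp only [hχ, if_neg hx, if_neg htx]
    rw [hpick_sc t ht x, hcoef_tx]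
    ring
  have hχpt : ∀ x : X, |A x - χ x - G x| ≤ 16 * Q * ‖x‖ := by
    intro x
    rcases eq_or_ne x 0 with rfl | hx
    · simp [hA0, hχ0, hG0]
    have hu : ‖pick x‖ = 1 := (hpick_mem x hx).1
    have h1 : A x = alpha (pick x) (coef x) + ccf (pick x) * coef x := by
      nth_rewrite 1 [hcoef_spec x hx]
      exact hccf_spec (pick x) hu (coef x)
    have h2 : χ x = ccf (pick x) * coef x := by
      simp only [hχ, if_neg hx]
    have hgx : G x = G (coef x • pick x) := congrArg G (hcoef_spec x hx)
    have h3 : A x - χ x - G x = -(G (coef x • pick x) - alpha (pick x) (coef x)) := by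
      rw [h1, h2, hgx]; ring
    rw [h3, abs_neg]
    calc |G (coef x • pick x) - alpha (pick x) (coef x)| ≤ 16 * Q * |coef x| :=
          halphaB (pick x) hu (coef x)
      _ = 16 * Q * ‖x‖ := by rw [hcoef_abs x hx]
  have hχq : ∀ x y : X, |χ (x + y) - χ x - χ y| ≤ (49 * Q) * (‖x‖ + ‖y‖) := by
    intro x y
    have r1 := hχpt (x + y)
    have r2 := hχpt x
    have r3 := hχpt y
    have rG := hGq x y
    have hA' : A (x + y) = A x + A y := hAadd x y
    have hxy : ‖x + y‖ ≤ ‖x‖ + ‖y‖ := norm_add_le x y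
    have hexp : χ (x + y) - χ x - χ y
        = (A x - χ x - G x) + (A y - χ y - G y) - (A (x+y) - χ (x+y) - G (x+y))
          - (G (x + y) - G x - G y) := by
      rw [hA']; ring
    rw [hexp]
    have habs : |(A x - χ x - G x) + (A y - χ y - G y) - (A (x+y) - χ (x+y) - G (x+y))
          - (G (x + y) - G x - G y)|
        ≤ |A x - χ x - G x| + |A y - χ y - G y| + |A (x+y) - χ (x+y) - G (x+y)|
          + |G (x + y) - G x - G y| := by
      refine le_trans (abs_sub _ _) ?_
      gcongr
      refine le_trans (abs_sub _ _) ?_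
      gcongr
      exact abs_add_le _ _
    refine le_trans habs ?_
    nlinarith [r1, r2, r3, rG, hxy, hQ, norm_nonneg x, norm_nonneg y]
  obtain ⟨ℓ, M, hM0, hMb⟩ := hK χ hχhom ⟨49 * Q, by positivity, hχq⟩
  refine ⟨fun x => A x - ℓ x, ?_, 16 * Q + M, by positivity, ?_⟩
  · intro x y
    show A (x + y) - ℓ (x + y) = (A x - ℓ x) + (A y - ℓ y)
    rw [hAadd, map_add]
    ring
  · intro x
    have h1 := hχpt x
    have h2 := hMb x
    show |G x - (A x - ℓ x)| ≤ (16 * Q + M) * ‖x‖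
    have : G x - (A x - ℓ x) = -(A x - χ x - G x) - (χ x - ℓ x) := by ring
    rw [this]
    calc |-(A x - χ x - G x) - (χ x - ℓ x)| ≤ |A x - χ x - G x| + |χ x - ℓ x| := by
          refine le_trans (abs_sub _ _) ?_
          rw [abs_neg]
      _ ≤ 16 * Q * ‖x‖ + M * ‖x‖ := add_le_add h1 h2
      _ = (16 * Q + M) * ‖x‖ := by ring


set_option maxHeartbeats 1000000 in
/-- If `X` is a `K`-space and `D ⊆ X` is a bounded convex set with nonempty interior,
then every `ε`-Jensen function on `D` is at finite uniform distance from a true Jensen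
function on `D`. -/
theorem stmt_11 {X : Type*} [NormedAddCommGroup X] [NormedSpace ℝ X] [CompleteSpace X]
    (hK : ∀ f : X → ℝ,
      (∀ (t : ℝ) (x : X), f (t • x) = t * f x) →
      (∃ Q : ℝ, 0 ≤ Q ∧ ∀ x y : X, |f (x + y) - f x - f y| ≤ Q * (‖x‖ + ‖y‖)) →
      ∃ (ℓ : X →ₗ[ℝ] ℝ) (M : ℝ), 0 ≤ M ∧ ∀ x : X, |f x - ℓ x| ≤ M * ‖x‖)
    (D : Set X) (hDconv : Convex ℝ D) (hDbdd : Bornology.IsBounded D)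
    (hDint : (interior D).Nonempty) :
    ∀ ε : ℝ, 0 ≤ ε → ∀ f : X → ℝ,
      (∀ x ∈ D, ∀ y ∈ D, |f ((2 : ℝ)⁻¹ • (x + y)) - (f x + f y) / 2| ≤ ε) →
      ∃ a : X → ℝ,
        (∀ x ∈ D, ∀ y ∈ D, a ((2 : ℝ)⁻¹ • (x + y)) = (a x + a y) / 2) ∧
        ∃ C : ℝ, ∀ x ∈ D, |f x - a x| ≤ C := by
  classical
  intro ε hε f hJ
  obtain ⟨z₀, hz₀⟩ := hDint
  obtain ⟨ρ₀, hρ₀, hball⟩ := Metric.isOpen_iff.mp isOpen_interior z₀ hz₀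
  set ρ : ℝ := ρ₀ / 2 with hρdef
  have hρ : 0 < ρ := by positivity
  have hz₀D : z₀ ∈ D := interior_subset hz₀
  have hmemD : ∀ v : X, ‖v‖ ≤ ρ → z₀ + v ∈ D := by
    intro v hv
    apply interior_subset
    apply hball
    rw [Metric.mem_ball, dist_eq_norm, add_sub_cancel_left]
    calc ‖v‖ ≤ ρ := hv
      _ < ρ₀ := by rw [hρdef]; linarith
  set g : X → ℝ := fun v => f (z₀ + v) - f z₀ with hg
  -- approximate additivity of g on the ball of radius ρ
  have hgq : ∀ u v : X, ‖u‖ ≤ ρ → ‖v‖ ≤ ρ → ‖u + v‖ ≤ ρ →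
      |g (u + v) - g u - g v| ≤ 4 * ε := by
    intro u v hu hv huv
    have h1 := hJ (z₀ + u) (hmemD u hu) (z₀ + v) (hmemD v hv)
    have h2 := hJ (z₀ + (u + v)) (hmemD _ huv) z₀ hz₀D
    have hmid : (z₀ + u) + (z₀ + v) = (z₀ + (u + v)) + z₀ := by abel
    rw [hmid] at h1
    have hexp : g (u + v) - g u - g v
        = 2 * ((f ((2:ℝ)⁻¹ • ((z₀ + (u + v)) + z₀)) - (f (z₀ + u) + f (z₀ + v)) / 2)
          - (f ((2:ℝ)⁻¹ • ((z₀ + (u + v)) + z₀)) - (f (z₀ + (u + v)) + f z₀) / 2)) := by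
      simp only [hg]; ring
    rw [hexp]
    rw [abs_mul, abs_two]
    have := abs_sub (f ((2:ℝ)⁻¹ • ((z₀ + (u + v)) + z₀)) - (f (z₀ + u) + f (z₀ + v)) / 2)
      (f ((2:ℝ)⁻¹ • ((z₀ + (u + v)) + z₀)) - (f (z₀ + (u + v)) + f z₀) / 2)
    nlinarith [h1, h2]
  -- dyadic scaling along segments to the center
  have hstep' : ∀ m : ℕ, ∀ p ∈ D, (z₀ + ((2:ℝ)^m)⁻¹ • (p - z₀) ∈ D) ∧
      |f (z₀ + ((2:ℝ)^m)⁻¹ • (p - z₀)) - ((2:ℝ)^m)⁻¹ * f p - (1 - ((2:ℝ)^m)⁻¹) * f z₀|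
        ≤ 2 * ε * (1 - ((2:ℝ)^m)⁻¹) := by
    intro m
    induction m with
    | zero =>
      intro p hp
      constructor
      · simpa using hp
      · simp
    | succ m ih =>
      intro p hp
      obtain ⟨hpmD, hpmB⟩ := ih p hp
      set c : ℝ := ((2:ℝ)^m)⁻¹ with hc
      have hcpos : 0 < c := by positivity
      have hc1 : c ≤ 1 := by
        rw [hc]
        apply inv_le_one_of_one_le₀
        exact one_le_pow₀ (by norm_num)
      set pm : X := z₀ + c • (p - z₀) with hpm
      have hnext : ((2:ℝ)^(m+1))⁻¹ = c / 2 := by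
        rw [hc, pow_succ]
        field_simp
      have hmidpt : (2:ℝ)⁻¹ • (pm + z₀) = z₀ + (c / 2) • (p - z₀) := by
        rw [hpm, show z₀ + c • (p - z₀) + z₀ = (2:ℝ) • z₀ + c • (p - z₀) by
          rw [two_smul]; abel,
          smul_add, smul_smul, smul_smul, show (2:ℝ)⁻¹ * 2 = 1 by norm_num, one_smul,
          show (2:ℝ)⁻¹ * c = c / 2 by ring]
      have hnextD : z₀ + (c / 2) • (p - z₀) ∈ D := by
        rw [← hmidpt]
        have := hDconv hpmD hz₀D (by norm_num : (0:ℝ) ≤ 1/2) (by norm_num : (0:ℝ) ≤ 1/2)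
          (by norm_num : (1:ℝ)/2 + 1/2 = 1)
        rw [show (2:ℝ)⁻¹ • (pm + z₀) = (1/2 : ℝ) • pm + (1/2 : ℝ) • z₀ by
          rw [smul_add]; norm_num]
        exact this
      have hjen := hJ pm hpmD z₀ hz₀D
      rw [hmidpt] at hjen
      constructor
      · rw [hnext]; exact hnextD
      · rw [hnext]
        have ha := abs_le.mp hpmB
        have hb := abs_le.mp hjen
        rw [abs_le]
        constructor <;> nlinarith [ha.1, ha.2, hb.1, hb.2, hε, hcpos, hc1]
  have hstep : ∀ m : ℕ, ∀ p ∈ D,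
      |g (((2:ℝ)^m)⁻¹ • (p - z₀)) - ((2:ℝ)^m)⁻¹ * g (p - z₀)| ≤ 2 * ε := by
    intro m p hp
    obtain ⟨_, hb⟩ := hstep' m p hp
    have hexp : g (((2:ℝ)^m)⁻¹ • (p - z₀)) - ((2:ℝ)^m)⁻¹ * g (p - z₀)
        = f (z₀ + ((2:ℝ)^m)⁻¹ • (p - z₀)) - ((2:ℝ)^m)⁻¹ * f p
          - (1 - ((2:ℝ)^m)⁻¹) * f z₀ := by
      simp only [hg, add_sub_cancel]
      ring
    rw [hexp]
    have hcpos : (0:ℝ) < ((2:ℝ)^m)⁻¹ := by positivity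
    nlinarith [hb, hε, hcpos]
  -- the dyadic rescaling function
  have hKex : ∀ x : X, x ≠ 0 → ∃ k : ℤ, (2:ℝ)^(k-1) * ρ < ‖x‖ ∧ ‖x‖ ≤ (2:ℝ)^k * ρ := by
    intro x hx
    have hpos : 0 < ‖x‖ / ρ := div_pos (norm_pos_iff.mpr hx) hρ
    obtain ⟨n, hn⟩ := exists_mem_Ioc_zpow hpos (by norm_num : (1:ℝ) < 2)
    refine ⟨n + 1, ?_, ?_⟩
    · rw [show n + 1 - 1 = n by ring]
      rw [← lt_div_iff₀ hρ]
      exact hn.1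
    · rw [← div_le_iff₀ hρ]
      exact hn.2
  have hmono : ∀ a b : ℤ, a ≤ b → (2:ℝ)^a ≤ 2^b :=
    fun a b h => zpow_le_zpow_right₀ (by norm_num) h
  have hKuniq : ∀ (x : X) (k k' : ℤ),
      ((2:ℝ)^(k-1) * ρ < ‖x‖ ∧ ‖x‖ ≤ (2:ℝ)^k * ρ) →
      ((2:ℝ)^(k'-1) * ρ < ‖x‖ ∧ ‖x‖ ≤ (2:ℝ)^(k') * ρ) → k = k' := by
    intro x k k' h h'
    by_contra hne
    rcases lt_or_gt_of_ne hne with hlt | hlt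
    · have : (2:ℝ)^k ≤ 2^(k'-1) := hmono _ _ (by omega)
      nlinarith [h.2, h'.1, hρ]
    · have : (2:ℝ)^(k') ≤ 2^(k-1) := hmono _ _ (by omega)
      nlinarith [h.1, h'.2, hρ]
  set Kf : X → ℤ := fun x => if hx : x ≠ 0 then Classical.choose (hKex x hx) else 0 with hKfdef
  have hKf : ∀ x : X, x ≠ 0 → (2:ℝ)^(Kf x - 1) * ρ < ‖x‖ ∧ ‖x‖ ≤ (2:ℝ)^(Kf x) * ρ := by
    intro x hx
    simp only [hKfdef, dif_pos hx]
    exact Classical.choose_spec (hKex x hx)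
  set G : X → ℝ := fun x => if x = 0 then 0 else (2:ℝ)^(Kf x) * g ((2:ℝ)^(-(Kf x)) • x) with hG
  have hG0 : G 0 = 0 := by simp [hG]
  have hannulus : ∀ x : X, x ≠ 0 → ‖(2:ℝ)^(-(Kf x)) • x‖ ≤ ρ := by
    intro x hx
    rw [norm_smul, Real.norm_eq_abs, abs_of_pos (by positivity : (0:ℝ) < (2:ℝ)^(-(Kf x)))]
    have h1 := (hKf x hx).2
    have h2 : (0:ℝ) < (2:ℝ)^(-(Kf x)) := by positivity
    calc (2:ℝ)^(-(Kf x)) * ‖x‖ ≤ (2:ℝ)^(-(Kf x)) * ((2:ℝ)^(Kf x) * ρ) := by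
          exact mul_le_mul_of_nonneg_left h1 (le_of_lt h2)
      _ = ρ := by
          rw [← mul_assoc, ← zpow_add₀ (by norm_num : (2:ℝ) ≠ 0)]
          simp
  have hG2 : ∀ x, G ((2:ℝ) • x) = 2 * G x := by
    intro x
    rcases eq_or_ne x 0 with rfl | hx
    · rw [smul_zero, hG0]; ring
    have h2x : (2:ℝ) • x ≠ 0 := smul_ne_zero (by norm_num) hx
    have hnorm2 : ‖(2:ℝ) • x‖ = 2 * ‖x‖ := by
      rw [norm_smul, Real.norm_eq_abs, abs_two]
    have hK2 : Kf ((2:ℝ) • x) = Kf x + 1 := by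
      apply hKuniq ((2:ℝ) • x) _ _ (hKf _ h2x)
      constructor
      · rw [hnorm2, show Kf x + 1 - 1 = Kf x - 1 + 1 by ring,
          zpow_add_one₀ (by norm_num : (2:ℝ) ≠ 0)]
        nlinarith [(hKf x hx).1]
      · rw [hnorm2, zpow_add_one₀ (by norm_num : (2:ℝ) ≠ 0)]
        nlinarith [(hKf x hx).2]
    simp only [hG, if_neg hx, if_neg h2x, hK2]
    have harg : (2:ℝ)^(-(Kf x + 1)) • ((2:ℝ) • x) = (2:ℝ)^(-(Kf x)) • x := by
      rw [smul_smul]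
      congr 1
      rw [show -(Kf x + 1) = -Kf x - 1 by ring, zpow_sub_one₀ (by norm_num : (2:ℝ) ≠ 0)]
      ring
    rw [harg, zpow_add_one₀ (by norm_num : (2:ℝ) ≠ 0)]
    ring
  have hGz : ∀ (k : ℤ) (z : X), G ((2:ℝ)^k • z) = (2:ℝ)^k * G z := by
    intro k
    induction k using Int.induction_on with
    | zero => intro z; simp
    | succ j ih =>
      intro z
      have h1 : (2:ℝ)^((j:ℤ)+1) • z = (2:ℝ) • ((2:ℝ)^(j:ℤ) • z) := by
        rw [smul_smul]
        congr 1
        rw [zpow_add_one₀ (by norm_num : (2:ℝ) ≠ 0)]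
        ring
      rw [h1, hG2, ih z, zpow_add_one₀ (by norm_num : (2:ℝ) ≠ 0)]
      ring
    | pred j ih =>
      intro z
      have h2 := hG2 ((2:ℝ)^(-(j:ℤ)-1) • z)
      have h3 : (2:ℝ) • ((2:ℝ)^(-(j:ℤ)-1) • z) = (2:ℝ)^(-(j:ℤ)) • z := by
        rw [smul_smul]
        congr 1
        rw [show -(j:ℤ) = -(j:ℤ)-1+1 by ring, zpow_add_one₀ (by norm_num : (2:ℝ) ≠ 0)]
        ring
      rw [h3, ih z] at h2
      have h5 : (2:ℝ)^(-(j:ℤ)) = 2 * (2:ℝ)^(-(j:ℤ)-1) := by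
        rw [show -(j:ℤ) = -(j:ℤ)-1+1 by ring, zpow_add_one₀ (by norm_num : (2:ℝ) ≠ 0)]
        ring
      rw [h5] at h2
      linarith
  have hGg : ∀ v : X, ‖v‖ ≤ ρ → |G v - g v| ≤ 4 * ε := by
    intro v hv
    rcases eq_or_ne v 0 with rfl | hv0
    · rw [hG0]
      have := hgq 0 0 (by simpa using le_of_lt hρ) (by simpa using le_of_lt hρ)
        (by simpa using le_of_lt hρ)
      simp only [add_zero] at this
      rw [abs_sub_comm] at this ⊢
      calc |g 0 - 0| = |g 0| := by rw [sub_zero]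
        _ = |g (0+0) - g 0 - g 0| := by rw [show (0:X)+0 = 0 by simp]; rw [abs_sub_comm]; congr 1; ring
        _ ≤ 4 * ε := hgq 0 0 (by simpa using le_of_lt hρ) (by simpa using le_of_lt hρ)
            (by simpa using le_of_lt hρ)
    have hk0 : Kf v ≤ 0 := by
      by_contra hk
      push_neg at hk
      have h1 : (1:ℝ) ≤ (2:ℝ)^(Kf v - 1) := by
        calc (1:ℝ) = (2:ℝ)^(0:ℤ) := by simp
          _ ≤ (2:ℝ)^(Kf v - 1) := hmono _ _ (by omega)
      have := (hKf v hv0).1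
      nlinarith [hρ]
    set m : ℕ := (-(Kf v)).toNat with hm
    have hmz : (m : ℤ) = -(Kf v) := Int.toNat_of_nonneg (by omega)
    set w : X := (2:ℝ)^(-(Kf v)) • v with hw
    have hwn : ‖w‖ ≤ ρ := hannulus v hv0
    have hpD : z₀ + w ∈ D := hmemD w hwn
    have hs := hstep m (z₀ + w) hpD
    rw [add_sub_cancel_left] at hs
    have hpow : ((2:ℝ)^m)⁻¹ = (2:ℝ)^(Kf v) := by
      rw [← zpow_natCast (2:ℝ) m, hmz, ← zpow_neg]
      congr 1
      ring
    rw [hpow] at hs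
    have harg : (2:ℝ)^(Kf v) • w = v := by
      rw [hw, smul_smul, ← zpow_add₀ (by norm_num : (2:ℝ) ≠ 0)]
      simp
    rw [harg] at hs
    have hGv : G v = (2:ℝ)^(Kf v) * g w := by
      simp only [hG, if_neg hv0, hw]
    rw [hGv]
    rw [abs_sub_comm]
    calc |g v - (2:ℝ)^(Kf v) * g w| ≤ 2 * ε := hs
      _ ≤ 4 * ε := by linarith
  -- quasi-additivity of G
  set Q : ℝ := 32 * ε / ρ with hQdef
  have hQ : 0 ≤ Q := by positivity
  have hGq : ∀ x y : X, |G (x + y) - G x - G y| ≤ Q * (‖x‖ + ‖y‖) := by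
    intro x y
    rcases eq_or_ne x 0 with rfl | hx0
    · rw [zero_add, hG0]
      simp only [sub_zero, sub_self, abs_zero]
      positivity
    rcases eq_or_ne y 0 with rfl | hy0
    · rw [add_zero, hG0]
      simp only [sub_zero]
      rw [show G x - G x = 0 by ring, abs_zero]
      positivity
    rcases eq_or_ne (x + y) 0 with hxy0 | hxy0
    · -- y = -x
      have hyx : y = -x := eq_neg_of_add_eq_zero_right hxy0
      subst hyx
      rw [hxy0, hG0]
      have hKneg : Kf (-x) = Kf x := by
        apply hKuniq (-x) _ _ (hKf _ hy0)
        rw [norm_neg]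
        exact hKf x hx0
      set a : X := (2:ℝ)^(-(Kf x)) • x with ha
      have han : ‖a‖ ≤ ρ := hannulus x hx0
      have hGx : G x = (2:ℝ)^(Kf x) * g a := by simp only [hG, if_neg hx0, ha]
      have hGnx : G (-x) = (2:ℝ)^(Kf x) * g (-a) := by
        simp only [hG, if_neg hy0, hKneg, ha, smul_neg]
      have hgz : |g 0| ≤ 4 * ε := by
        have := hgq 0 0 (by simpa using le_of_lt hρ) (by simpa using le_of_lt hρ)
          (by simpa using le_of_lt hρ)
        simp only [add_zero] at this
        calc |g 0| = |g 0 - g 0 - g 0| := by rw [show g 0 - g 0 - g 0 = -g 0 by ring, abs_neg]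
          _ ≤ 4 * ε := this
      have hsum : |g a + g (-a)| ≤ 8 * ε := by
        have h1 := hgq a (-a) han (by rwa [norm_neg])
          (by rw [add_neg_cancel, norm_zero]; linarith)
        rw [add_neg_cancel] at h1
        have := abs_sub (g 0) (g 0 - g a - g (-a))
        calc |g a + g (-a)| = |g 0 - (g 0 - g a - g (-a))| := by congr 1; ring
          _ ≤ |g 0| + |g 0 - g a - g (-a)| := this
          _ ≤ 8 * ε := by linarith
      have h2k : (2:ℝ)^(Kf x) * ρ ≤ 2 * ‖x‖ := by
        have := (hKf x hx0).1
        rw [show Kf x = Kf x - 1 + 1 by ring, zpow_add_one₀ (by norm_num : (2:ℝ) ≠ 0)]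
        nlinarith
      have h2kpos : (0:ℝ) < (2:ℝ)^(Kf x) := by positivity
      have hfinal : |0 - G x - G (-x)| = (2:ℝ)^(Kf x) * |g a + g (-a)| := by
        have hid : (0:ℝ) - G x - G (-x) = (2:ℝ)^(Kf x) * (-(g a + g (-a))) := by
          rw [hGx, hGnx]; ring
        rw [hid, abs_mul, abs_neg, abs_of_pos h2kpos]
      rw [hfinal]
      rw [norm_neg]
      have : (2:ℝ)^(Kf x) * |g a + g (-a)| ≤ (2 * ‖x‖ / ρ) * (8 * ε) := by
        apply mul_le_mul _ hsum (abs_nonneg _) (by positivity)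
        rw [le_div_iff₀ hρ]
        linarith
      calc (2:ℝ)^(Kf x) * |g a + g (-a)| ≤ (2 * ‖x‖ / ρ) * (8 * ε) := this
        _ ≤ Q * (‖x‖ + ‖x‖) := by
            rw [hQdef, div_mul_eq_mul_div, div_mul_eq_mul_div, div_le_div_iff₀ hρ hρ]
            nlinarith [mul_nonneg (mul_nonneg hε (norm_nonneg x)) (le_of_lt hρ)]
    · -- general case
      have hnormle : ∀ z : X, z ≠ 0 → Kf z ≤ max (Kf x) (max (Kf y) (Kf (x+y))) →
          ‖(2:ℝ)^(-(max (Kf x) (max (Kf y) (Kf (x+y))))) • z‖ ≤ ρ := by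
        intro z hz hk
        set K := max (Kf x) (max (Kf y) (Kf (x+y)))
        rw [norm_smul, Real.norm_eq_abs, abs_of_pos (by positivity : (0:ℝ) < (2:ℝ)^(-K))]
        have h1 := (hKf z hz).2
        have h2 : (0:ℝ) < (2:ℝ)^(-K) := by positivity
        calc (2:ℝ)^(-K) * ‖z‖ ≤ (2:ℝ)^(-K) * ((2:ℝ)^(Kf z) * ρ) :=
              mul_le_mul_of_nonneg_left h1 (le_of_lt h2)
          _ = (2:ℝ)^(Kf z - K) * ρ := by
              rw [← mul_assoc, ← zpow_add₀ (by norm_num : (2:ℝ) ≠ 0)]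
              congr 2
              ring
          _ ≤ 1 * ρ := by
              have h3 : (2:ℝ)^(Kf z - K) ≤ (2:ℝ)^(0:ℤ) := hmono _ _ (by omega)
              rw [zpow_zero] at h3
              nlinarith [hρ]
          _ = ρ := one_mul ρ
      set K : ℤ := max (Kf x) (max (Kf y) (Kf (x+y))) with hKdef
      have hKa : ‖(2:ℝ)^(-K) • x‖ ≤ ρ := hnormle x hx0 (le_max_left _ _)
      have hKb : ‖(2:ℝ)^(-K) • y‖ ≤ ρ :=
        hnormle y hy0 (le_trans (le_max_left _ _) (le_max_right _ _))
      have hKab : ‖(2:ℝ)^(-K) • (x+y)‖ ≤ ρ :=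
        hnormle (x+y) hxy0 (le_trans (le_max_right _ _) (le_max_right _ _))
      have habsum : (2:ℝ)^(-K) • x + (2:ℝ)^(-K) • y = (2:ℝ)^(-K) • (x+y) := by
        rw [smul_add]
      have hback : ∀ z : X, (2:ℝ)^(K) • ((2:ℝ)^(-K) • z) = z := by
        intro z
        rw [smul_smul, ← zpow_add₀ (by norm_num : (2:ℝ) ≠ 0)]
        simp
      have hGX : G x = (2:ℝ)^K * G ((2:ℝ)^(-K) • x) := by
        conv_lhs => rw [← hback x]
        exact hGz K _
      have hGY : G y = (2:ℝ)^K * G ((2:ℝ)^(-K) • y) := by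
        conv_lhs => rw [← hback y]
        exact hGz K _
      have hGXY : G (x+y) = (2:ℝ)^K * G ((2:ℝ)^(-K) • (x+y)) := by
        conv_lhs => rw [← hback (x+y)]
        exact hGz K _
      have hE : |G ((2:ℝ)^(-K) • (x+y)) - G ((2:ℝ)^(-K) • x) - G ((2:ℝ)^(-K) • y)|
          ≤ 16 * ε := by
        have e0 := hgq _ _ hKa hKb (by rw [habsum]; exact hKab)
        have e1 := hGg _ hKa
        have e2 := hGg _ hKb
        have e3 := hGg _ hKab
        rw [habsum] at e0
        have hid : G ((2:ℝ)^(-K) • (x+y)) - G ((2:ℝ)^(-K) • x) - G ((2:ℝ)^(-K) • y)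
            = (g ((2:ℝ)^(-K) • (x+y)) - g ((2:ℝ)^(-K) • x) - g ((2:ℝ)^(-K) • y))
              + (G ((2:ℝ)^(-K) • (x+y)) - g ((2:ℝ)^(-K) • (x+y)))
              - (G ((2:ℝ)^(-K) • x) - g ((2:ℝ)^(-K) • x))
              - (G ((2:ℝ)^(-K) • y) - g ((2:ℝ)^(-K) • y)) := by ring
        rw [hid]
        have habs4 : ∀ p q r s : ℝ, |p + q - r - s| ≤ |p| + |q| + |r| + |s| := by
          intro p q r s
          calc |p + q - r - s| ≤ |p + q - r| + |s| := abs_sub _ _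
            _ ≤ (|p + q| + |r|) + |s| := by gcongr; exact abs_sub _ _
            _ ≤ ((|p| + |q|) + |r|) + |s| := by gcongr; exact abs_add_le _ _
            _ = |p| + |q| + |r| + |s| := by ring
        refine le_trans (habs4 _ _ _ _) ?_
        linarith [e0, e1, e2, e3]
      have h2K : (2:ℝ)^K * ρ ≤ 2 * (‖x‖ + ‖y‖) := by
        have hKcases : ∃ z : X, z ≠ 0 ∧ Kf z = K ∧ ‖z‖ ≤ ‖x‖ + ‖y‖ := by
          rcases le_total (max (Kf y) (Kf (x+y))) (Kf x) with h | h
          · refine ⟨x, hx0, ?_, ?_⟩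
            · rw [hKdef, max_eq_left h]
            · linarith [norm_nonneg y]
          · rcases le_total (Kf (x+y)) (Kf y) with h' | h'
            · refine ⟨y, hy0, ?_, ?_⟩
              · rw [hKdef, max_eq_right h, max_eq_left h']
              · linarith [norm_nonneg x]
            · refine ⟨x + y, hxy0, ?_, norm_add_le x y⟩
              rw [hKdef, max_eq_right h, max_eq_right h']
        obtain ⟨z, hz0', hzK, hzn⟩ := hKcases
        have h1 := (hKf z hz0').1
        rw [hzK] at h1
        have : (2:ℝ)^K = 2 * (2:ℝ)^(K-1) := by
          rw [show K = K - 1 + 1 by ring, zpow_add_one₀ (by norm_num : (2:ℝ) ≠ 0)]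
          ring
        rw [this]
        nlinarith
      have h2Kpos : (0:ℝ) < (2:ℝ)^K := by positivity
      have hΔ : |G (x+y) - G x - G y|
          = (2:ℝ)^K * |G ((2:ℝ)^(-K) • (x+y)) - G ((2:ℝ)^(-K) • x) - G ((2:ℝ)^(-K) • y)| := by
        have hid : G (x+y) - G x - G y = (2:ℝ)^K *
            (G ((2:ℝ)^(-K) • (x+y)) - G ((2:ℝ)^(-K) • x) - G ((2:ℝ)^(-K) • y)) := by
          rw [hGX, hGY, hGXY]; ring
        rw [hid, abs_mul, abs_of_pos h2Kpos]
      rw [hΔ]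
      calc (2:ℝ)^K * |G ((2:ℝ)^(-K) • (x+y)) - G ((2:ℝ)^(-K) • x) - G ((2:ℝ)^(-K) • y)|
          ≤ (2 * (‖x‖ + ‖y‖) / ρ) * (16 * ε) := by
            apply mul_le_mul _ hE (abs_nonneg _) (by positivity)
            rw [le_div_iff₀ hρ]
            linarith
        _ ≤ Q * (‖x‖ + ‖y‖) := by
            rw [hQdef, div_mul_eq_mul_div, div_mul_eq_mul_div, div_le_div_iff₀ hρ hρ]
            nlinarith [mul_nonneg (mul_nonneg hε (add_nonneg (norm_nonneg x) (norm_nonneg y)))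
              (le_of_lt hρ)]
  -- apply the core theorem
  obtain ⟨A, hAadd, M, hM0, hGA⟩ := core_additive hK G Q hQ hG2 hGq
  have hA0 : A 0 = 0 := by
    have := hAadd 0 0; simp at this; linarith
  have hAn : ∀ (m : ℕ) (w : X), A ((2:ℝ)^m • w) = 2^m * A w := by
    intro m
    induction m with
    | zero => intro w; simp
    | succ m ih =>
      intro w
      have h1 : (2:ℝ)^(m+1) • w = (2:ℝ) • ((2:ℝ)^m • w) := by
        rw [smul_smul, pow_succ]
        ring_nf
      have h2 : ∀ z : X, A ((2:ℝ) • z) = 2 * A z := by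
        intro z
        rw [two_smul, hAadd]
        ring
      rw [h1, h2, ih, pow_succ]
      ring
  -- bound on the ball
  have hball_bound : ∀ v : X, ‖v‖ ≤ ρ → |g v - A v| ≤ 4 * ε + M * ρ := by
    intro v hv
    have h1 := hGg v hv
    have h2 := hGA v
    have hMv : M * ‖v‖ ≤ M * ρ := mul_le_mul_of_nonneg_left hv hM0
    calc |g v - A v| = |(G v - A v) - (G v - g v)| := by congr 1; ring
      _ ≤ |G v - A v| + |G v - g v| := abs_sub _ _
      _ ≤ 4 * ε + M * ρ := by linarith [hMv]
  -- propagate to all of D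
  obtain ⟨R, hR⟩ := hDbdd.subset_closedBall z₀
  have hRd : ∀ x ∈ D, ‖x - z₀‖ ≤ R := by
    intro x hx
    have := hR hx
    rwa [Metric.mem_closedBall, dist_eq_norm] at this
  obtain ⟨n₀, hn₀⟩ : ∃ n : ℕ, R ≤ 2^n * ρ := by
    obtain ⟨n, hn⟩ := exists_nat_gt (R / ρ)
    refine ⟨n, ?_⟩
    have h2 : (n:ℝ) ≤ 2^n := by
      exact_mod_cast le_of_lt (Nat.lt_two_pow_self)
    rw [div_lt_iff₀ hρ] at hn
    nlinarith [hρ]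
  refine ⟨fun y => f z₀ + A (y - z₀), ?_, ?_⟩
  · -- the Jensen property
    intro x hx y hy
    have h2 : ((2:ℝ)⁻¹ • (x+y) - z₀) + ((2:ℝ)⁻¹ • (x+y) - z₀) = (x - z₀) + (y - z₀) := by
      have hsum : (2:ℝ)⁻¹ • (x+y) + (2:ℝ)⁻¹ • (x+y) = x + y := by
        rw [← add_smul]
        norm_num
      calc ((2:ℝ)⁻¹ • (x+y) - z₀) + ((2:ℝ)⁻¹ • (x+y) - z₀)
          = ((2:ℝ)⁻¹ • (x+y) + (2:ℝ)⁻¹ • (x+y)) - z₀ - z₀ := by abel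
        _ = (x + y) - z₀ - z₀ := by rw [hsum]
        _ = (x - z₀) + (y - z₀) := by abel
    have key : 2 * A ((2:ℝ)⁻¹ • (x+y) - z₀) = A (x - z₀) + A (y - z₀) := by
      have h3 : A (((2:ℝ)⁻¹ • (x+y) - z₀) + ((2:ℝ)⁻¹ • (x+y) - z₀))
          = A (x - z₀ + (y - z₀)) := by rw [h2]
      rw [hAadd, hAadd] at h3
      linarith
    show f z₀ + A ((2:ℝ)⁻¹ • (x+y) - z₀)
        = ((f z₀ + A (x - z₀)) + (f z₀ + A (y - z₀))) / 2
    linarith [key]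
  · -- the uniform bound on D
    refine ⟨2^n₀ * (2 * ε + (4 * ε + M * ρ)), ?_⟩
    intro x hx
    have hu : ‖x - z₀‖ ≤ R := hRd x hx
    have hw : ‖((2:ℝ)^n₀)⁻¹ • (x - z₀)‖ ≤ ρ := by
      rw [norm_smul, Real.norm_eq_abs, abs_of_pos (by positivity : (0:ℝ) < ((2:ℝ)^n₀)⁻¹)]
      rw [inv_mul_le_iff₀ (by positivity : (0:ℝ) < (2:ℝ)^n₀)]
      calc ‖x - z₀‖ ≤ R := hu
        _ ≤ 2^n₀ * ρ := hn₀
    have hs := hstep n₀ x hx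
    have hbb := hball_bound _ hw
    have hAu : A (x - z₀) = 2^n₀ * A (((2:ℝ)^n₀)⁻¹ • (x - z₀)) := by
      rw [← hAn n₀]
      congr 1
      rw [smul_smul]
      rw [mul_inv_cancel₀ (by positivity : ((2:ℝ)^n₀) ≠ 0)]
      rw [one_smul]
    have hfx : f x - (f z₀ + A (x - z₀)) = g (x - z₀) - A (x - z₀) := by
      simp only [hg, add_sub_cancel]
      ring
    show |f x - (f z₀ + A (x - z₀))| ≤ 2^n₀ * (2 * ε + (4 * ε + M * ρ))
    rw [hfx]
    have hpos : (0:ℝ) < (2:ℝ)^n₀ := by positivity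
    have hdecomp : g (x - z₀) - A (x - z₀)
        = -(2^n₀ * (g (((2:ℝ)^n₀)⁻¹ • (x - z₀)) - ((2:ℝ)^n₀)⁻¹ * g (x - z₀)))
          + 2^n₀ * (g (((2:ℝ)^n₀)⁻¹ • (x - z₀)) - A (((2:ℝ)^n₀)⁻¹ • (x - z₀))) := by
      rw [hAu]
      field_simp
      ring
    rw [hdecomp]
    calc |-(2^n₀ * (g (((2:ℝ)^n₀)⁻¹ • (x - z₀)) - ((2:ℝ)^n₀)⁻¹ * g (x - z₀)))
          + 2^n₀ * (g (((2:ℝ)^n₀)⁻¹ • (x - z₀)) - A (((2:ℝ)^n₀)⁻¹ • (x - z₀)))|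
        ≤ |-(2^n₀ * (g (((2:ℝ)^n₀)⁻¹ • (x - z₀)) - ((2:ℝ)^n₀)⁻¹ * g (x - z₀)))|
          + |2^n₀ * (g (((2:ℝ)^n₀)⁻¹ • (x - z₀)) - A (((2:ℝ)^n₀)⁻¹ • (x - z₀)))| := abs_add_le _ _
      _ ≤ 2^n₀ * (2 * ε) + 2^n₀ * (4 * ε + M * ρ) := by
          rw [abs_neg, abs_mul, abs_mul, abs_of_pos hpos]
          exact add_le_add (mul_le_mul_of_nonneg_left hs (le_of_lt hpos))
            (mul_le_mul_of_nonneg_left hbb (le_of_lt hpos))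
      _ = 2^n₀ * (2 * ε + (4 * ε + M * ρ)) := by ring
end
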